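/- arXiv:2604.01386 — 9 statements merged into one kernel-verified Lean document; each statement's English description precedes it below -/
import Mathlib

section
/- Let F be an infinite field and T a tensor of shape (n,m,k) over F with n ≤ m whose associated Kronecker-quiver representation is semistable. Then for every integer p with 1 ≤ p ≤ m/n, T restricts to the matrix multiplication tensor ⟨1, ⌈(m−(p−1)·n)·n/(n+m)⌉, p⟩. -/
open scoped BigOperators
open Module

namespace Paper

variable (F : Type) [Field F]

/-- A 3-mode tensor of shape `(n,m,k)` over `F`, given by its coefficient array. -/
abbrev Tensor (n m k : ℕ) : Type := Fin n → Fin m → Fin k → F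

variable {F}

/-- `Restricts S T` : the tensor `S` restricts to the tensor `T`, i.e. `T ≤ S`. -/
def Restricts {n m k n' m' k' : ℕ} (S : Tensor F n m k) (T : Tensor F n' m' k') : Prop :=
  ∃ (A : Matrix (Fin n') (Fin n) F) (B : Matrix (Fin m') (Fin m) F)
    (C : Matrix (Fin k') (Fin k) F),
    ∀ i j l, T i j l = ∑ i', ∑ j', ∑ l', A i i' * B j j' * C l l' * S i' j' l'

/-- The matrix multiplication tensor `⟨E,H,L⟩`, of shape `(EH, HL, LE)`. -/
def MMT (E H L : ℕ) : Tensor F (E * H) (H * L) (L * E) := fun x y z =>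
  if ((finProdFinEquiv.symm x : Fin E × Fin H).2 = (finProdFinEquiv.symm y : Fin H × Fin L).1)
      ∧ ((finProdFinEquiv.symm y : Fin H × Fin L).2 = (finProdFinEquiv.symm z : Fin L × Fin E).1)
      ∧ ((finProdFinEquiv.symm z : Fin L × Fin E).2 = (finProdFinEquiv.symm x : Fin E × Fin H).1)
  then 1 else 0

/-- Tensor (Kronecker) product of two tensors. -/
def tmul {n m k n' m' k' : ℕ} (T : Tensor F n m k) (S : Tensor F n' m' k') :
    Tensor F (n * n') (m * m') (k * k') := fun i j l =>
  T (finProdFinEquiv.symm i : Fin n × Fin n').1 (finProdFinEquiv.symm j : Fin m × Fin m').1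
      (finProdFinEquiv.symm l : Fin k × Fin k').1 *
    S (finProdFinEquiv.symm i : Fin n × Fin n').2 (finProdFinEquiv.symm j : Fin m × Fin m').2
      (finProdFinEquiv.symm l : Fin k × Fin k').2

/-- Direct sum of two tensors. -/
def tdsum {n m k n' m' k' : ℕ} (T : Tensor F n m k) (S : Tensor F n' m' k') :
    Tensor F (n + n') (m + m') (k + k') := fun i j l =>
  if h : (i : ℕ) < n ∧ (j : ℕ) < m ∧ (l : ℕ) < k then
    T ⟨i, h.1⟩ ⟨j, h.2.1⟩ ⟨l, h.2.2⟩
  else if h' : n ≤ (i : ℕ) ∧ m ≤ (j : ℕ) ∧ k ≤ (l : ℕ) then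
    S ⟨(i : ℕ) - n, by have := i.isLt; omega⟩
      ⟨(j : ℕ) - m, by have := j.isLt; omega⟩
      ⟨(l : ℕ) - k, by have := l.isLt; omega⟩
  else 0

/-- Cast a tensor along equalities of its dimensions. -/
def tcast {n m k n' m' k' : ℕ} (hn : n = n') (hm : m = m') (hk : k = k')
    (T : Tensor F n m k) : Tensor F n' m' k' := fun i j l =>
  T (Fin.cast hn.symm i) (Fin.cast hm.symm j) (Fin.cast hk.symm l)

/-- The `N`-th tensor (Kronecker) power of a tensor. -/
def tpow {n m k : ℕ} (T : Tensor F n m k) : (N : ℕ) → Tensor F (n ^ N) (m ^ N) (k ^ N)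
  | 0 => fun _ _ _ => 1
  | N + 1 => tcast (pow_succ n N).symm (pow_succ m N).symm (pow_succ k N).symm
      (tmul (tpow T N) T)

/-- A spectral point over `F`: a normalized, additive, multiplicative functional on tensors
of every shape, monotone under restriction. -/
structure SpectralPoint (F : Type) [Field F] where
  val : ∀ {n m k : ℕ}, Tensor F n m k → ℝ
  nonneg : ∀ {n m k : ℕ} (T : Tensor F n m k), 0 ≤ val T
  normalized : val (MMT (F := F) 1 1 1) = 1
  additive : ∀ {n m k n' m' k' : ℕ} (T : Tensor F n m k) (S : Tensor F n' m' k'),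
    val (tdsum T S) = val T + val S
  multiplicative : ∀ {n m k n' m' k' : ℕ} (T : Tensor F n m k) (S : Tensor F n' m' k'),
    val (tmul T S) = val T * val S
  monotone : ∀ {n m k n' m' k' : ℕ} (S : Tensor F n m k) (T : Tensor F n' m' k'),
    Restricts S T → val T ≤ val S

/-- Base-2 Shannon entropy of a finitely supported distribution. -/
noncomputable def entropy {ι : Type*} [Fintype ι] (Q : ι → ℝ) : ℝ :=
  ∑ x, -(Q x * Real.logb 2 (Q x))

/-- Action of a triple of matrices on a tensor by change of basis. -/
def gAction {n m k : ℕ} (g1 : Matrix (Fin n) (Fin n) F) (g2 : Matrix (Fin m) (Fin m) F)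
    (g3 : Matrix (Fin k) (Fin k) F) (T : Tensor F n m k) : Tensor F n m k := fun i j l =>
  ∑ i', ∑ j', ∑ l', g1 i i' * g2 j j' * g3 l l' * T i' j' l'

/-- Strassen's upper support functional `ζ^θ`. -/
noncomputable def zeta {n m k : ℕ} (θ1 θ2 θ3 : ℝ) (T : Tensor F n m k) : ℝ :=
  sInf { v : ℝ |
    ∃ (g1 : Matrix (Fin n) (Fin n) F) (g2 : Matrix (Fin m) (Fin m) F)
      (g3 : Matrix (Fin k) (Fin k) F), IsUnit g1 ∧ IsUnit g2 ∧ IsUnit g3 ∧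
      v = sSup { e : ℝ | ∃ P : Fin n × Fin m × Fin k → ℝ,
        (∀ x, 0 ≤ P x) ∧ (∑ x, P x) = 1 ∧
        (∀ x, P x ≠ 0 → gAction g1 g2 g3 T x.1 x.2.1 x.2.2 ≠ 0) ∧
        e = (2 : ℝ) ^ (θ1 * entropy (fun i => ∑ j, ∑ l, P (i, j, l))
            + θ2 * entropy (fun j => ∑ i, ∑ l, P (i, j, l))
            + θ3 * entropy (fun l => ∑ i, ∑ j, P (i, j, l))) } }

/-- The lower value functional `ξ_γ`. -/
noncomputable def xi {n m k : ℕ} (γ1 γ2 γ3 : ℝ) (T : Tensor F n m k) : ℝ :=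
  sSup { x : ℝ | ∃ N E H L : ℕ, 1 ≤ N ∧ 1 ≤ E ∧ 1 ≤ H ∧ 1 ≤ L ∧
    Restricts (tpow T N) (MMT E H L) ∧
    x = ((E : ℝ) ^ γ1 * (H : ℝ) ^ γ2 * (L : ℝ) ^ γ3) ^ (1 / (N : ℝ)) }

/-- Semistability of a Kronecker-quiver representation `f : ι → U →ₗ[F] V`:
every nonzero subrepresentation `(U',V')` has slope `dim U'/dim V'` at most `dim U/dim V`
(stated in cross-multiplied form, with the convention `μ* = ∞` when `dim V' = 0`). -/
def Semistable (F : Type*) [Field F] {ι U V : Type*} [AddCommGroup U] [Module F U]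
    [AddCommGroup V] [Module F V] (f : ι → U →ₗ[F] V) : Prop :=
  ∀ (U' : Submodule F U) (V' : Submodule F V),
    (∀ l, U'.map (f l) ≤ V') → ¬(U' = ⊥ ∧ V' = ⊥) →
    finrank F U' * finrank F V ≤ finrank F U * finrank F V'

/-- The Kronecker-quiver representation associated to a tensor `T`:
`f_l` sends the `i`-th basis vector of `F^n` to `∑ j, T i j l • (basis of F^m)`. -/
def tensorRepMap {F : Type} [Field F] {n m k : ℕ} (T : Tensor F n m k) (l : Fin k) :
    (Fin n → F) →ₗ[F] (Fin m → F) :=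
  Matrix.mulVecLin (Matrix.of fun j i => T i j l)

/-- `IsHNFiltration F f Uc Vc` : the chain `(Uc u, Vc u)` is a Harder–Narasimhan filtration of
the Kronecker-quiver representation `f`, i.e. a strictly increasing chain of subrepresentations
from `(⊥,⊥)` to `(⊤,⊤)` with semistable subquotients and strictly decreasing subquotient slopes
(all slope comparisons stated in cross-multiplied form). -/
structure IsHNFiltration (F : Type*) [Field F] {ι U V : Type*} [AddCommGroup U] [Module F U]
    [AddCommGroup V] [Module F V] (f : ι → U →ₗ[F] V) {r : ℕ}
    (Uc : Fin (r + 1) → Submodule F U) (Vc : Fin (r + 1) → Submodule F V) : Prop where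
  bot_U : Uc 0 = ⊥
  bot_V : Vc 0 = ⊥
  top_U : Uc (Fin.last r) = ⊤
  top_V : Vc (Fin.last r) = ⊤
  mono_U : ∀ u : Fin r, Uc u.castSucc ≤ Uc u.succ
  mono_V : ∀ u : Fin r, Vc u.castSucc ≤ Vc u.succ
  proper : ∀ u : Fin r, Uc u.castSucc ≠ Uc u.succ ∨ Vc u.castSucc ≠ Vc u.succ
  subrep : ∀ (u : Fin (r + 1)) (l : ι), (Uc u).map (f l) ≤ Vc u
  semistable_quot : ∀ u : Fin r, ∀ (U' : Submodule F U) (V' : Submodule F V),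
    Uc u.castSucc ≤ U' → U' ≤ Uc u.succ → Vc u.castSucc ≤ V' → V' ≤ Vc u.succ →
    (∀ l, U'.map (f l) ≤ V') → ¬(U' = Uc u.castSucc ∧ V' = Vc u.castSucc) →
    (finrank F U' - finrank F (Uc u.castSucc)) *
        (finrank F (Vc u.succ) - finrank F (Vc u.castSucc))
      ≤ (finrank F (Uc u.succ) - finrank F (Uc u.castSucc)) *
        (finrank F V' - finrank F (Vc u.castSucc))
  slope_anti : ∀ u v : Fin r, (u : ℕ) + 1 = (v : ℕ) →
    (finrank F (Uc v.succ) - finrank F (Uc v.castSucc)) *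
        (finrank F (Vc u.succ) - finrank F (Vc u.castSucc))
      < (finrank F (Uc u.succ) - finrank F (Uc u.castSucc)) *
        (finrank F (Vc v.succ) - finrank F (Vc v.castSucc))

/-- The dimension of the `u`-th subquotient of a filtration. -/
noncomputable def stepDim (F : Type*) [Field F] {U : Type*} [AddCommGroup U] [Module F U]
    {r : ℕ} (Uc : Fin (r + 1) → Submodule F U) (u : Fin r) : ℕ :=
  finrank F (Uc u.succ) - finrank F (Uc u.castSucc)

end Paper

/-!
Let `f₁, …, f_k : V → W` be the maps of the representation, `n = dim V`, `m = dim W`. For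
`c ∈ (F^k)^p` put `g_l = ∑ⱼ c_{lj} fⱼ` and `Φ_c (x₁, …, x_p) = ∑ₗ g_l xₗ` (`pencilMap`), and
choose `c` with `Φ_c` of maximal rank. Over an infinite field maximality forces `fⱼ xₗ ∈ im Φ_c`
for all `x ∈ ker Φ_c`, since otherwise a generic perturbation of `c` would increase the rank.
The leading coordinates of the vectors of `ker Φ_c` span a subspace `U` with
`dim U ≤ dim ker Φ_c` and `fⱼ U ⊆ im Φ_c`, and `ker Φ_c ∩ Cᵖ = 0` for every complement `C` of
`U`. Semistability of `(U, im Φ_c)` and `dim im Φ_c + dim ker Φ_c = p n` give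
`dim U · (n + m) ≤ p n²`. So for a basis `u₁, …, u_h` of `C` the `h p` vectors `g_l uᵢ` are
linearly independent, which is a restriction of the tensor to `⟨1, h, p⟩`, and `h = n - dim U`
is at least the required ceiling.
-/

open Module

section LinearAlgebra

open LinearMap

variable {F : Type*} [Field F] {V W : Type*} [AddCommGroup V] [Module F V]
  [AddCommGroup W] [Module F W]

theorem LinearIndependent.exists_linearMap_apply_eq_single {ι : Type*} [Fintype ι]
    [DecidableEq ι] {a : ι → W} (ha : LinearIndependent F a) :
    ∃ φ : W →ₗ[F] ι → F, ∀ j, φ (a j) = Pi.single j 1 := by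
  obtain ⟨φ, hφ⟩ := exists_leftInverse_of_injective (Fintype.linearCombination F a)
    (ker_eq_bot.mpr ha.fintypeLinearCombination_injective)
  exact ⟨φ, fun j => by simpa using LinearMap.congr_fun hφ (Pi.single j 1)⟩

open Polynomial in
theorem Matrix.finite_setOf_det_one_add_smul_eq_zero [Infinite F] {ι : Type*} [Fintype ι]
    [DecidableEq ι] (N : Matrix ι ι F) : {t : F | (1 + t • N).det = 0}.Finite := by
  set q : F[X] := (1 + (X : F[X]) • N.map C).det
  have hq : ∀ t, q.eval t = (1 + t • N).det := fun t => by
    rw [← coe_evalRingHom, RingHom.map_det]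
    congr 1
    ext i j
    simp [Matrix.one_apply, apply_ite (eval t)]
    ring
  have hq0 : q ≠ 0 := fun h => by simpa [h] using hq 0
  exact (finite_setOfPred_isRoot hq0).subset fun t ht => by simpa [hq] using ht

theorem LinearIndependent.finite_setOf_not_linearIndependent_add_smul [Infinite F]
    {ι : Type*} [Fintype ι] {a : ι → W} (b : ι → W) (ha : LinearIndependent F a) :
    {t : F | ¬ LinearIndependent F (a + t • b)}.Finite := by
  classical
  obtain ⟨φ, hφ⟩ := ha.exists_linearMap_apply_eq_single
  let N : Matrix ι ι F := .of fun i j => φ (b j) i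
  refine (Matrix.finite_setOf_det_one_add_smul_eq_zero N).subset fun t ht => ?_
  by_contra hdet
  have hcols : φ ∘ (a + t • b) = (1 + t • N).col := by
    ext j i
    simp [N, hφ, Matrix.one_apply, Pi.single_apply, eq_comm]
  exact ht (.of_comp φ (hcols ▸ Matrix.linearIndependent_cols_of_det_ne_zero hdet))

theorem LinearMap.mem_range_of_forall_finrank_range_add_smul_le [Infinite F]
    [FiniteDimensional F W] {g h : V →ₗ[F] W}
    (hrk : ∀ t : F, finrank F (range (g + t • h)) ≤ finrank F (range g))
    {v : V} (hv : g v = 0) : h v ∈ range g := by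
  by_contra hhv
  let e := finBasis F (range g)
  choose u hu using fun i => (e i).2
  have hgu : g ∘ u = (range g).subtype ∘ e := funext hu
  have hspan : Submodule.span F (Set.range (g ∘ u)) = range g := by
    rw [hgu, Set.range_comp, ← Submodule.map_span, e.span_eq, Submodule.map_top,
      Submodule.range_subtype]
  -- Since `(g + t • h) (t⁻¹ • v) = h v`, for generic `t` the range of `g + t • h` contains
  -- `finrank (range g) + 1` independent vectors.
  let a : Fin (finrank F (range g) + 1) → W := Fin.snoc (g ∘ u) (h v)
  have ha : LinearIndependent F a := linearIndependent_finSnoc.mpr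
    ⟨by rw [hgu]; exact e.linearIndependent.map' _ (Submodule.ker_subtype _), by rwa [hspan]⟩
  let b : Fin (finrank F (range g) + 1) → W := Fin.snoc (h ∘ u) 0
  obtain ⟨t, ht⟩ := ((ha.finite_setOf_not_linearIndependent_add_smul b).union
    (Set.finite_singleton 0)).infinite_compl.nonempty
  simp only [Set.mem_compl_iff, Set.mem_union, Set.mem_ofPred_eq, Set.mem_singleton_iff,
    not_or, not_not] at ht
  obtain ⟨hli, ht0⟩ := ht
  have hmem : ∀ i, (a + t • b) i ∈ range (g + t • h) := by
    intro i
    induction i using Fin.lastCases with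
    | last =>
      refine mem_range.mpr ⟨t⁻¹ • v, ?_⟩
      simp [a, b, hv, smul_smul, ht0]
    | cast i =>
      refine mem_range.mpr ⟨u i, ?_⟩
      simp [a, b]
  have hle := Submodule.finrank_mono (Submodule.span_le.mpr (Set.range_subset_iff.mpr hmem))
  rw [finrank_span_eq_card hli, Fintype.card_fin] at hle
  exact absurd (hle.trans (hrk t)) (Nat.not_succ_le_self _)

theorem LinearMap.exists_forall_finrank_range_le [FiniteDimensional F W] {α : Type*}
    [Nonempty α] (Φ : α → V →ₗ[F] W) :
    ∃ a, ∀ b, finrank F (range (Φ b)) ≤ finrank F (range (Φ a)) := by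
  have hbdd : BddAbove (Set.range fun a => finrank F (range (Φ a))) :=
    ⟨finrank F W, Set.forall_mem_range.mpr fun a => Submodule.finrank_le _⟩
  obtain ⟨a, ha⟩ := Nat.sSup_mem (Set.range_nonempty _) hbdd
  exact ⟨a, fun b => (le_csSup hbdd (Set.mem_range_self b)).trans ha.ge⟩

theorem Submodule.exists_le_iSup_map_proj_disjoint_pi [FiniteDimensional F V] :
    ∀ {p : ℕ} (K : Submodule F (Fin p → V)), ∃ U : Submodule F V,
      U ≤ ⨆ l, K.map (proj l) ∧ finrank F U ≤ finrank F K ∧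
      ∀ W : Submodule F V, Disjoint U W → Disjoint K (Submodule.pi Set.univ fun _ => W)
  | 0, K => ⟨⊥, bot_le, by simp, fun _ _ =>
      Submodule.disjoint_def.mpr fun _ _ _ => Subsingleton.elim _ _⟩
  | p + 1, K => by
    -- `U` is spanned by the first coordinates of `K` and, recursively, by the leading
    -- coordinates of the tails of the vectors of `K` with vanishing first coordinate.
    let K₀ : Submodule F V := K.map (proj 0)
    let K' : Submodule F (Fin p → V) :=
      (ker ((proj 0).domRestrict K)).map (funLeft F V Fin.succ ∘ₗ K.subtype)
    obtain ⟨U', hU'le, hU'dim, hU'disj⟩ := exists_le_iSup_map_proj_disjoint_pi K'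
    refine ⟨K₀ ⊔ U', sup_le (le_iSup_of_le 0 le_rfl) (hU'le.trans (iSup_le fun l => ?_)), ?_,
      fun W hW => Submodule.disjoint_def.mpr fun x hxK hxW => ?_⟩
    · rintro _ ⟨_, ⟨x, -, rfl⟩, rfl⟩
      exact Submodule.mem_iSup_of_mem l.succ ⟨x, x.2, rfl⟩
    · have hK := finrank_range_add_finrank_ker ((proj (R := F) (φ := fun _ => V) 0).domRestrict K)
      rw [range_domRestrict] at hK
      calc finrank F ↥(K₀ ⊔ U') ≤ finrank F K₀ + finrank F U' :=
            Submodule.finrank_add_le_finrank_add_finrank _ _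
        _ ≤ finrank F K₀ + finrank F K' := by gcongr
        _ ≤ finrank F K := hK ▸ by gcongr; exact Submodule.finrank_map_le _ _
    · rw [Submodule.mem_pi] at hxW
      have hx0 : x 0 = 0 := Submodule.disjoint_def.mp (hW.mono_left le_sup_left) _
        (Submodule.mem_map_of_mem hxK) (hxW 0 (Set.mem_univ _))
      have htail : Fin.tail x = 0 := Submodule.disjoint_def.mp
        (hU'disj W (hW.mono_left le_sup_right)) _ ⟨⟨x, hxK⟩, hx0, rfl⟩
        (Submodule.mem_pi.mpr fun l _ => hxW l.succ (Set.mem_univ _))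
      rw [← Fin.cons_self_tail x, hx0, htail]
      exact Matrix.cons_zero_zero

theorem LinearIndependent.map_pi_single {ι κ : Type*} [DecidableEq κ] {u : ι → V}
    (hu : LinearIndependent F u) {U : Submodule F V} (huU : ∀ i, u i ∈ U)
    {Φ : (κ → V) →ₗ[F] W} (hΦ : Disjoint (ker Φ) (Submodule.pi Set.univ fun _ => U)) :
    LinearIndependent F fun q : ι × κ => Φ (Pi.single q.2 (u q.1)) := by
  have hsingle : LinearIndependent F fun q : ι × κ => (Pi.single q.2 (u q.1) : κ → V) :=
    (linearIndependent_equiv ((Equiv.sigmaEquivProd κ ι).trans (Equiv.prodComm κ ι))).mp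
      (Pi.linearIndependent_single (fun _ => u) fun _ => hu)
  refine hsingle.map (hΦ.symm.mono_left (Submodule.span_le.mpr ?_))
  rintro _ ⟨q, rfl⟩
  refine Submodule.mem_pi.mpr fun l _ => ?_
  rcases eq_or_ne l q.2 with rfl | hl
  · simpa using huU q.1
  · simp [hl]

end LinearAlgebra

section Pencil

open LinearMap

variable {F : Type*} [Field F] {V W : Type*} [AddCommGroup V] [Module F V]
  [AddCommGroup W] [Module F W] {ι κ : Type*} [Fintype ι] [Fintype κ]

def pencilMap (f : ι → V →ₗ[F] W) (c : κ → ι → F) : (κ → V) →ₗ[F] W :=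
  ∑ l, ∑ j, c l j • f j ∘ₗ proj l

variable (f : ι → V →ₗ[F] W)

theorem pencilMap_apply (c : κ → ι → F) (x : κ → V) :
    pencilMap f c x = ∑ l, ∑ j, c l j • f j (x l) := by
  simp [pencilMap]

theorem pencilMap_add_smul (c e : κ → ι → F) (t : F) :
    pencilMap f (c + t • e) = pencilMap f c + t • pencilMap f e := by
  ext x
  simp [pencilMap_apply, add_smul, mul_smul, Finset.sum_add_distrib, Finset.smul_sum]

theorem pencilMap_apply_single [DecidableEq κ] (c : κ → ι → F) (l : κ) (v : V) :
    pencilMap f c (Pi.single l v) = ∑ j, c l j • f j v := by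
  rw [pencilMap_apply, Finset.sum_eq_single l (fun l' _ hl' => by simp [hl']) (by simp)]
  simp

theorem pencilMap_single [DecidableEq ι] [DecidableEq κ] (l : κ) (j : ι) :
    pencilMap f (Pi.single l (Pi.single j 1)) = f j ∘ₗ proj l := by
  ext l' v
  rcases eq_or_ne l' l with rfl | hl
  · simp [pencilMap_apply_single, Pi.single_apply]
  · simp [pencilMap_apply_single, Ne.symm hl]

theorem map_apply_mem_range_pencilMap [Infinite F] [FiniteDimensional F W] {c : κ → ι → F}
    (hc : ∀ c' : κ → ι → F, finrank F (range (pencilMap f c')) ≤ finrank F (range (pencilMap f c)))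
    {x : κ → V} (hx : x ∈ ker (pencilMap f c)) (l : κ) (j : ι) :
    f j (x l) ∈ range (pencilMap f c) := by
  classical
  refine mem_range_of_forall_finrank_range_add_smul_le (h := f j ∘ₗ proj l) (fun t => ?_) hx
  rw [← pencilMap_single, ← pencilMap_add_smul]
  exact hc _

end Pencil

namespace Paper

open LinearMap in
theorem Semistable.exists_linearIndependent_pencil {F : Type*} [Field F] [Infinite F]
    {V W : Type*} [AddCommGroup V] [Module F V] [AddCommGroup W] [Module F W]
    [FiniteDimensional F V] [FiniteDimensional F W] {ι : Type*} [Fintype ι]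
    {f : ι → V →ₗ[F] W} (hss : Semistable F f) (p : ℕ) :
    ∃ h : ℕ, (finrank F V - h) * (finrank F V + finrank F W) ≤ p * finrank F V * finrank F V ∧
      ∃ (u : Fin h → V) (c : Fin p → ι → F),
        LinearIndependent F fun q : Fin h × Fin p => ∑ j, c q.2 j • f j (u q.1) := by
  classical
  obtain ⟨c, hc⟩ := exists_forall_finrank_range_le (pencilMap f (κ := Fin p))
  obtain ⟨U, hUle, hUdim, hUdisj⟩ := (ker (pencilMap f c)).exists_le_iSup_map_proj_disjoint_pi
  have hUmaps : ∀ j, U.map (f j) ≤ range (pencilMap f c) := fun j =>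
    Submodule.map_le_iff_le_comap.mpr <| hUle.trans <| iSup_le fun l => by
      rintro _ ⟨x, hx, rfl⟩
      exact map_apply_mem_range_pencilMap f hc hx l j
  have hslope : finrank F U * finrank F W ≤ finrank F V * finrank F (range (pencilMap f c)) := by
    by_cases hU : U = ⊥
    · subst hU
      simp
    · exact hss U _ hUmaps fun h => hU h.1
  have hrank := finrank_range_add_finrank_ker (pencilMap f c)
  simp only [finrank_pi_fintype, Finset.sum_const, Finset.card_univ, Fintype.card_fin,
    smul_eq_mul] at hrank
  obtain ⟨Wc, hWc⟩ := U.exists_isCompl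
  have hdim := Submodule.finrank_add_eq_of_isCompl hWc
  refine ⟨finrank F Wc, ?_, fun i => (finBasis F Wc i : V), c, ?_⟩
  · calc (finrank F V - finrank F Wc) * (finrank F V + finrank F W)
        = finrank F U * finrank F V + finrank F U * finrank F W := by rw [← hdim]; simp; ring
      _ ≤ finrank F V * finrank F (ker (pencilMap f c))
          + finrank F V * finrank F (range (pencilMap f c)) :=
        add_le_add (by rw [mul_comm]; exact Nat.mul_le_mul_left _ hUdim) hslope
      _ = p * finrank F V * finrank F V := by rw [← mul_add, add_comm, hrank]; ring
  · simpa [pencilMap_apply_single] using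
      (finBasis F Wc).linearIndependent.map' Wc.subtype (Submodule.ker_subtype _)
        |>.map_pi_single (fun i => (finBasis F Wc i).2) (hUdisj Wc hWc.disjoint)

theorem natCeil_sub_mul_div_le {n m p h : ℕ} (hh : (n - h) * (n + m) ≤ p * n * n) :
    ⌈(((m - (p - 1) * n) * n : ℕ) : ℚ) / ((n + m : ℕ) : ℚ)⌉₊ ≤ h := by
  rcases Nat.eq_zero_or_pos (n + m) with h0 | hpos
  · simp [h0]
  rw [Nat.ceil_le, div_le_iff₀ (by positivity)]
  norm_cast
  have hsub : m - (p - 1) * n ≤ m + n - p * n := by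
    rcases p with _ | p
    · simp
    · simp only [Nat.add_sub_cancel, Nat.succ_mul]; omega
  rcases le_or_gt n h with hnh | hnh
  · nlinarith [Nat.sub_le m ((p - 1) * n)]
  rcases le_or_gt (p * n) (m + n) with hp | hp
  · obtain ⟨d, rfl⟩ : ∃ d, n = h + d := ⟨n - h, by omega⟩
    obtain ⟨e, he⟩ : ∃ e, m + (h + d) = p * (h + d) + e := ⟨m + (h + d) - p * (h + d), by omega⟩
    rw [Nat.add_sub_cancel_left] at hh
    rw [he, Nat.add_sub_cancel_left] at hsub
    nlinarith
  · rw [Nat.sub_eq_zero_of_le hp.le] at hsub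
    simp [Nat.le_zero.mp hsub]

variable {F : Type} [Field F]

theorem tensorRepMap_apply {n m k : ℕ} (T : Tensor F n m k) (l : Fin k) (x : Fin n → F)
    (j : Fin m) : tensorRepMap T l x j = ∑ i, T i j l * x i := by
  simp [tensorRepMap, Matrix.mulVec, dotProduct]

theorem restricts_MMT_one_of_linearIndependent {n m k h p : ℕ} (T : Tensor F n m k)
    (u : Fin h → Fin n → F) (c : Fin p → Fin k → F)
    (hw : LinearIndependent F fun q : Fin h × Fin p => ∑ l, c q.2 l • tensorRepMap T l (u q.1)) :
    Restricts T (MMT 1 h p) := by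
  classical
  obtain ⟨φ, hφ⟩ := hw.exists_linearMap_apply_eq_single
  let B := LinearMap.toMatrix' (LinearMap.funLeft F F finProdFinEquiv.symm ∘ₗ φ)
  refine ⟨.of fun i i' => u (finProdFinEquiv.symm i).2 i', B,
    .of fun l l' => c (finProdFinEquiv.symm l).1 l', fun i j l => ?_⟩
  set q : Fin h × Fin p := ((finProdFinEquiv.symm i).2, (finProdFinEquiv.symm l).1)
  have hB : ∑ j', B j j' * (∑ l', c q.2 l' • tensorRepMap T l' (u q.1)) j' =
      (Pi.single q 1 : Fin h × Fin p → F) (finProdFinEquiv.symm j) := by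
    rw [← hφ q]
    exact congr_fun (LinearMap.toMatrix'_mulVec (.funLeft F F finProdFinEquiv.symm ∘ₗ φ) _) j
  have hMMT : MMT 1 h p i j l = (Pi.single q 1 : Fin h × Fin p → F) (finProdFinEquiv.symm j) := by
    simp [MMT, Pi.single_apply, q, Prod.ext_iff, eq_comm, Subsingleton.elim i.divNat l.modNat]
  rw [hMMT, ← hB]
  simp only [Matrix.of_apply, Finset.sum_apply, Pi.smul_apply, tensorRepMap_apply, smul_eq_mul,
    Finset.mul_sum]
  conv_rhs => rw [Finset.sum_comm]
  refine Finset.sum_congr rfl fun j' _ => ?_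
  rw [Finset.sum_comm]
  exact Finset.sum_congr rfl fun l' _ => Finset.sum_congr rfl fun i' _ => by ring

theorem statement8_general (F : Type) [Field F] [Infinite F] (n m k : ℕ) (T : Tensor F n m k)
    (hss : Semistable F (tensorRepMap T)) (p : ℕ) :
    Restricts T
      (MMT (F := F) 1 (⌈(((m - (p - 1) * n) * n : ℕ) : ℚ) / (((n + m : ℕ)) : ℚ)⌉₊) p) := by
  obtain ⟨h, hh, u, c, hw⟩ := hss.exists_linearIndependent_pencil p
  simp only [finrank_fin_fun] at hh
  have hle := natCeil_sub_mul_div_le hh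
  exact restricts_MMT_one_of_linearIndependent T (u ∘ Fin.castLE hle) c
    (hw.comp (Prod.map (Fin.castLE hle) id)
      ((Fin.castLE_injective hle).prodMap Function.injective_id))

/-- over an infinite field, a semistable tensor of shape `(n,m,k)` with `n ≤ m`
restricts to the matrix multiplication tensor `⟨1, ⌈(m−(p−1)n)·n/(n+m)⌉, p⟩` whenever
`1 ≤ p ≤ m/n`. -/
theorem statement8 (F : Type) [Field F] [Infinite F] (n m k : ℕ) (T : Tensor F n m k)
    (hnm : n ≤ m) (hss : Semistable F (tensorRepMap T))
    (p : ℕ) (hp1 : 1 ≤ p) (hp2 : p * n ≤ m) :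
    Restricts T
      (MMT (F := F) 1 (⌈(((m - (p - 1) * n) * n : ℕ) : ℚ) / (((n + m : ℕ)) : ℚ)⌉₊) p) :=
  statement8_general F n m k T hss p

end Paper
end

section
/- Let F be a field and (U, V; f_1,…,f_k) a representation of the k-arrow Kronecker quiver over F with n = dim U ≥ 1 and m = dim V ≥ 1. For bases x_1,…,x_n of U and y_1,…,y_m of V, let the support be Φ = { (i,j) ∈ [n]×[m] : the y_j-coefficient of f_l(x_i) is nonzero for some l }. Then the representation is semistable if and only if for every choice of bases of U and V the support Φ is a balanced subset of [n]×[m]. -/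
/-!
Both conditions are equivalent to the Hall-type inequality `|S| m ≤ n |T|` for all `S ⊆ [n]`,
`T ⊆ [m]` with `Φ(S) ⊆ T`. For the support `Φ` of a representation in bases `x`, `y`, these pairs
`(S, T)` are exactly those for which `(span x_S, span y_T)` is a subrepresentation, and every
subrepresentation is of this form for suitable bases. On the other side, the inequality follows
from a balanced distribution by comparing the mass of the rows in `S` with that of the columns
in `T`. Conversely, Hall's marriage theorem for the blow-up repeating each row `m` times and each
column `n` times gives a bijection `[n] × [m] ≃ [m] × [n]` along `Φ`, and the push-forward of the
uniform distribution along it is balanced.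
-/

open scoped BigOperators
open Module

namespace Paper

/-- A subset `Φ ⊆ J × K` is balanced if some probability distribution supported inside `Φ`
has uniform marginals on both `J` and `K`. -/
def Balanced {J K : Type*} [Fintype J] [Fintype K] (Φ : Set (J × K)) : Prop :=
  ∃ P : J × K → ℝ, (∀ x, 0 ≤ P x) ∧ (∑ x, P x) = 1 ∧ (∀ x, P x ≠ 0 → x ∈ Φ) ∧
    (∀ j : J, (∑ kk, P (j, kk)) = 1 / (Fintype.card J : ℝ)) ∧
    (∀ kk : K, (∑ j, P (j, kk)) = 1 / (Fintype.card K : ℝ))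

open Finset

section Balanced

variable {J K : Type*} [Fintype J] [Fintype K] {Φ : Set (J × K)}

theorem Balanced.card_mul_le (hΦ : Balanced Φ) {S : Finset J} {T : Finset K}
    (hST : ∀ i ∈ S, ∀ j, (i, j) ∈ Φ → j ∈ T) :
    #S * Fintype.card K ≤ Fintype.card J * #T := by
  obtain ⟨P, hP0, hP1, hPΦ, hrow, hcol⟩ := hΦ
  obtain ⟨⟨i₀, j₀⟩⟩ : Nonempty (J × K) := by
    by_contra h
    rw [not_nonempty_iff] at h
    simp at hP1
  have hJ : (0 : ℝ) < Fintype.card J := by exact_mod_cast Fintype.card_pos_iff.mpr ⟨i₀⟩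
  have hK : (0 : ℝ) < Fintype.card K := by exact_mod_cast Fintype.card_pos_iff.mpr ⟨j₀⟩
  have hmass : (#S : ℝ) / Fintype.card J ≤ #T / Fintype.card K :=
    calc (#S : ℝ) / Fintype.card J = ∑ i ∈ S, ∑ j, P (i, j) := by
          simp [hrow, div_eq_mul_inv]
      _ = ∑ i ∈ S, ∑ j ∈ T, P (i, j) := by
          refine sum_congr rfl fun i hi => (sum_subset (subset_univ T) fun j _ hj => ?_).symm
          exact not_not.mp fun hP => hj (hST i hi j (hPΦ _ hP))
      _ = ∑ j ∈ T, ∑ i ∈ S, P (i, j) := sum_comm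
      _ ≤ ∑ j ∈ T, ∑ i, P (i, j) := sum_le_sum fun j _ =>
          sum_le_sum_of_subset_of_nonneg (subset_univ S) fun i _ _ => hP0 (i, j)
      _ = #T / Fintype.card K := by simp [hcol, div_eq_mul_inv]
  rw [div_le_div_iff₀ hJ hK] at hmass
  exact_mod_cast (by linarith : (#S : ℝ) * Fintype.card K ≤ Fintype.card J * #T)

theorem balanced_of_equiv [Nonempty J] [Nonempty K] (e : J × K ≃ K × J)
    (he : ∀ p, (p.1, (e p).1) ∈ Φ) : Balanced Φ := by
  classical
  -- `c i j / (|J| |K|)` is the push-forward of the uniform distribution along `p ↦ (p.1, (e p).1)`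
  let c : J → K → ℝ := fun i j => ∑ a, if (e (i, a)).1 = j then 1 else 0
  have hrow : ∀ i, ∑ j, c i j = Fintype.card K := fun i => by
    simp only [c]
    rw [sum_comm]
    simp
  have hcol : ∀ j, ∑ i, c i j = Fintype.card J := fun j => by
    simp only [c]
    rw [← Fintype.sum_prod_type' (fun i a => if (e (i, a)).1 = j then (1 : ℝ) else 0),
      e.sum_comp (fun q => if q.1 = j then (1 : ℝ) else 0), Fintype.sum_prod_type_right]
    simp
  have hJ : (0 : ℝ) < Fintype.card J := by exact_mod_cast Fintype.card_pos
  have hK : (0 : ℝ) < Fintype.card K := by exact_mod_cast Fintype.card_pos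
  refine ⟨fun x => c x.1 x.2 / (Fintype.card J * Fintype.card K), fun x => ?_, ?_, ?_, ?_, ?_⟩
  · exact div_nonneg (sum_nonneg fun a _ => by split_ifs <;> norm_num) (by positivity)
  · rw [Fintype.sum_prod_type]
    simp only [← sum_div, hrow, sum_const, card_univ, nsmul_eq_mul]
    field_simp
  · rintro ⟨i, j⟩ hP
    obtain ⟨a, -, ha⟩ := exists_ne_zero_of_sum_ne_zero (left_ne_zero_of_mul hP)
    obtain ⟨hj, -⟩ := ite_ne_right_iff.mp ha
    have hj : (e (i, a)).1 = j := hj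
    exact hj ▸ he (i, a)
  · intro i
    simp only [← sum_div, hrow]
    field_simp
  · intro j
    simp only [← sum_div, hcol]
    field_simp

theorem exists_equiv_of_card_mul_le
    (hΦ : ∀ (S : Finset J) (T : Finset K), (∀ i ∈ S, ∀ j, (i, j) ∈ Φ → j ∈ T) →
      #S * Fintype.card K ≤ Fintype.card J * #T) :
    ∃ e : J × K ≃ K × J, ∀ p, (p.1, (e p).1) ∈ Φ := by
  classical
  have hall : ∀ A : Finset (J × K), #A ≤ #{q : K × J | ∃ p ∈ A, (p.1, q.1) ∈ Φ} := by
    intro A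
    set B : Finset (K × J) := {q | ∃ p ∈ A, (p.1, q.1) ∈ Φ}
    have hclosed : ∀ i ∈ A.image Prod.fst, ∀ j, (i, j) ∈ Φ → j ∈ B.image Prod.fst := by
      simp only [mem_image]
      rintro _ ⟨p, hp, rfl⟩ j hj
      exact ⟨(j, p.1), by simp only [B, mem_filter, mem_univ, true_and]; exact ⟨p, hp, hj⟩, rfl⟩
    calc #A ≤ #(A.image Prod.fst ×ˢ (univ : Finset K)) :=
          card_le_card fun p hp => mem_product.mpr ⟨mem_image_of_mem _ hp, mem_univ _⟩
      _ = #(A.image Prod.fst) * Fintype.card K := by simp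
      _ ≤ Fintype.card J * #(B.image Prod.fst) := hΦ _ _ hclosed
      _ = #(B.image Prod.fst ×ˢ (univ : Finset J)) := by simp [mul_comm]
      _ ≤ #B := card_le_card fun q hq => by
          obtain ⟨hq, -⟩ := mem_product.mp hq
          obtain ⟨q', hq', hqq'⟩ := mem_image.mp hq
          simp only [B, mem_filter, mem_univ, true_and] at hq' ⊢
          rwa [← hqq']
  obtain ⟨g, hg_inj, hg⟩ := (Fintype.all_card_le_filter_rel_iff_exists_injective
    (fun (p : J × K) (q : K × J) => (p.1, q.1) ∈ Φ)).mp hall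
  have hg_bij : g.Bijective :=
    (Fintype.bijective_iff_injective_and_card g).mpr ⟨hg_inj, by simp [mul_comm]⟩
  exact ⟨Equiv.ofBijective g hg_bij, hg⟩

theorem balanced_iff_forall_card_mul_le [Nonempty J] [Nonempty K] :
    Balanced Φ ↔ ∀ (S : Finset J) (T : Finset K), (∀ i ∈ S, ∀ j, (i, j) ∈ Φ → j ∈ T) →
      #S * Fintype.card K ≤ Fintype.card J * #T :=
  ⟨fun hΦ _ _ => hΦ.card_mul_le, fun hΦ =>
    let ⟨e, he⟩ := exists_equiv_of_card_mul_le hΦ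
    balanced_of_equiv e he⟩

end Balanced

section Basis

open Submodule

theorem finrank_span_image_basis {R M ι : Type*} [Ring R] [Nontrivial R] [StrongRankCondition R]
    [AddCommGroup M] [Module R M] (b : Basis ι R M) (S : Finset ι) :
    finrank R (span R (b '' S)) = #S := by
  rw [Set.image_eq_range]
  exact (finrank_span_eq_card (b.linearIndependent.comp _ Subtype.val_injective)).trans (by simp)

theorem exists_basis_span_image_eq {K V ι : Type*} [Field K] [AddCommGroup V] [Module K V]
    [FiniteDimensional K V] [Fintype ι] (hι : Fintype.card ι = finrank K V)
    (W : Submodule K V) : ∃ (b : Basis ι K V) (S : Finset ι), span K (b '' S) = W := by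
  classical
  obtain ⟨s, hsW, hspan, hs⟩ := exists_linearIndependent K (W : Set V)
  replace hs : LinearIndepOn K id s := hs
  let B := Basis.extend hs
  let b := B.reindex (B.indexEquiv ((finBasisOfFinrankEq K V hι.symm).reindex
    (Fintype.equivFin ι).symm))
  refine ⟨b, ({i | b i ∈ W} : Finset ι), le_antisymm (span_le.mpr ?_) ?_⟩
  · rintro _ ⟨i, hi, rfl⟩
    simpa using hi
  · have hsb : s ⊆ Set.range b := by
      rw [Basis.range_reindex, Basis.range_extend]
      exact hs.subset_extend _
    calc W = span K s := by rw [hspan, span_eq]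
      _ ≤ _ := span_mono fun x hx => by
          obtain ⟨i, rfl⟩ := hsb hx
          exact ⟨i, by simpa using hsW hx, rfl⟩

end Basis

section Kronecker

open Submodule

variable {F U V ι J K : Type*} [Field F] [AddCommGroup U] [Module F U] [AddCommGroup V]
  [Module F V]

def support (bU : Basis J F U) (bV : Basis K F V) (f : ι → U →ₗ[F] V) : Set (J × K) :=
  {x | ∃ l, bV.repr (f l (bU x.1)) x.2 ≠ 0}

theorem map_span_image_le_span_image_iff (bU : Basis J F U) (bV : Basis K F V)
    (f : ι → U →ₗ[F] V) (S : Set J) (T : Set K) :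
    (∀ l, (span F (bU '' S)).map (f l) ≤ span F (bV '' T)) ↔
      ∀ i ∈ S, ∀ j, (i, j) ∈ support bU bV f → j ∈ T := by
  simp only [map_span_le, Set.forall_mem_image, Basis.mem_span_image, Set.subset_def,
    Finset.mem_coe, Finsupp.mem_support_iff, support, Set.mem_ofPred_eq]
  exact ⟨fun h i hi j ⟨l, hl⟩ => h l hi j hl, fun h l i hi j hl => h i hi j ⟨l, hl⟩⟩

theorem semistable_iff_forall_basis [FiniteDimensional F U] [FiniteDimensional F V]
    [Fintype J] [Fintype K] (hJ : Fintype.card J = finrank F U)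
    (hK : Fintype.card K = finrank F V) (f : ι → U →ₗ[F] V) :
    Semistable F f ↔ ∀ (bU : Basis J F U) (bV : Basis K F V) (S : Finset J) (T : Finset K),
      (∀ i ∈ S, ∀ j, (i, j) ∈ support bU bV f → j ∈ T) →
        #S * finrank F V ≤ finrank F U * #T := by
  constructor
  · intro hf bU bV S T hST
    obtain rfl | ⟨i, hi⟩ := S.eq_empty_or_nonempty
    · simp
    have hU' : span F (bU '' S) ≠ ⊥ := fun h =>
      bU.ne_zero i ((span_eq_bot.mp h) _ ⟨i, hi, rfl⟩)
    have := hf _ _ ((map_span_image_le_span_image_iff bU bV f S T).mpr hST) fun h => hU' h.1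
    rwa [finrank_span_image_basis, finrank_span_image_basis] at this
  · intro h U' V' hmap _
    obtain ⟨bU, S, rfl⟩ := exists_basis_span_image_eq hJ U'
    obtain ⟨bV, T, rfl⟩ := exists_basis_span_image_eq hK V'
    have := h bU bV S T ((map_span_image_le_span_image_iff bU bV f S T).mp hmap)
    rwa [finrank_span_image_basis, finrank_span_image_basis]

end Kronecker

/-- a Kronecker-quiver representation with `dim U = n ≥ 1`, `dim V = m ≥ 1`
is semistable iff for every choice of bases of `U` and `V`, the support
`Φ = {(i,j) : ∃ l, (f_l(x_i))_j ≠ 0}` is a balanced subset of `[n]×[m]`. -/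
theorem statement10 (F : Type) [Field F] (k : ℕ) (U V : Type)
    [AddCommGroup U] [Module F U] [AddCommGroup V] [Module F V]
    [FiniteDimensional F U] [FiniteDimensional F V]
    (f : Fin k → U →ₗ[F] V) (n m : ℕ) (hn : 1 ≤ n) (hm : 1 ≤ m)
    (hU : finrank F U = n) (hV : finrank F V = m) :
    Semistable F f ↔
      ∀ (bU : Basis (Fin n) F U) (bV : Basis (Fin m) F V),
        Balanced { x : Fin n × Fin m | ∃ l, bV.repr (f l (bU x.1)) x.2 ≠ 0 } := by
  subst hU hV
  have : Nonempty (Fin (finrank F U)) := ⟨⟨0, hn⟩⟩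
  have : Nonempty (Fin (finrank F V)) := ⟨⟨0, hm⟩⟩
  rw [semistable_iff_forall_basis (Fintype.card_fin _) (Fintype.card_fin _) f]
  refine forall₂_congr fun bU bV => ?_
  rw [balanced_iff_forall_card_mul_le, Fintype.card_fin, Fintype.card_fin]
  rfl

end Paper
end

section
/- Let (U, V; f_1,…,f_k) and (U', V'; f'_1,…,f'_{k'}) be semistable representations of Kronecker quivers over a field F. Then their tensor product — the representation of the kk'-arrow Kronecker quiver on (U⊗U', V⊗V') whose maps are f_i ⊗ f'_{i'} for 1 ≤ i ≤ k, 1 ≤ i' ≤ k' — is semistable. -/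
open scoped BigOperators
open Module

namespace Paper

variable {F : Type} [Field F]

section Coord

variable {X M N : Type} [AddCommGroup X] [Module F X]
  [AddCommGroup M] [Module F M] [AddCommGroup N] [Module F N]

noncomputable def coordMap {n : ℕ} (b : Basis (Fin n) F X) (i : Fin n) :
    (TensorProduct F X M) →ₗ[F] M :=
  (TensorProduct.lid F M).toLinearMap ∘ₗ LinearMap.rTensor M (b.coord i)

lemma coordMap_tmul {n : ℕ} (b : Basis (Fin n) F X) (i : Fin n) (x : X) (m : M) :
    coordMap (F := F) b i (x ⊗ₜ[F] m) = b.coord i x • m := by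
  simp [coordMap]

lemma coordMap_comp_lTensor {n : ℕ} (b : Basis (Fin n) F X) (i : Fin n) (g : M →ₗ[F] N) :
    (coordMap (F := F) b i) ∘ₗ (LinearMap.lTensor X g) = g ∘ₗ coordMap (F := F) b i := by
  apply TensorProduct.ext'
  intro x m
  simp [coordMap_tmul]

lemma coordMap_lTensor_apply {n : ℕ} (b : Basis (Fin n) F X) (i : Fin n) (g : M →ₗ[F] N)
    (v : TensorProduct F X M) :
    coordMap (F := F) b i (LinearMap.lTensor X g v) = g (coordMap (F := F) b i v) := by
  have := congrArg (fun φ => φ v) (coordMap_comp_lTensor (F := F) b i g)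
  simpa using this

lemma coordMap_reconstruct {n : ℕ} (b : Basis (Fin n) F X) (v : TensorProduct F X M) :
    ∑ i, (b i) ⊗ₜ[F] (coordMap (F := F) b i v) = v := by
  have : (∑ i, (TensorProduct.mk F X M (b i)) ∘ₗ (coordMap (F := F) b i)) = LinearMap.id := by
    apply TensorProduct.ext'
    intro x m
    simp only [LinearMap.sum_apply, LinearMap.coe_comp, Function.comp_apply,
      TensorProduct.mk_apply, coordMap_tmul, LinearMap.id_coe, id_eq]
    calc ∑ i, (b i) ⊗ₜ[F] ((b.coord i x) • m)
        = ∑ i, (b.coord i x) • ((b i) ⊗ₜ[F] m) := by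
          simp [TensorProduct.tmul_smul, TensorProduct.smul_tmul']
      _ = ∑ i, ((b.coord i x) • (b i)) ⊗ₜ[F] m := by
          simp [TensorProduct.smul_tmul']
      _ = (∑ i, (b.coord i x) • (b i)) ⊗ₜ[F] m := by
          rw [TensorProduct.sum_tmul]
      _ = x ⊗ₜ[F] m := by
          congr 1
          simpa [Basis.coord_apply] using b.sum_repr x
  calc ∑ i, (b i) ⊗ₜ[F] (coordMap (F := F) b i v)
      = (∑ i, (TensorProduct.mk F X M (b i)) ∘ₗ (coordMap (F := F) b i)) v := by
        simp
    _ = v := by rw [this]; rfl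

lemma eq_zero_of_coordMap_eq_zero {n : ℕ} (b : Basis (Fin n) F X) (v : TensorProduct F X M)
    (h : ∀ i, coordMap (F := F) b i v = 0) : v = 0 := by
  have := coordMap_reconstruct (F := F) b v
  simp only [h, TensorProduct.tmul_zero, Finset.sum_const_zero] at this
  exact this.symm

end Coord

section SlopeBound

/-- Abstract slope bound for a family of linear maps. -/
def SlopeBound (p q : ℕ) {ι M N : Type*} [AddCommGroup M] [Module F M]
    [AddCommGroup N] [Module F N] (g : ι → M →ₗ[F] N) : Prop :=
  ∀ (P : Submodule F M) (Q : Submodule F N),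
    (∀ l, P.map (g l) ≤ Q) → finrank F P * q ≤ p * finrank F Q

variable {ι : Type*} {X M N : Type} [AddCommGroup X] [Module F X]
  [AddCommGroup M] [Module F M] [AddCommGroup N] [Module F N]

/-- helper: finrank of the kernel part. -/
lemma finrank_comap_subtype_eq (A : Submodule F M) (T : Submodule F M)
    [FiniteDimensional F M] :
    finrank F (Submodule.comap A.subtype T) = finrank F ((A ⊓ T : Submodule F M)) := by
  have e := (Submodule.equivMapOfInjective A.subtype (Submodule.injective_subtype A)
      (Submodule.comap A.subtype T)).finrank_eq
  rwa [Submodule.map_comap_subtype] at e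

theorem slopeBound_lTensor [FiniteDimensional F X] [FiniteDimensional F M]
    [FiniteDimensional F N] (g : ι → M →ₗ[F] N) (p q : ℕ)
    (hg : SlopeBound (F := F) p q g) :
    SlopeBound (F := F) p q (fun l => LinearMap.lTensor X (g l)) := by
  classical
  intro P Q hPQ
  set n := finrank F X with hn
  set b : Basis (Fin n) F X := Module.finBasis F X with hb
  set cM : Fin n → (TensorProduct F X M) →ₗ[F] M := fun i => coordMap (F := F) b i with hcM
  set cN : Fin n → (TensorProduct F X N) →ₗ[F] N := fun i => coordMap (F := F) b i with hcN
  -- filtration by vanishing of coordinates ≥ j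
  set K : ℕ → Submodule F (TensorProduct F X M) :=
    fun j => ⨅ (i : Fin n) (_ : j ≤ (i : ℕ)), LinearMap.ker (cM i) with hK
  set K' : ℕ → Submodule F (TensorProduct F X N) :=
    fun j => ⨅ (i : Fin n) (_ : j ≤ (i : ℕ)), LinearMap.ker (cN i) with hK'
  have memK : ∀ (j : ℕ) v, v ∈ K j ↔ ∀ i : Fin n, j ≤ (i : ℕ) → cM i v = 0 := by
    intro j v
    simp [hK, Submodule.mem_iInf, LinearMap.mem_ker]
  have memK' : ∀ (j : ℕ) v, v ∈ K' j ↔ ∀ i : Fin n, j ≤ (i : ℕ) → cN i v = 0 := by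
    intro j v
    simp [hK', Submodule.mem_iInf, LinearMap.mem_ker]
  have K0 : K 0 = ⊥ := by
    apply Submodule.eq_bot_iff _ |>.mpr
    intro v hv
    exact eq_zero_of_coordMap_eq_zero (F := F) b v
      (fun i => (memK 0 v).mp hv i (Nat.zero_le _))
  have K'0 : K' 0 = ⊥ := by
    apply Submodule.eq_bot_iff _ |>.mpr
    intro v hv
    exact eq_zero_of_coordMap_eq_zero (F := F) b v
      (fun i => (memK' 0 v).mp hv i (Nat.zero_le _))
  have Ktop : K n = ⊤ := by
    apply Submodule.eq_top_iff'.mpr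
    intro v
    exact (memK n v).mpr (fun i hi => absurd i.isLt (by omega))
  have K'top : K' n = ⊤ := by
    apply Submodule.eq_top_iff'.mpr
    intro v
    exact (memK' n v).mpr (fun i hi => absurd i.isLt (by omega))
  have Kstep : ∀ (j : ℕ) (hj : j < n), K (j + 1) ⊓ LinearMap.ker (cM ⟨j, hj⟩) = K j := by
    intro j hj
    apply le_antisymm
    · intro v hv
      rcases hv with ⟨h1, h2⟩
      apply (memK j v).mpr
      intro i hi
      rcases Nat.lt_or_ge (j : ℕ) (i : ℕ) with h | h
      · exact (memK (j+1) v).mp h1 i h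
      · have : (i : ℕ) = j := le_antisymm h hi
        have : i = ⟨j, hj⟩ := Fin.ext this
        rw [this]; exact h2
    · intro v hv
      refine ⟨(memK (j+1) v).mpr (fun i hi => (memK j v).mp hv i (by omega)), ?_⟩
      exact (memK j v).mp hv ⟨j, hj⟩ (le_refl _)
  have K'step : ∀ (j : ℕ) (hj : j < n), K' (j + 1) ⊓ LinearMap.ker (cN ⟨j, hj⟩) = K' j := by
    intro j hj
    apply le_antisymm
    · intro v hv
      rcases hv with ⟨h1, h2⟩
      apply (memK' j v).mpr
      intro i hi
      rcases Nat.lt_or_ge (j : ℕ) (i : ℕ) with h | h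
      · exact (memK' (j+1) v).mp h1 i h
      · have : (i : ℕ) = j := le_antisymm h hi
        have : i = ⟨j, hj⟩ := Fin.ext this
        rw [this]; exact h2
    · intro v hv
      refine ⟨(memK' (j+1) v).mpr (fun i hi => (memK' j v).mp hv i (by omega)), ?_⟩
      exact (memK' j v).mp hv ⟨j, hj⟩ (le_refl _)
  -- the key induction
  have main : ∀ j : ℕ, j ≤ n →
      finrank F (P ⊓ K j : Submodule F _) * q ≤ p * finrank F (Q ⊓ K' j : Submodule F _) := by
    intro j
    induction j with
    | zero =>
      intro _
      rw [K0, K'0, inf_bot_eq, inf_bot_eq, finrank_bot]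
      simp
    | succ j ih =>
      intro hj1
      have hj : j < n := by omega
      -- layer submodules
      set S : Submodule F M := (P ⊓ K (j+1)).map (cM ⟨j, hj⟩) with hS
      set T : Submodule F N := (Q ⊓ K' (j+1)).map (cN ⟨j, hj⟩) with hT
      -- rank-nullity on the M side
      have rankM : finrank F (P ⊓ K (j+1) : Submodule F _) =
          finrank F S + finrank F (P ⊓ K j : Submodule F _) := by
        have h0 := LinearMap.finrank_range_add_finrank_ker
          ((cM ⟨j, hj⟩) ∘ₗ (P ⊓ K (j+1)).subtype)
        have hrange : LinearMap.range ((cM ⟨j, hj⟩) ∘ₗ (P ⊓ K (j+1)).subtype) = S := by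
          rw [LinearMap.range_comp, Submodule.range_subtype]
        have hker : LinearMap.ker ((cM ⟨j, hj⟩) ∘ₗ (P ⊓ K (j+1)).subtype)
            = Submodule.comap (P ⊓ K (j+1)).subtype (LinearMap.ker (cM ⟨j, hj⟩)) := by
          rw [LinearMap.ker_comp]
        have heq : (P ⊓ K (j+1)) ⊓ LinearMap.ker (cM ⟨j, hj⟩) = P ⊓ K j := by
          rw [inf_assoc, Kstep j hj]
        have hkerrank : finrank F (LinearMap.ker ((cM ⟨j, hj⟩) ∘ₗ (P ⊓ K (j+1)).subtype)) =
            finrank F (P ⊓ K j : Submodule F _) := by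
          rw [hker, finrank_comap_subtype_eq, heq]
        rw [hrange, hkerrank] at h0
        exact h0.symm
      have rankN : finrank F (Q ⊓ K' (j+1) : Submodule F _) =
          finrank F T + finrank F (Q ⊓ K' j : Submodule F _) := by
        have h0 := LinearMap.finrank_range_add_finrank_ker
          ((cN ⟨j, hj⟩) ∘ₗ (Q ⊓ K' (j+1)).subtype)
        have hrange : LinearMap.range ((cN ⟨j, hj⟩) ∘ₗ (Q ⊓ K' (j+1)).subtype) = T := by
          rw [LinearMap.range_comp, Submodule.range_subtype]
        have hker : LinearMap.ker ((cN ⟨j, hj⟩) ∘ₗ (Q ⊓ K' (j+1)).subtype)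
            = Submodule.comap (Q ⊓ K' (j+1)).subtype (LinearMap.ker (cN ⟨j, hj⟩)) := by
          rw [LinearMap.ker_comp]
        have heq : (Q ⊓ K' (j+1)) ⊓ LinearMap.ker (cN ⟨j, hj⟩) = Q ⊓ K' j := by
          rw [inf_assoc, K'step j hj]
        have hkerrank : finrank F (LinearMap.ker ((cN ⟨j, hj⟩) ∘ₗ (Q ⊓ K' (j+1)).subtype)) =
            finrank F (Q ⊓ K' j : Submodule F _) := by
          rw [hker, finrank_comap_subtype_eq, heq]
        rw [hrange, hkerrank] at h0
        exact h0.symm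
      -- the layer is a subrepresentation
      have layer : ∀ l, S.map (g l) ≤ T := by
        intro l y hy
        rcases Submodule.mem_map.mp hy with ⟨m, hm, rfl⟩
        rcases Submodule.mem_map.mp hm with ⟨v, hv, rfl⟩
        rcases Submodule.mem_inf.mp hv with ⟨hvP, hvK⟩
        refine Submodule.mem_map.mpr ⟨LinearMap.lTensor X (g l) v, Submodule.mem_inf.mpr ⟨?_, ?_⟩, ?_⟩
        · exact hPQ l (Submodule.mem_map_of_mem hvP)
        · apply (memK' (j+1) _).mpr
          intro i hi
          have h1 : cM i v = 0 := (memK (j+1) v).mp hvK i hi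
          show coordMap (F := F) b i (LinearMap.lTensor X (g l) v) = 0
          rw [coordMap_lTensor_apply]
          have h2 : coordMap (F := F) b i v = 0 := h1
          rw [h2, map_zero]
        · exact coordMap_lTensor_apply (F := F) b ⟨j, hj⟩ (g l) v
      have hlayer := hg S T layer
      have ihj := ih (by omega)
      calc finrank F (P ⊓ K (j+1) : Submodule F _) * q
          = finrank F S * q + finrank F (P ⊓ K j : Submodule F _) * q := by
            rw [rankM, Nat.add_mul]
        _ ≤ p * finrank F T + p * finrank F (Q ⊓ K' j : Submodule F _) :=
            Nat.add_le_add hlayer ihj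
        _ = p * finrank F (Q ⊓ K' (j+1) : Submodule F _) := by
            rw [rankN, Nat.mul_add]
  have hfin := main n (le_refl n)
  rw [Ktop, K'top, inf_top_eq, inf_top_eq] at hfin
  exact hfin

theorem slopeBound_rTensor [FiniteDimensional F X] [FiniteDimensional F M]
    [FiniteDimensional F N] (g : ι → M →ₗ[F] N) (p q : ℕ)
    (hg : SlopeBound (F := F) p q g) :
    SlopeBound (F := F) p q (fun l => LinearMap.rTensor X (g l)) := by
  intro P Q hPQ
  have key : ∀ l, (LinearMap.lTensor X (g l)) ∘ₗ (TensorProduct.comm F M X).toLinearMap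
      = (TensorProduct.comm F N X).toLinearMap ∘ₗ (LinearMap.rTensor X (g l)) := by
    intro l
    apply TensorProduct.ext'
    intro m x
    simp
  have hPQ' : ∀ l,
      (P.map (TensorProduct.comm F M X).toLinearMap).map (LinearMap.lTensor X (g l))
      ≤ Q.map (TensorProduct.comm F N X).toLinearMap := by
    intro l
    rw [← Submodule.map_comp, key l, Submodule.map_comp]
    exact Submodule.map_mono (hPQ l)
  have hmain := slopeBound_lTensor (F := F) g p q hg
    (P.map (TensorProduct.comm F M X).toLinearMap)
    (Q.map (TensorProduct.comm F N X).toLinearMap) hPQ'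
  rwa [LinearEquiv.finrank_map_eq (TensorProduct.comm F M X) P,
    LinearEquiv.finrank_map_eq (TensorProduct.comm F N X) Q] at hmain

end SlopeBound

/-- Semistability gives the abstract slope bound (degenerate pairs included). -/
lemma Semistable.slopeBound {ι U V : Type*} [AddCommGroup U] [Module F U]
    [AddCommGroup V] [Module F V] {f : ι → U →ₗ[F] V}
    (hf : Semistable F f) : SlopeBound (F := F) (finrank F U) (finrank F V) f := by
  intro P Q h
  by_cases hP : P = ⊥
  · rw [hP, finrank_bot]
    simp
  · exact hf P Q h (fun hc => hP hc.1)

/-- the tensor product of two semistable Kronecker-quiver representations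
(with maps `f_i ⊗ f'_{i'}`) is semistable. -/
theorem statement12 (F : Type) [Field F] (k k' : ℕ) (U V U' V' : Type)
    [AddCommGroup U] [Module F U] [AddCommGroup V] [Module F V]
    [AddCommGroup U'] [Module F U'] [AddCommGroup V'] [Module F V']
    [FiniteDimensional F U] [FiniteDimensional F V]
    [FiniteDimensional F U'] [FiniteDimensional F V']
    (f : Fin k → U →ₗ[F] V) (f' : Fin k' → U' →ₗ[F] V')
    (hf : Semistable F f) (hf' : Semistable F f') :
    Semistable F (fun p : Fin k × Fin k' =>
      TensorProduct.map (f p.1) (f' p.2) :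
        Fin k × Fin k' → TensorProduct F U U' →ₗ[F] TensorProduct F V V') := by
  intro W Z hmap _hne
  -- intermediate subspace in `U ⊗ V'`
  set Y : Submodule F (TensorProduct F U V') :=
    ⨅ l : Fin k, Z.comap (LinearMap.rTensor V' (f l)) with hY
  have hWY : ∀ l' : Fin k', W.map (LinearMap.lTensor U (f' l')) ≤ Y := by
    intro l'
    refine le_iInf fun l => ?_
    rw [← Submodule.map_le_iff_le_comap, ← Submodule.map_comp,
      LinearMap.rTensor_comp_lTensor]
    exact hmap (l, l')
  have h2 : finrank F W * finrank F V' ≤ finrank F U' * finrank F Y :=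
    slopeBound_lTensor (F := F) f' _ _ hf'.slopeBound W Y hWY
  have hYZ : ∀ l : Fin k, Y.map (LinearMap.rTensor V' (f l)) ≤ Z := by
    intro l
    rw [Submodule.map_le_iff_le_comap]
    exact iInf_le _ l
  have h3 : finrank F Y * finrank F V ≤ finrank F U * finrank F Z :=
    slopeBound_rTensor (F := F) f _ _ hf.slopeBound Y Z hYZ
  rw [Module.finrank_tensorProduct, Module.finrank_tensorProduct]
  calc finrank F W * (finrank F V * finrank F V')
      = (finrank F W * finrank F V') * finrank F V := by ring
    _ ≤ (finrank F U' * finrank F Y) * finrank F V := Nat.mul_le_mul_right _ h2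
    _ = finrank F U' * (finrank F Y * finrank F V) := by ring
    _ ≤ finrank F U' * (finrank F U * finrank F Z) := Nat.mul_le_mul_left _ h3
    _ = finrank F U * finrank F U' * finrank F Z := by ring


end Paper
end

section
/- Let K/F be a field extension and (U, V; f_1,…,f_k) a semistable representation of the k-arrow Kronecker quiver over F. Then the base-changed representation (K⊗_F U, K⊗_F V; id_K⊗f_1,…,id_K⊗f_k) over K is semistable. -/
/-!
Failure of semistability over a field is witnessed by a solution of a system of polynomial
equations with coefficients in `F`: a basis of a destabilizing subspace, a left inverse of it, and
the matrices expressing the images of the basis vectors in a basis of a small target subspace.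
A solution in `K` lies in a finitely generated `F`-subalgebra of `K`; reducing it modulo a maximal
ideal gives, by Zariski's lemma, a solution in a finite extension `L/F`. Over `F`, however,
`L ⊗[F] U` is a direct sum of `[L : F]` copies of `U`, and the bound "every subrepresentation has
slope at most `μ`" passes to direct sums; so an `L`-subrepresentation of slope `> μ` cannot exist.
-/

open scoped BigOperators
open Module

open scoped TensorProduct

section LinearAlgebra

variable {F : Type*} [Field F] {U U₂ : Type*} [AddCommGroup U] [Module F U]
  [AddCommGroup U₂] [Module F U₂]

theorem Submodule.finrank_comap_inl_add_finrank_map_snd [FiniteDimensional F U]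
    [FiniteDimensional F U₂] (W : Submodule F (U × U₂)) :
    finrank F (W.comap (LinearMap.inl F U U₂)) + finrank F (W.map (LinearMap.snd F U U₂)) =
      finrank F W := by
  have hker : (LinearMap.ker ((LinearMap.snd F U U₂).domRestrict W)).map W.subtype =
      (W.comap (LinearMap.inl F U U₂)).map (LinearMap.inl F U U₂) := by
    rw [LinearMap.ker_domRestrict, Submodule.map_comap_subtype, Submodule.map_comap_eq,
      LinearMap.ker_snd, inf_comm]
  have hfinrank := congrArg (fun S : Submodule F (U × U₂) => finrank F S) hker
  simp only [Submodule.finrank_map_subtype_eq,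
    (Submodule.equivMapOfInjective _ LinearMap.inl_injective _).finrank_eq.symm] at hfinrank
  rw [← LinearMap.finrank_range_add_finrank_ker ((LinearMap.snd F U U₂).domRestrict W),
    LinearMap.range_domRestrict, hfinrank, add_comm]

theorem Submodule.finrank_restrictScalars (L : Type*) [Field L] [Algebra F L] [Module L U]
    [IsScalarTower F L U] (U' : Submodule L U) :
    finrank F (U'.restrictScalars F) = finrank F L * finrank L U' := by
  rw [((Submodule.restrictScalarsEquiv F L U U').restrictScalars F).finrank_eq,
    Module.finrank_mul_finrank]

noncomputable def Module.Basis.tensorEquivPi {L : Type*} [Field L] [Algebra F L] {n : ℕ}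
    (b : Basis (Fin n) F L) (U : Type*) [AddCommGroup U] [Module F U] :
    L ⊗[F] U ≃ₗ[F] (Fin n → U) :=
  TensorProduct.congr b.equivFun (.refl F U) ≪≫ₗ TensorProduct.comm F _ U ≪≫ₗ
    TensorProduct.piScalarRight F F U (Fin n)

theorem Module.Basis.tensorEquivPi_tmul {L : Type*} [Field L] [Algebra F L] {n : ℕ}
    (b : Basis (Fin n) F L) (x : L) (u : U) :
    b.tensorEquivPi U (x ⊗ₜ u) = fun i => b.repr x i • u := by
  simp [Module.Basis.tensorEquivPi]

end LinearAlgebra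

namespace Paper

section SlopeBounded

variable {F : Type*} [Field F] {ι U V U₂ V₂ : Type*} [AddCommGroup U] [Module F U]
  [AddCommGroup V] [Module F V] [AddCommGroup U₂] [Module F U₂] [AddCommGroup V₂] [Module F V₂]

/-- Unlike `Semistable`, the reference slope `p / q` is a parameter, which makes the condition
additive over direct sums. -/
def SlopeBounded (F : Type*) [Field F] {ι U V : Type*} [AddCommGroup U] [Module F U]
    [AddCommGroup V] [Module F V] (f : ι → U →ₗ[F] V) (p q : ℕ) : Prop :=
  ∀ (U' : Submodule F U) (V' : Submodule F V),
    (∀ l, U'.map (f l) ≤ V') → finrank F U' * q ≤ p * finrank F V'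

theorem semistable_iff_slopeBounded (f : ι → U →ₗ[F] V) :
    Semistable F f ↔ SlopeBounded F f (finrank F U) (finrank F V) := by
  refine ⟨fun h U' V' hmap => ?_, fun h U' V' hmap _ => h U' V' hmap⟩
  by_cases hbot : U' = ⊥ ∧ V' = ⊥
  · obtain ⟨rfl, rfl⟩ := hbot
    simp
  · exact h U' V' hmap hbot

theorem SlopeBounded.of_linearEquiv {f : ι → U →ₗ[F] V} {g : ι → U₂ →ₗ[F] V₂} {p q : ℕ}
    (eU : U ≃ₗ[F] U₂) (eV : V ≃ₗ[F] V₂) (hcomm : ∀ l x, g l (eU x) = eV (f l x))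
    (h : SlopeBounded F f p q) : SlopeBounded F g p q := by
  intro U' V' hmap
  have hmap' : ∀ l, (U'.comap eU.toLinearMap).map (f l) ≤ V'.comap eV.toLinearMap := by
    rintro l _ ⟨x, hx, rfl⟩
    simpa [← hcomm] using hmap l ⟨eU x, hx, rfl⟩
  have := h _ _ hmap'
  rwa [Submodule.comap_equiv_eq_map_symm, Submodule.comap_equiv_eq_map_symm,
    LinearEquiv.finrank_map_eq, LinearEquiv.finrank_map_eq] at this

theorem slopeBounded_congr {f : ι → U →ₗ[F] V} {g : ι → U₂ →ₗ[F] V₂} {p q : ℕ}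
    (eU : U ≃ₗ[F] U₂) (eV : V ≃ₗ[F] V₂) (hcomm : ∀ l x, g l (eU x) = eV (f l x)) :
    SlopeBounded F f p q ↔ SlopeBounded F g p q :=
  ⟨.of_linearEquiv eU eV hcomm, .of_linearEquiv eU.symm eV.symm fun l y => by
    rw [eV.eq_symm_apply, ← hcomm, eU.apply_symm_apply]⟩

theorem SlopeBounded.prodMap [FiniteDimensional F U] [FiniteDimensional F U₂]
    [FiniteDimensional F V] [FiniteDimensional F V₂]
    {f : ι → U →ₗ[F] V} {g : ι → U₂ →ₗ[F] V₂} {p q : ℕ}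
    (hf : SlopeBounded F f p q) (hg : SlopeBounded F g p q) :
    SlopeBounded F (fun l => (f l).prodMap (g l)) p q := by
  intro W W' hmap
  have h₁ := hf (W.comap (LinearMap.inl F U U₂)) (W'.comap (LinearMap.inl F V V₂)) <| by
    rintro l _ ⟨x, hx, rfl⟩
    simpa using hmap l ⟨_, hx, rfl⟩
  have h₂ := hg (W.map (LinearMap.snd F U U₂)) (W'.map (LinearMap.snd F V V₂)) <| by
    rintro l _ ⟨_, ⟨w, hw, rfl⟩, rfl⟩
    exact ⟨_, hmap l ⟨w, hw, rfl⟩, rfl⟩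
  rw [← W.finrank_comap_inl_add_finrank_map_snd, ← W'.finrank_comap_inl_add_finrank_map_snd]
  linarith

theorem SlopeBounded.compLeft [FiniteDimensional F U] [FiniteDimensional F V]
    {f : ι → U →ₗ[F] V} {p q : ℕ} (hf : SlopeBounded F f p q) (n : ℕ) :
    SlopeBounded F (fun l => (f l).compLeft (Fin n)) p q := by
  induction n with
  | zero =>
    intro U' V' _
    have : finrank F U' = 0 := Nat.eq_zero_of_le_zero <|
      (Submodule.finrank_le U').trans_eq (Module.finrank_zero_of_subsingleton (M := Fin 0 → U))
    simp [this]
  | succ n ih =>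
    refine (hf.prodMap ih).of_linearEquiv (Fin.consLinearEquiv F fun _ => U)
      (Fin.consLinearEquiv F fun _ => V) fun l x => ?_
    funext i
    cases i using Fin.cases <;> simp

theorem SlopeBounded.baseChange_of_finite (L : Type*) [Field L] [Algebra F L]
    [FiniteDimensional F L] [FiniteDimensional F U] [FiniteDimensional F V]
    {f : ι → U →ₗ[F] V} {p q : ℕ} (hf : SlopeBounded F f p q) :
    SlopeBounded L (fun l => (f l).baseChange L) p q := by
  intro U' V' hmap
  let b := Module.finBasis F L
  have hcomm (l) (x : L ⊗[F] U) : b.tensorEquivPi V ((f l).baseChange L x) =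
      (f l).compLeft (Fin (finrank F L)) (b.tensorEquivPi U x) := by
    induction x using TensorProduct.induction_on with
    | zero => simp
    | tmul x u => ext i; simp [Module.Basis.tensorEquivPi_tmul]
    | add x y hx hy => simp only [map_add, hx, hy]
  have hL := (hf.compLeft (finrank F L)).of_linearEquiv (b.tensorEquivPi U).symm
    (b.tensorEquivPi V).symm (g := fun l => ((f l).baseChange L).restrictScalars F)
    fun l x => by simp [LinearEquiv.eq_symm_apply, hcomm]
  have := hL (U'.restrictScalars F) (V'.restrictScalars F) fun l => hmap l
  rw [Submodule.finrank_restrictScalars, Submodule.finrank_restrictScalars] at this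
  have hpos : 0 < finrank F L := finrank_pos
  nlinarith

end SlopeBounded

section Matrices

variable {ι : Type*} {m p : ℕ}

/-- A witness, meaningful over any commutative ring, that `x ↦ B l *ᵥ x` is not semistable:
the `a` columns of `X` are independent (`Y * X = 1`), their images lie in the span of the `b`
columns of `W`, and `a / b > m / p`. Being a system of polynomial equations, it can be pushed along
ring homomorphisms. -/
def HasDestabilizingMatrices {R : Type*} [CommRing R] (B : ι → Matrix (Fin p) (Fin m) R) : Prop :=
  ∃ (a b : ℕ) (X : Matrix (Fin m) (Fin a) R) (Y : Matrix (Fin a) (Fin m) R)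
    (W : Matrix (Fin p) (Fin b) R) (C : ι → Matrix (Fin b) (Fin a) R),
    m * b < a * p ∧ Y * X = 1 ∧ ∀ l, B l * X = W * C l

variable {K : Type*} [Field K]

theorem slopeBounded_toMatrix_iff {U V : Type*} [AddCommGroup U] [Module K U]
    [AddCommGroup V] [Module K V] (bU : Basis (Fin m) K U) (bV : Basis (Fin p) K V)
    (f : ι → U →ₗ[K] V) {p' q' : ℕ} :
    SlopeBounded K (fun l => (LinearMap.toMatrix bU bV (f l)).mulVecLin) p' q' ↔
      SlopeBounded K f p' q' :=
  (slopeBounded_congr bU.equivFun bV.equivFun fun l x => by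
    simp [LinearMap.toMatrix_mulVec_repr]).symm

theorem HasDestabilizingMatrices.not_slopeBounded {B : ι → Matrix (Fin p) (Fin m) K}
    (h : HasDestabilizingMatrices B) : ¬ SlopeBounded K (fun l => (B l).mulVecLin) m p := by
  obtain ⟨a, b, X, Y, W, C, hab, hYX, hBX⟩ := h
  intro hB
  have hX : Function.Injective X.mulVecLin := by
    refine Function.LeftInverse.injective (g := Y.mulVecLin) fun x => ?_
    simp [Matrix.mulVec_mulVec, hYX]
  have hmap : ∀ l, (LinearMap.range X.mulVecLin).map (B l).mulVecLin ≤
      LinearMap.range W.mulVecLin := by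
    rintro l _ ⟨_, ⟨x, rfl⟩, rfl⟩
    exact ⟨(C l).mulVec x, by simp [Matrix.mulVec_mulVec, hBX]⟩
  have hdim := hB _ _ hmap
  rw [LinearMap.finrank_range_of_inj hX, Module.finrank_fin_fun] at hdim
  have hW : finrank K (LinearMap.range W.mulVecLin) ≤ b :=
    (LinearMap.finrank_range_le _).trans_eq (Module.finrank_fin_fun K)
  nlinarith

theorem hasDestabilizingMatrices_of_not_slopeBounded {B : ι → Matrix (Fin p) (Fin m) K}
    (h : ¬ SlopeBounded K (fun l => (B l).mulVecLin) m p) : HasDestabilizingMatrices B := by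
  simp only [SlopeBounded, not_forall, not_le] at h
  obtain ⟨U', V', hmap, hlt⟩ := h
  let iU : (Fin (finrank K U') → K) →ₗ[K] (Fin m → K) :=
    U'.subtype ∘ₗ (Module.finBasis K U').equivFun.symm.toLinearMap
  let iV : (Fin (finrank K V') → K) →ₗ[K] (Fin p → K) :=
    V'.subtype ∘ₗ (Module.finBasis K V').equivFun.symm.toLinearMap
  have hiU : Function.Injective iU := U'.injective_subtype.comp (LinearEquiv.injective _)
  obtain ⟨πU, hπU⟩ := iU.exists_leftInverse_of_injective (LinearMap.ker_eq_bot.mpr hiU)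
  have hmem (l) (x) : (B l).mulVecLin (iU x) ∈ V' :=
    hmap l ⟨iU x, ((Module.finBasis K U').equivFun.symm x).2, rfl⟩
  let c (l) : (Fin (finrank K U') → K) →ₗ[K] (Fin (finrank K V') → K) :=
    (Module.finBasis K V').equivFun.toLinearMap ∘ₗ
      ((B l).mulVecLin ∘ₗ iU).codRestrict V' (hmem l)
  refine ⟨_, _, LinearMap.toMatrix' iU, LinearMap.toMatrix' πU, LinearMap.toMatrix' iV,
    fun l => LinearMap.toMatrix' (c l), hlt, ?_, fun l => ?_⟩
  · rw [← LinearMap.toMatrix'_comp, hπU, LinearMap.toMatrix'_id]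
  · have hc : iV ∘ₗ c l = (B l).mulVecLin ∘ₗ iU := by
      ext x
      simp [iV, c]
    rw [← LinearMap.toMatrix'_comp, hc, LinearMap.toMatrix'_comp]
    exact congrArg (· * _) (LinearMap.toMatrix'_toLin' (B l)).symm

theorem slopeBounded_mulVecLin_iff (B : ι → Matrix (Fin p) (Fin m) K) :
    SlopeBounded K (fun l => (B l).mulVecLin) m p ↔ ¬ HasDestabilizingMatrices B :=
  ⟨fun hB h => h.not_slopeBounded hB, not_imp_comm.mp hasDestabilizingMatrices_of_not_slopeBounded⟩

variable {F : Type*} [Field F] {A : ι → Matrix (Fin p) (Fin m) F}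

theorem HasDestabilizingMatrices.of_algHom {R S : Type*} [CommRing R] [CommRing S] [Algebra F R]
    [Algebra F S] (φ : R →ₐ[F] S)
    (h : HasDestabilizingMatrices fun l => (A l).map (algebraMap F R)) :
    HasDestabilizingMatrices fun l => (A l).map (algebraMap F S) := by
  obtain ⟨a, b, X, Y, W, C, hab, hYX, hAX⟩ := h
  let ψ : R →+* S := φ
  refine ⟨a, b, X.map ψ, Y.map ψ, W.map ψ, fun l => (C l).map ψ, hab, ?_, fun l => ?_⟩
  · rw [← Matrix.map_mul, hYX, Matrix.map_one _ (map_zero ψ) (map_one ψ)]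
  · have hA : (A l).map (algebraMap F S) = ((A l).map (algebraMap F R)).map ψ := by
      ext; simp [ψ]
    beta_reduce
    rw [hA, ← Matrix.map_mul, hAX, Matrix.map_mul]

end Matrices

section Descent

universe v

variable {ι : Type*} [Finite ι] {m p : ℕ} {F : Type*} [Field F] {A : ι → Matrix (Fin p) (Fin m) F}

theorem HasDestabilizingMatrices.exists_fg {R : Type*} [CommRing R] [Algebra F R]
    (h : HasDestabilizingMatrices fun l => (A l).map (algebraMap F R)) :
    ∃ S : Subalgebra F R, S.FG ∧ HasDestabilizingMatrices fun l => (A l).map (algebraMap F S) := by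
  obtain ⟨a, b, X, Y, W, C, hab, hYX, hAX⟩ := h
  let entries {r c : ℕ} (M : Matrix (Fin r) (Fin c) R) : Set R :=
    Set.range fun ij : Fin r × Fin c => M ij.1 ij.2
  let s : Set R := entries X ∪ entries Y ∪ entries W ∪ ⋃ l, entries (C l)
  let S := Algebra.adjoin F s
  have hfin : s.Finite := by
    exact ((Set.finite_range _).union (Set.finite_range _)).union (Set.finite_range _) |>.union
      (Set.finite_iUnion fun _ => Set.finite_range _)
  let ψ : S →+* R := S.val
  let lift {r c : ℕ} (M : Matrix (Fin r) (Fin c) R) (hM : ∀ i j, M i j ∈ s) :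
      Matrix (Fin r) (Fin c) S :=
    Matrix.of fun i j => ⟨M i j, Algebra.subset_adjoin (hM i j)⟩
  have hinj {r c : ℕ} : Function.Injective fun M : Matrix (Fin r) (Fin c) S => M.map ψ :=
    Matrix.map_injective Subtype.val_injective
  refine ⟨S, Subalgebra.fg_def.mpr ⟨s, hfin, rfl⟩, a, b,
    lift X fun i j => .inl (.inl (.inl ⟨(i, j), rfl⟩)),
    lift Y fun i j => .inl (.inl (.inr ⟨(i, j), rfl⟩)),
    lift W fun i j => .inl (.inr ⟨(i, j), rfl⟩),
    fun l => lift (C l) fun i j => .inr (Set.mem_iUnion.mpr ⟨l, (i, j), rfl⟩), hab, ?_, fun l => ?_⟩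
  · refine hinj ?_
    simp only [Matrix.map_mul, Matrix.map_one _ (map_zero ψ) (map_one ψ)]
    exact hYX
  · refine hinj ?_
    simp only [Matrix.map_mul]
    exact hAX l

theorem HasDestabilizingMatrices.exists_finiteDimensional {K : Type v} [Field K] [Algebra F K]
    (h : HasDestabilizingMatrices fun l => (A l).map (algebraMap F K)) :
    ∃ (L : Type v) (_ : Field L) (_ : Algebra F L), FiniteDimensional F L ∧
      HasDestabilizingMatrices fun l => (A l).map (algebraMap F L) := by
  obtain ⟨S, hS, hSA⟩ := h.exists_fg
  have := (Subalgebra.fg_iff_finiteType S).mp hS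
  obtain ⟨M, hM⟩ := Ideal.exists_maximal S
  let := Ideal.Quotient.field M
  -- Zariski's lemma: a field that is finitely generated as an `F`-algebra is finite over `F`.
  exact ⟨S ⧸ M, _, _, finite_of_finite_type_of_isJacobsonRing F _,
    hSA.of_algHom (Ideal.Quotient.mkₐ F M)⟩

end Descent

/-- base change along a field extension `K/F` preserves semistability of
Kronecker-quiver representations. -/
theorem statement13 (F K : Type) [Field F] [Field K] [Algebra F K] (k : ℕ) (U V : Type)
    [AddCommGroup U] [Module F U] [AddCommGroup V] [Module F V]
    [FiniteDimensional F U] [FiniteDimensional F V]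
    (f : Fin k → U →ₗ[F] V) (hf : Semistable F f) :
    Semistable K (fun l => LinearMap.baseChange K (f l)) := by
  let bU := Module.finBasis F U
  let bV := Module.finBasis F V
  have hmat (L : Type) [Field L] [Algebra F L] :
      SlopeBounded L (fun l => (f l).baseChange L) (finrank F U) (finrank F V) ↔
        ¬ HasDestabilizingMatrices fun l =>
          (LinearMap.toMatrix bU bV (f l)).map (algebraMap F L) := by
    rw [← slopeBounded_toMatrix_iff (Algebra.TensorProduct.basis L bU)
      (Algebra.TensorProduct.basis L bV)]
    simp only [LinearMap.toMatrix_baseChange]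
    exact slopeBounded_mulVecLin_iff _
  rw [semistable_iff_slopeBounded] at hf ⊢
  rw [finrank_eq_card_basis (Algebra.TensorProduct.basis K bU),
    finrank_eq_card_basis (Algebra.TensorProduct.basis K bV), Fintype.card_fin, Fintype.card_fin,
    hmat]
  intro hK
  obtain ⟨L, _, _, _, hL⟩ := hK.exists_finiteDimensional
  exact (hmat L).mp (hf.baseChange_of_finite L) hL

end Paper
end

section
/- Let I_1,…,I_d be finite sets, Φ ⊆ I_1×⋯×I_d a nonempty subset, and θ ∈ ℝ_{≥0}^d with θ_1+⋯+θ_d = 1. For a probability distribution P on Φ, define h_P(α) = Σ_{κ=1}^d θ_κ·log₂(1/P_κ(α_κ)) for α ∈ Φ, with the conventions that a term with θ_κ = 0 equals 0 and a term with θ_κ > 0 and P_κ(α_κ) = 0 equals +∞. Then P maximizes the function Q ↦ Σ_{κ=1}^d θ_κ·H(Q_κ) over all probability distributions Q on Φ if and only if every α ∈ Φ with P(α) > 0 satisfies h_P(α) ≥ h_P(β) for all β ∈ Φ. -/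
/-! Write `h_P(γ) = ∑ κ, θ_κ · (-log₂ P_κ(γ_κ))` (`hReal`), the finite form of `hFun`. The objective
at `P` equals `∑ γ, P γ · h_P(γ)`, and by Gibbs' inequality the objective at any `Q` is at most
`∑ γ, Q γ · h_P(γ)`, provided `Q` charges only points where `h_P` is finite. So if `h_P` takes its
maximum on `Φ` at every point of the support of `P`, the objective at `Q` is at most that maximum,
which is the objective at `P`.

Conversely, if `P α > 0` and `h_P(α) < h_P(β)`, let `Q_t` move mass `t` from `α` to `β`. Gibbs'
inequality with `Q_t` as reference shows that the objective gains at least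
`t · (h_{Q_t}(β) - h_{Q_t}(α))`, and this is positive for small `t > 0` since `h_{Q_t}(α) → h_P(α)`,
while `h_{Q_t}(β)` tends to `h_P(β)`, or to `+∞` when `h_P(β) = ∞`. -/

open scoped BigOperators

namespace Paper

/-- The marginal of a distribution on `∏ κ, ι κ` at coordinate `κ`. -/
noncomputable def marg {d : ℕ} (ι : Fin d → Type) [∀ κ, Fintype (ι κ)]
    [∀ κ, DecidableEq (ι κ)] (P : ((κ : Fin d) → ι κ) → ℝ) (κ : Fin d) (i : ι κ) : ℝ :=
  ∑ α : (κ' : Fin d) → ι κ', if α κ = i then P α else 0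

/-- `h_P(α) = ∑ κ, θ_κ · log₂(1/P_κ(α_κ))`, valued in `EReal`, with the conventions that a
term with `θ_κ = 0` is `0` and a term with `θ_κ ≠ 0` and `P_κ(α_κ) = 0` is `+∞`. -/
noncomputable def hFun {d : ℕ} (ι : Fin d → Type) [∀ κ, Fintype (ι κ)]
    [∀ κ, DecidableEq (ι κ)] (θ : Fin d → ℝ) (P : ((κ : Fin d) → ι κ) → ℝ)
    (α : (κ : Fin d) → ι κ) : EReal :=
  ∑ κ, if θ κ = 0 then (0 : EReal)
    else if marg ι P κ (α κ) = 0 then (⊤ : EReal)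
    else ((θ κ * Real.logb 2 (1 / marg ι P κ (α κ)) : ℝ) : EReal)

open Finset Filter Topology

section Marginal

variable {d : ℕ} {ι : Fin d → Type} [∀ κ, Fintype (ι κ)] [∀ κ, DecidableEq (ι κ)]
  {P : ((κ : Fin d) → ι κ) → ℝ}

lemma marg_eq_sum_mul (P : ((κ : Fin d) → ι κ) → ℝ) (κ : Fin d) (i : ι κ) :
    marg ι P κ i = ∑ α, P α * if α κ = i then 1 else 0 := by
  simp only [marg, mul_ite, mul_one, mul_zero]

lemma sum_marg_mul (P : ((κ : Fin d) → ι κ) → ℝ) (κ : Fin d) (f : ι κ → ℝ) :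
    ∑ i, marg ι P κ i * f i = ∑ α, P α * f (α κ) := by
  simp only [marg, sum_mul, ite_mul, zero_mul]
  rw [sum_comm]
  simp

lemma sum_marg (P : ((κ : Fin d) → ι κ) → ℝ) (κ : Fin d) : ∑ i, marg ι P κ i = ∑ α, P α := by
  simpa using sum_marg_mul P κ fun _ => 1

lemma marg_nonneg (hP : ∀ α, 0 ≤ P α) (κ : Fin d) (i : ι κ) : 0 ≤ marg ι P κ i :=
  sum_nonneg fun α _ => by split_ifs <;> simp [hP α]

lemma le_marg (hP : ∀ α, 0 ≤ P α) (κ : Fin d) (α : (κ : Fin d) → ι κ) :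
    P α ≤ marg ι P κ (α κ) := by
  unfold marg
  simpa using single_le_sum (f := fun β : (κ : Fin d) → ι κ => if β κ = α κ then P β else 0)
    (fun β _ => by split_ifs <;> simp [hP β]) (mem_univ α)

lemma marg_le_one (hP0 : ∀ α, 0 ≤ P α) (hP1 : ∑ α, P α = 1) (κ : Fin d) (i : ι κ) :
    marg ι P κ i ≤ 1 :=
  (single_le_sum (fun j _ => marg_nonneg hP0 κ j) (mem_univ i)).trans_eq
    (by rw [sum_marg, hP1])

lemma exists_ne_zero_of_marg_ne_zero {κ : Fin d} {i : ι κ} (h : marg ι P κ i ≠ 0) :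
    ∃ α : (κ : Fin d) → ι κ, α κ = i ∧ P α ≠ 0 := by
  obtain ⟨α, -, hα⟩ := exists_ne_zero_of_sum_ne_zero h
  by_cases hi : α κ = i
  · exact ⟨α, hi, by simpa [hi] using hα⟩
  · simp [hi] at hα

end Marginal

section Transfer

variable {X : Type*} [DecidableEq X] {P : X → ℝ} {α β : X}

noncomputable def transfer (P : X → ℝ) (α β : X) (t : ℝ) : X → ℝ :=
  P + t • (Pi.single β 1 - Pi.single α 1)

lemma transfer_zero (P : X → ℝ) (α β : X) : transfer P α β 0 = P := by
  simp [transfer]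

lemma le_transfer_add (P : X → ℝ) (α β : X) {t : ℝ} (ht : 0 ≤ t) (γ : X) :
    P γ ≤ transfer P α β t γ + if γ = α then t else 0 := by
  simp only [transfer, Pi.add_apply, Pi.smul_apply, Pi.sub_apply, Pi.single_apply, smul_eq_mul]
  split_ifs <;> linarith

lemma transfer_nonneg (hP : ∀ γ, 0 ≤ P γ) {t : ℝ} (ht : 0 ≤ t) (htα : t ≤ P α)
    (γ : X) : 0 ≤ transfer P α β t γ := by
  have := le_transfer_add P α β ht γ
  split_ifs at this with hγ
  · subst hγ; linarith
  · linarith [hP γ]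

lemma transfer_pos (hP : ∀ γ, 0 ≤ P γ) {t : ℝ} (ht : 0 ≤ t) (htα : t < P α)
    {γ : X} (hγ : P γ ≠ 0) : 0 < transfer P α β t γ := by
  have := le_transfer_add P α β ht γ
  split_ifs at this with hγα
  · subst hγα; linarith
  · linarith [(hP γ).lt_of_ne' hγ]

lemma eq_or_eq_or_ne_zero_of_transfer_ne_zero {t : ℝ} {γ : X}
    (h : transfer P α β t γ ≠ 0) : γ = β ∨ γ = α ∨ P γ ≠ 0 := by
  by_contra! hγ
  simp [transfer, hγ.1, hγ.2.1, hγ.2.2] at h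

variable [Fintype X]

lemma sum_transfer_mul (P : X → ℝ) (α β : X) (t : ℝ) (f : X → ℝ) :
    ∑ γ, transfer P α β t γ * f γ = ∑ γ, P γ * f γ + t * (f β - f α) := by
  simp [transfer, add_mul, sub_mul, sum_add_distrib, sum_sub_distrib, Pi.single_apply, mul_sub]

lemma sum_transfer (P : X → ℝ) (α β : X) (t : ℝ) : ∑ γ, transfer P α β t γ = ∑ γ, P γ := by
  simpa using sum_transfer_mul P α β t fun _ => 1

end Transfer

open Real in
lemma neg_mul_logb_le {x y : ℝ} (hx : 0 ≤ x) (hy : 0 ≤ y) (hxy : x ≠ 0 → y ≠ 0) :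
    -(x * logb 2 x) ≤ x * -logb 2 y + (y - x) / log 2 := by
  have hlog2 : 0 < log 2 := log_pos one_lt_two
  rcases hx.eq_or_lt with rfl | hx
  · simp only [zero_mul, neg_zero, sub_zero, zero_add]
    positivity
  have hy : 0 < y := hy.lt_of_ne' (hxy hx.ne')
  have key : x * (log y - log x) ≤ y - x := by
    calc x * (log y - log x) = x * log (y / x) := by rw [log_div hy.ne' hx.ne']
      _ ≤ x * (y / x - 1) := mul_le_mul_of_nonneg_left (log_le_sub_one_of_pos (by positivity)) hx.le
      _ = y - x := by field_simp
  have : -(x * logb 2 x) - x * -logb 2 y = x * (log y - log x) / log 2 := by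
    simp only [logb]; ring
  linarith [div_le_div_of_nonneg_right key hlog2.le]

lemma entropy_le_sum_mul_neg_logb {Y : Type*} [Fintype Y] {q p : Y → ℝ} (hq : ∀ i, 0 ≤ q i)
    (hp : ∀ i, 0 ≤ p i) (hqp : ∀ i, q i ≠ 0 → p i ≠ 0) (hsum : ∑ i, p i ≤ ∑ i, q i) :
    entropy q ≤ ∑ i, q i * -Real.logb 2 (p i) :=
  calc entropy q ≤ ∑ i, (q i * -Real.logb 2 (p i) + (p i - q i) / Real.log 2) :=
        sum_le_sum fun i _ => neg_mul_logb_le (hq i) (hp i) (hqp i)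
    _ = ∑ i, q i * -Real.logb 2 (p i) + (∑ i, p i - ∑ i, q i) / Real.log 2 := by
        rw [sum_add_distrib, ← sum_div, sum_sub_distrib]
    _ ≤ ∑ i, q i * -Real.logb 2 (p i) :=
        add_le_of_nonpos_right (div_nonpos_of_nonpos_of_nonneg (sub_nonpos.2 hsum)
          (Real.log_nonneg one_le_two))

lemma _root_.EReal.coe_finset_sum {α : Type*} (s : Finset α) (f : α → ℝ) :
    ((∑ i ∈ s, f i : ℝ) : EReal) = ∑ i ∈ s, (f i : EReal) :=
  map_sum (⟨⟨Real.toEReal, EReal.coe_zero⟩, EReal.coe_add⟩ : ℝ →+ EReal) f s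

lemma _root_.EReal.sum_eq_top {α : Type*} {s : Finset α} {f : α → EReal}
    (hf : ∀ i ∈ s, f i ≠ ⊥) {i : α} (hi : i ∈ s) (hfi : f i = ⊤) : ∑ j ∈ s, f j = ⊤ := by
  classical
  rw [← add_sum_erase s f hi, hfi]
  exact EReal.top_add_of_ne_bot <| sum_induction f (· ≠ ⊥)
    (fun a b ha hb => EReal.add_ne_bot_iff.2 ⟨ha, hb⟩) EReal.zero_ne_bot
    fun j hj => hf j (mem_of_mem_erase hj)

section Objective

variable {d : ℕ} (ι : Fin d → Type) [∀ κ, Fintype (ι κ)] [∀ κ, DecidableEq (ι κ)]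
  {θ : Fin d → ℝ}

noncomputable def hReal (θ : Fin d → ℝ) (P : ((κ : Fin d) → ι κ) → ℝ)
    (α : (κ : Fin d) → ι κ) : ℝ :=
  ∑ κ, θ κ * -Real.logb 2 (marg ι P κ (α κ))

variable {ι}

lemma hFun_eq_coe_hReal {P : ((κ : Fin d) → ι κ) → ℝ} {α : (κ : Fin d) → ι κ}
    (h : ∀ κ, θ κ ≠ 0 → marg ι P κ (α κ) ≠ 0) : hFun ι θ P α = hReal ι θ P α := by
  rw [hFun, hReal, EReal.coe_finset_sum]
  refine sum_congr rfl fun κ _ => ?_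
  by_cases hθ : θ κ = 0
  · simp [hθ]
  · rw [if_neg hθ, if_neg (h κ hθ), one_div, Real.logb_inv]

lemma hFun_eq_coe_hReal_of_pos {P : ((κ : Fin d) → ι κ) → ℝ} (hP : ∀ γ, 0 ≤ P γ)
    {γ : (κ : Fin d) → ι κ} (hγ : 0 < P γ) :
    hFun ι θ P γ = hReal ι θ P γ :=
  hFun_eq_coe_hReal fun κ _ => (hγ.trans_le (le_marg hP κ γ)).ne'

lemma hFun_eq_top {P : ((κ : Fin d) → ι κ) → ℝ} {α : (κ : Fin d) → ι κ} {κ : Fin d}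
    (hθ : θ κ ≠ 0) (hP : marg ι P κ (α κ) = 0) : hFun ι θ P α = ⊤ :=
  EReal.sum_eq_top
    (fun κ _ => by split_ifs <;> simp only [ne_eq, EReal.zero_ne_bot, top_ne_bot,
      EReal.coe_ne_bot, not_false_eq_true]) (mem_univ κ) (by simp [hθ, hP])

lemma sum_mul_hReal (Q R : ((κ : Fin d) → ι κ) → ℝ) :
    ∑ γ, Q γ * hReal ι θ R γ = ∑ κ, θ κ * ∑ i, marg ι Q κ i * -Real.logb 2 (marg ι R κ i) := by
  simp only [sum_marg_mul, hReal, mul_sum]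
  rw [sum_comm]
  exact sum_congr rfl fun _ _ => sum_congr rfl fun _ _ => by ring

lemma sum_mul_entropy_marg (P : ((κ : Fin d) → ι κ) → ℝ) :
    ∑ κ, θ κ * entropy (marg ι P κ) = ∑ γ, P γ * hReal ι θ P γ := by
  simp only [sum_mul_hReal, entropy, mul_neg]

lemma sum_mul_entropy_marg_le (hθ : ∀ κ, 0 ≤ θ κ) {Q R : ((κ : Fin d) → ι κ) → ℝ}
    (hQ : ∀ γ, 0 ≤ Q γ) (hR : ∀ γ, 0 ≤ R γ) (hsum : ∑ γ, R γ ≤ ∑ γ, Q γ)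
    (hsupp : ∀ γ, Q γ ≠ 0 → ∀ κ, θ κ ≠ 0 → marg ι R κ (γ κ) ≠ 0) :
    ∑ κ, θ κ * entropy (marg ι Q κ) ≤ ∑ γ, Q γ * hReal ι θ R γ := by
  rw [sum_mul_hReal]
  refine sum_le_sum fun κ _ => ?_
  rcases eq_or_ne (θ κ) 0 with hκ | hκ
  · simp [hκ]
  refine mul_le_mul_of_nonneg_left (entropy_le_sum_mul_neg_logb (marg_nonneg hQ κ)
    (marg_nonneg hR κ) (fun i hi => ?_) (by rwa [sum_marg, sum_marg])) (hθ κ)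
  obtain ⟨γ, rfl, hγ⟩ := exists_ne_zero_of_marg_ne_zero hi
  exact hsupp γ hγ κ hκ

end Objective

section Perturbation

variable {d : ℕ} {ι : Fin d → Type} [∀ κ, Fintype (ι κ)] [∀ κ, DecidableEq (ι κ)]
  {θ : Fin d → ℝ} {P : ((κ : Fin d) → ι κ) → ℝ} {α β : (κ : Fin d) → ι κ}

lemma marg_transfer (P : ((κ : Fin d) → ι κ) → ℝ) (α β : (κ : Fin d) → ι κ) (t : ℝ)
    (κ : Fin d) (i : ι κ) :
    marg ι (transfer P α β t) κ i
      = marg ι P κ i + t * ((if β κ = i then 1 else 0) - if α κ = i then 1 else 0) := by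
  simp only [marg_eq_sum_mul, sum_transfer_mul]

lemma continuousAt_hReal_transfer (P : ((κ : Fin d) → ι κ) → ℝ) (α β : (κ : Fin d) → ι κ)
    {γ : (κ : Fin d) → ι κ} (h : ∀ κ, θ κ ≠ 0 → marg ι P κ (γ κ) ≠ 0) :
    ContinuousAt (fun t => hReal ι θ (transfer P α β t) γ) 0 := by
  simp only [hReal, marg_transfer]
  refine tendsto_finsetSum _ fun κ _ => ?_
  by_cases hκ : θ κ = 0
  · simp only [hκ, zero_mul]
    exact continuousAt_const
  · exact continuousAt_const.mul ((ContinuousAt.logb (by fun_prop) (by simpa using h κ hκ)).neg)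

lemma tendsto_hReal_transfer_atTop (hθ : ∀ κ, 0 ≤ θ κ) (hP0 : ∀ γ, 0 ≤ P γ)
    (hP1 : ∑ γ, P γ = 1) (hα : 0 < P α) {κ : Fin d} (hθκ : θ κ ≠ 0)
    (hβ : marg ι P κ (β κ) = 0) :
    Tendsto (fun t => hReal ι θ (transfer P α β t) β) (𝓝[>] 0) atTop := by
  have hαβ : α κ ≠ β κ := fun h => (hα.trans_le (le_marg hP0 κ α)).ne' (h ▸ hβ)
  have hlog : Tendsto (fun t => θ κ * -Real.logb 2 t) (𝓝[>] 0) atTop :=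
    (tendsto_neg_atBot_atTop.comp (Real.tendsto_logb_nhdsGT_zero one_lt_two)).const_mul_atTop
      ((hθ κ).lt_of_ne' hθκ)
  refine tendsto_atTop_mono' _ ?_ hlog
  filter_upwards [Ioo_mem_nhdsGT hα] with t ht
  have hQ0 := transfer_nonneg (β := β) hP0 ht.1.le ht.2.le
  have hQ1 : ∑ γ, transfer P α β t γ = 1 := by rw [sum_transfer, hP1]
  calc θ κ * -Real.logb 2 t = θ κ * -Real.logb 2 (marg ι (transfer P α β t) κ (β κ)) := by
        simp [marg_transfer, hβ, hαβ]
    _ ≤ hReal ι θ (transfer P α β t) β :=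
        single_le_sum (fun κ _ => mul_nonneg (hθ κ) (neg_nonneg.2 (Real.logb_nonpos one_lt_two
          (marg_nonneg hQ0 κ _) (marg_le_one hQ0 hQ1 κ _)))) (mem_univ κ)

lemma eventually_hReal_transfer_lt (hθ : ∀ κ, 0 ≤ θ κ) (hP0 : ∀ γ, 0 ≤ P γ)
    (hP1 : ∑ γ, P γ = 1) (hα : 0 < P α) (hlt : hFun ι θ P α < hFun ι θ P β) :
    ∀ᶠ t in 𝓝[>] 0, hReal ι θ (transfer P α β t) α < hReal ι θ (transfer P α β t) β := by
  have hlim {γ} (h : ∀ κ, θ κ ≠ 0 → marg ι P κ (γ κ) ≠ 0) :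
      Tendsto (fun t => hReal ι θ (transfer P α β t) γ) (𝓝[>] 0) (𝓝 (hReal ι θ P γ)) := by
    simpa [transfer_zero] using
      (continuousAt_hReal_transfer P α β h).tendsto.mono_left nhdsWithin_le_nhds
  have hαlim := hlim fun κ _ => (hα.trans_le (le_marg hP0 κ α)).ne'
  rw [hFun_eq_coe_hReal_of_pos hP0 hα] at hlt
  by_cases hβ : ∀ κ, θ κ ≠ 0 → marg ι P κ (β κ) ≠ 0
  · rw [hFun_eq_coe_hReal hβ, EReal.coe_lt_coe_iff] at hlt
    exact hαlim.eventually_lt (hlim hβ) hlt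
  · push Not at hβ
    obtain ⟨κ, hθκ, hβκ⟩ := hβ
    filter_upwards [hαlim.eventually (gt_mem_nhds (lt_add_one _)),
      (tendsto_hReal_transfer_atTop hθ hP0 hP1 hα hθκ hβκ).eventually_ge_atTop
        (hReal ι θ P α + 1)] with t h1 h2 using h1.trans_le h2

lemma sum_mul_entropy_marg_transfer_ge (hθ : ∀ κ, 0 ≤ θ κ) (hP : ∀ γ, 0 ≤ P γ) {t : ℝ}
    (ht : 0 ≤ t) (htα : t < P α) :
    ∑ κ, θ κ * entropy (marg ι P κ)
        + t * (hReal ι θ (transfer P α β t) β - hReal ι θ (transfer P α β t) α)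
      ≤ ∑ κ, θ κ * entropy (marg ι (transfer P α β t) κ) := by
  have hQ0 := transfer_nonneg (β := β) hP ht htα.le
  calc _ ≤ ∑ γ, P γ * hReal ι θ (transfer P α β t) γ
          + t * (hReal ι θ (transfer P α β t) β - hReal ι θ (transfer P α β t) α) := by
        gcongr
        exact sum_mul_entropy_marg_le hθ hP hQ0 (sum_transfer P α β t).le fun γ hγ κ _ =>
          ((transfer_pos hP ht htα hγ).trans_le (le_marg hQ0 κ γ)).ne'
    _ = _ := by rw [← sum_transfer_mul, sum_mul_entropy_marg]

end Perturbation

section Optimality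

variable {d : ℕ} {ι : Fin d → Type} [∀ κ, Fintype (ι κ)] [∀ κ, DecidableEq (ι κ)]
  {Φ : Set ((κ : Fin d) → ι κ)} {θ : Fin d → ℝ} {P : ((κ : Fin d) → ι κ) → ℝ}

lemma hFun_le_of_sum_mul_entropy_marg_le (hθ : ∀ κ, 0 ≤ θ κ) (hP0 : ∀ γ, 0 ≤ P γ)
    (hP1 : ∑ γ, P γ = 1) (hPsupp : ∀ γ, P γ ≠ 0 → γ ∈ Φ)
    (hmax : ∀ Q : ((κ : Fin d) → ι κ) → ℝ, (∀ γ, 0 ≤ Q γ) → ∑ γ, Q γ = 1 →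
      (∀ γ, Q γ ≠ 0 → γ ∈ Φ) →
      ∑ κ, θ κ * entropy (marg ι Q κ) ≤ ∑ κ, θ κ * entropy (marg ι P κ))
    {α : (κ : Fin d) → ι κ} (hα : 0 < P α) {β : (κ : Fin d) → ι κ} (hβ : β ∈ Φ) :
    hFun ι θ P β ≤ hFun ι θ P α := by
  by_contra! hlt
  obtain ⟨t, hgain, ht, htα⟩ :=
    ((eventually_hReal_transfer_lt hθ hP0 hP1 hα hlt).and (Ioo_mem_nhdsGT hα)).exists
  have hsupp (γ) (hγ : transfer P α β t γ ≠ 0) : γ ∈ Φ := by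
    rcases eq_or_eq_or_ne_zero_of_transfer_ne_zero hγ with rfl | rfl | hPγ
    exacts [hβ, hPsupp γ hα.ne', hPsupp γ hPγ]
  have hle := hmax _ (transfer_nonneg hP0 ht.le htα.le) (by rw [sum_transfer, hP1]) hsupp
  have hge := sum_mul_entropy_marg_transfer_ge hθ hP0 (β := β) ht.le htα
  nlinarith [mul_pos ht (sub_pos.2 hgain)]

lemma sum_mul_entropy_marg_le_of_hFun_le (hθ : ∀ κ, 0 ≤ θ κ) (hP0 : ∀ γ, 0 ≤ P γ)
    (hP1 : ∑ γ, P γ = 1) (hPsupp : ∀ γ, P γ ≠ 0 → γ ∈ Φ)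
    (hmax : ∀ α ∈ Φ, 0 < P α → ∀ β ∈ Φ, hFun ι θ P β ≤ hFun ι θ P α)
    {Q : ((κ : Fin d) → ι κ) → ℝ} (hQ0 : ∀ γ, 0 ≤ Q γ) (hQ1 : ∑ γ, Q γ = 1)
    (hQsupp : ∀ γ, Q γ ≠ 0 → γ ∈ Φ) :
    ∑ κ, θ κ * entropy (marg ι Q κ) ≤ ∑ κ, θ κ * entropy (marg ι P κ) := by
  obtain ⟨α, -, hα⟩ := exists_ne_zero_of_sum_ne_zero (hP1 ▸ one_ne_zero : ∑ γ, P γ ≠ 0)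
  replace hα : 0 < P α := (hP0 α).lt_of_ne' hα
  have hαΦ := hPsupp α hα.ne'
  have hαmax : ∀ γ ∈ Φ, hFun ι θ P γ ≤ hReal ι θ P α := fun γ hγ =>
    hFun_eq_coe_hReal_of_pos hP0 hα ▸ hmax α hαΦ hα γ hγ
  have hfinite (γ) (hγ : γ ∈ Φ) (κ) (hκ : θ κ ≠ 0) : marg ι P κ (γ κ) ≠ 0 := fun h0 =>
    (EReal.coe_lt_top _).not_ge (hFun_eq_top hκ h0 ▸ hαmax γ hγ)
  have hle (γ) (hγ : γ ∈ Φ) : hReal ι θ P γ ≤ hReal ι θ P α := by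
    exact_mod_cast hFun_eq_coe_hReal (hfinite γ hγ) ▸ hαmax γ hγ
  have hge (γ) (hγ : 0 < P γ) : hReal ι θ P α ≤ hReal ι θ P γ := by
    have := hmax γ (hPsupp γ hγ.ne') hγ α hαΦ
    rwa [hFun_eq_coe_hReal_of_pos hP0 hγ, hFun_eq_coe_hReal_of_pos hP0 hα,
      EReal.coe_le_coe_iff] at this
  calc ∑ κ, θ κ * entropy (marg ι Q κ) ≤ ∑ γ, Q γ * hReal ι θ P γ :=
        sum_mul_entropy_marg_le hθ hQ0 hP0 (by rw [hP1, hQ1]) fun γ hγ => hfinite γ (hQsupp γ hγ)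
    _ ≤ ∑ γ, Q γ * hReal ι θ P α := sum_le_sum fun γ _ => by
        rcases eq_or_ne (Q γ) 0 with h | h
        · simp [h]
        · exact mul_le_mul_of_nonneg_left (hle γ (hQsupp γ h)) (hQ0 γ)
    _ = ∑ γ, P γ * hReal ι θ P α := by rw [← sum_mul, ← sum_mul, hQ1, hP1]
    _ ≤ ∑ γ, P γ * hReal ι θ P γ := sum_le_sum fun γ _ => by
        rcases (hP0 γ).eq_or_lt with h | h
        · simp [← h]
        · exact mul_le_mul_of_nonneg_left (hge γ h) h.le
    _ = ∑ κ, θ κ * entropy (marg ι P κ) := (sum_mul_entropy_marg P).symm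

end Optimality

theorem statement15_general {d : ℕ} (ι : Fin d → Type) [∀ κ, Fintype (ι κ)] [∀ κ, DecidableEq (ι κ)]
    (Φ : Set ((κ : Fin d) → ι κ))
    (θ : Fin d → ℝ) (hθ0 : ∀ κ, 0 ≤ θ κ)
    (P : ((κ : Fin d) → ι κ) → ℝ) (hP0 : ∀ α, 0 ≤ P α) (hP1 : ∑ α, P α = 1)
    (hPsupp : ∀ α, P α ≠ 0 → α ∈ Φ) :
    (∀ Q : ((κ : Fin d) → ι κ) → ℝ, (∀ α, 0 ≤ Q α) → (∑ α, Q α) = 1 →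
        (∀ α, Q α ≠ 0 → α ∈ Φ) →
        ∑ κ, θ κ * entropy (marg ι Q κ) ≤ ∑ κ, θ κ * entropy (marg ι P κ))
      ↔ (∀ α ∈ Φ, 0 < P α → ∀ β ∈ Φ, hFun ι θ P β ≤ hFun ι θ P α) :=
  ⟨fun hmax _ _ hα _ hβ => hFun_le_of_sum_mul_entropy_marg_le hθ0 hP0 hP1 hPsupp hmax hα hβ,
    fun hmax _ hQ0 hQ1 hQsupp =>
      sum_mul_entropy_marg_le_of_hFun_le hθ0 hP0 hP1 hPsupp hmax hQ0 hQ1 hQsupp⟩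

/-- a distribution `P` on `Φ` maximizes the `θ`-weighted marginal entropy
`Q ↦ ∑ κ, θ_κ·H(Q_κ)` over all distributions on `Φ` iff every point of positive `P`-probability
is a maximizer of `h_P` on `Φ`. -/
theorem statement15 {d : ℕ} (ι : Fin d → Type) [∀ κ, Fintype (ι κ)] [∀ κ, DecidableEq (ι κ)]
    (Φ : Set ((κ : Fin d) → ι κ)) (hΦ : Φ.Nonempty)
    (θ : Fin d → ℝ) (hθ0 : ∀ κ, 0 ≤ θ κ) (hθ1 : ∑ κ, θ κ = 1)
    (P : ((κ : Fin d) → ι κ) → ℝ) (hP0 : ∀ α, 0 ≤ P α) (hP1 : ∑ α, P α = 1)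
    (hPsupp : ∀ α, P α ≠ 0 → α ∈ Φ) :
    (∀ Q : ((κ : Fin d) → ι κ) → ℝ, (∀ α, 0 ≤ Q α) → (∑ α, Q α) = 1 →
        (∀ α, Q α ≠ 0 → α ∈ Φ) →
        ∑ κ, θ κ * entropy (marg ι Q κ) ≤ ∑ κ, θ κ * entropy (marg ι P κ))
      ↔ (∀ α ∈ Φ, 0 < P α → ∀ β ∈ Φ, hFun ι θ P β ≤ hFun ι θ P α) :=
  statement15_general ι Φ θ hθ0 P hP0 hP1 hPsupp

end Paper
end

section
/- Let J, K be finite nonempty sets and Φ ⊆ J×K a subset with no empty rows or columns (every j ∈ J and every k ∈ K occurs in some element of Φ). Suppose J = J_1 ⊔ ⋯ ⊔ J_m and K = K_1 ⊔ ⋯ ⊔ K_m are partitions into nonempty parts such that: (1) for each u, Φ^{(u)} = Φ ∩ (J_u×K_u) is a balanced subset of J_u×K_u; (2) every (j,k) ∈ Φ with j ∈ J_u and k ∈ K_v satisfies u ≥ v; and (3) the ratios μ_u = |J_u|/|K_u| are strictly decreasing in u. Fix ρ ∈ [0,1]. Then the maximum over probability distributions P on Φ of ρ·H(P_J) + (1−ρ)·H(P_K)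 equals log₂( Σ_{u=1}^m |J_u|^ρ·|K_u|^{1−ρ} ), and it is attained at P* = Σ_{u=1}^m p_u·P^{(u)}, where each P^{(u)} is a distribution on Φ^{(u)} with uniform marginals on J_u and K_u and p_u = |J_u|^ρ·|K_u|^{1−ρ} / Σ_{v=1}^m |J_v|^ρ·|K_v|^{1−ρ}. -/
open scoped BigOperators

namespace Paper

private lemma logb_rpow' {x : ℝ} (hx : 0 < x) (y : ℝ) :
    Real.logb 2 (x ^ y) = y * Real.logb 2 x := by
  unfold Real.logb
  rw [Real.log_rpow hx]
  ring

/-- Gibbs' inequality: entropy is at most cross-entropy w.r.t. a positive distribution. -/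
private lemma gibbs {ι : Type*} [Fintype ι] (Q a : ι → ℝ) (hQ0 : ∀ x, 0 ≤ Q x)
    (hQ1 : ∑ x, Q x = 1) (ha0 : ∀ x, 0 < a x) (ha1 : ∑ x, a x = 1) :
    entropy Q ≤ ∑ x, -(Q x * Real.logb 2 (a x)) := by
  have hlog2 : (0:ℝ) < Real.log 2 := Real.log_pos one_lt_two
  have key : ∀ x, Q x * Real.logb 2 (a x) - Q x * Real.logb 2 (Q x)
      ≤ (a x - Q x) / Real.log 2 := by
    intro x
    rcases eq_or_lt_of_le (hQ0 x) with h | h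
    · rw [← h]
      simp only [zero_mul, sub_zero, sub_self]
      exact div_nonneg (ha0 x).le hlog2.le
    · have hne : Q x ≠ 0 := ne_of_gt h
      have h1 : Q x * Real.logb 2 (a x) - Q x * Real.logb 2 (Q x)
          = Q x * Real.log (a x / Q x) / Real.log 2 := by
        rw [Real.log_div (ne_of_gt (ha0 x)) hne]
        simp only [Real.logb]
        ring
      have h2 : Real.log (a x / Q x) ≤ a x / Q x - 1 :=
        Real.log_le_sub_one_of_pos (div_pos (ha0 x) h)
      have h3 : Q x * Real.log (a x / Q x) ≤ a x - Q x := by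
        calc Q x * Real.log (a x / Q x) ≤ Q x * (a x / Q x - 1) :=
              mul_le_mul_of_nonneg_left h2 h.le
          _ = a x - Q x := by field_simp
      rw [h1]
      gcongr
  have hsum : ∑ x, (Q x * Real.logb 2 (a x) - Q x * Real.logb 2 (Q x))
      ≤ ∑ x, ((a x - Q x) / Real.log 2) := Finset.sum_le_sum fun x _ => key x
  have h4 : ∑ x, ((a x - Q x) / Real.log 2) = 0 := by
    rw [← Finset.sum_div, Finset.sum_sub_distrib, hQ1, ha1, sub_self, zero_div]
  rw [h4, Finset.sum_sub_distrib] at hsum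
  unfold entropy
  rw [Finset.sum_neg_distrib, Finset.sum_neg_distrib]
  linarith

/-- Summing a fiberwise-constant function. -/
private lemma sum_fiber {J : Type*} [Fintype J] {r : ℕ} (c : J → Fin r) (g : Fin r → ℝ) :
    ∑ j, g (c j) = ∑ u, ((Finset.univ.filter (fun j => c j = u)).card : ℝ) * g u := by
  classical
  rw [← Finset.sum_fiberwise Finset.univ c (fun j => g (c j))]
  refine Finset.sum_congr rfl fun u _ => ?_
  calc ∑ j ∈ Finset.univ.filter (fun j => c j = u), g (c j)
      = ∑ j ∈ Finset.univ.filter (fun j => c j = u), g u := by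
        refine Finset.sum_congr rfl fun j hj => ?_
        rw [(Finset.mem_filter.mp hj).2]
    _ = _ := by rw [Finset.sum_const, nsmul_eq_mul]

/-- block-triangular structure of maximizers of weighted marginal entropy.
Given a blockwise-triangular support `Φ` (2) with balanced diagonal blocks, witnessed by
distributions `Pu u` with uniform marginals on `J_u` and `K_u` (1), and strictly decreasing
block ratios `μ_u = |J_u|/|K_u|` (3), the max of `ρ·H(P_J)+(1−ρ)·H(P_K)` over distributions
on `Φ` equals `log₂(∑_u |J_u|^ρ·|K_u|^{1−ρ})` and is attained at `P* = ∑_u p_u·P^{(u)}`. -/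
theorem statement16 (J K : Type) [Fintype J] [Fintype K] [DecidableEq J] [DecidableEq K]
    [Nonempty J] [Nonempty K]
    (Φ : Set (J × K))
    (hrows : ∀ j : J, ∃ kk, (j, kk) ∈ Φ) (hcols : ∀ kk : K, ∃ j, (j, kk) ∈ Φ)
    (r : ℕ) (cJ : J → Fin r) (cK : K → Fin r)
    (hJne : ∀ u, ∃ j, cJ j = u) (hKne : ∀ u, ∃ kk, cK kk = u)
    (Pu : Fin r → (J × K → ℝ))
    (hPu : ∀ u, (∀ x, 0 ≤ Pu u x) ∧ (∑ x, Pu u x) = 1 ∧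
      (∀ x, Pu u x ≠ 0 → x ∈ Φ ∧ cJ x.1 = u ∧ cK x.2 = u) ∧
      (∀ j, cJ j = u →
        (∑ kk, Pu u (j, kk)) = 1 / ((Finset.univ.filter (fun j' => cJ j' = u)).card : ℝ)) ∧
      (∀ kk, cK kk = u →
        (∑ j, Pu u (j, kk)) = 1 / ((Finset.univ.filter (fun k' => cK k' = u)).card : ℝ)))
    (htri : ∀ x ∈ Φ, cK x.2 ≤ cJ x.1)
    (hmono : ∀ u v : Fin r, u < v →
      (Finset.univ.filter (fun j => cJ j = v)).card *
          (Finset.univ.filter (fun kk => cK kk = u)).card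
        < (Finset.univ.filter (fun j => cJ j = u)).card *
          (Finset.univ.filter (fun kk => cK kk = v)).card)
    (ρ : ℝ) (hρ : ρ ∈ Set.Icc (0 : ℝ) 1)
    (D : ℝ)
    (hD : D = ∑ u : Fin r, ((Finset.univ.filter (fun j => cJ j = u)).card : ℝ) ^ ρ *
        ((Finset.univ.filter (fun kk => cK kk = u)).card : ℝ) ^ (1 - ρ))
    (Pstar : J × K → ℝ)
    (hPstar : Pstar = fun x => ∑ u : Fin r,
        (((Finset.univ.filter (fun j => cJ j = u)).card : ℝ) ^ ρ *
          ((Finset.univ.filter (fun kk => cK kk = u)).card : ℝ) ^ (1 - ρ) / D) * Pu u x) :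
    (∀ P : J × K → ℝ, (∀ x, 0 ≤ P x) → (∑ x, P x) = 1 → (∀ x, P x ≠ 0 → x ∈ Φ) →
        ρ * entropy (fun j => ∑ kk, P (j, kk)) + (1 - ρ) * entropy (fun kk => ∑ j, P (j, kk))
          ≤ Real.logb 2 D)
    ∧ (∀ x, 0 ≤ Pstar x) ∧ (∑ x, Pstar x) = 1 ∧ (∀ x, Pstar x ≠ 0 → x ∈ Φ)
    ∧ ρ * entropy (fun j => ∑ kk, Pstar (j, kk))
        + (1 - ρ) * entropy (fun kk => ∑ j, Pstar (j, kk)) = Real.logb 2 D := by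
  classical
  obtain ⟨hρ0, hρ1⟩ := hρ
  have hρ1' : (0:ℝ) ≤ 1 - ρ := by linarith
  have hr : 0 < r := (cJ (Classical.arbitrary J)).pos
  haveI : Nonempty (Fin r) := ⟨⟨0, hr⟩⟩
  -- abbreviations
  obtain ⟨Jc, hJc⟩ : ∃ f : Fin r → ℝ,
      ∀ u, f u = ((Finset.univ.filter (fun j => cJ j = u)).card : ℝ) := ⟨_, fun _ => rfl⟩
  obtain ⟨Kc, hKc⟩ : ∃ f : Fin r → ℝ,
      ∀ u, f u = ((Finset.univ.filter (fun kk => cK kk = u)).card : ℝ) := ⟨_, fun _ => rfl⟩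
  have hJcpos : ∀ u, 0 < Jc u := by
    intro u
    obtain ⟨j, hj⟩ := hJne u
    rw [hJc]
    have : j ∈ Finset.univ.filter (fun j => cJ j = u) := by simp [hj]
    exact_mod_cast Finset.card_pos.mpr ⟨j, this⟩
  have hKcpos : ∀ u, 0 < Kc u := by
    intro u
    obtain ⟨kk, hk⟩ := hKne u
    rw [hKc]
    have : kk ∈ Finset.univ.filter (fun k' => cK k' = u) := by simp [hk]
    exact_mod_cast Finset.card_pos.mpr ⟨kk, this⟩
  obtain ⟨a, ha⟩ : ∃ f : Fin r → ℝ, ∀ u, f u = Jc u ^ ρ * Kc u ^ (1 - ρ) := ⟨_, fun _ => rfl⟩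
  have hapos : ∀ u, 0 < a u := fun u => by
    rw [ha]
    exact mul_pos (Real.rpow_pos_of_pos (hJcpos u) _) (Real.rpow_pos_of_pos (hKcpos u) _)
  have hDa : D = ∑ u, a u := by
    rw [hD]
    exact (Finset.sum_congr rfl fun u _ => by rw [ha, hJc, hKc]).symm
  have hDpos : 0 < D := by
    rw [hDa]
    exact Finset.sum_pos (fun u _ => hapos u) Finset.univ_nonempty
  obtain ⟨p, hp⟩ : ∃ f : Fin r → ℝ, ∀ u, f u = a u / D := ⟨_, fun _ => rfl⟩
  have hppos : ∀ u, 0 < p u := fun u => by rw [hp]; exact div_pos (hapos u) hDpos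
  have hpsum : ∑ u, p u = 1 := by
    rw [Finset.sum_congr rfl fun u (_ : u ∈ Finset.univ) => hp u, ← Finset.sum_div, ← hDa,
      div_self (ne_of_gt hDpos)]
  -- marginals of the block distributions
  have hPuJ : ∀ u j, (∑ kk, Pu u (j, kk)) = if cJ j = u then 1 / Jc u else 0 := by
    intro u j
    by_cases h : cJ j = u
    · rw [if_pos h, hJc]
      exact (hPu u).2.2.2.1 j h
    · rw [if_neg h]
      refine Finset.sum_eq_zero fun kk _ => ?_
      by_contra hne
      exact h ((hPu u).2.2.1 (j, kk) hne).2.1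
  have hPuK : ∀ u kk, (∑ j, Pu u (j, kk)) = if cK kk = u then 1 / Kc u else 0 := by
    intro u kk
    by_cases h : cK kk = u
    · rw [if_pos h, hKc]
      exact (hPu u).2.2.2.2 kk h
    · rw [if_neg h]
      refine Finset.sum_eq_zero fun j _ => ?_
      by_contra hne
      exact h ((hPu u).2.2.1 (j, kk) hne).2.2
  have hPstar' : ∀ x, Pstar x = ∑ u, p u * Pu u x := by
    intro x
    rw [hPstar]
    exact Finset.sum_congr rfl fun u _ => by rw [hp, ha, hJc, hKc]
  -- marginals of Pstar
  have hPsJ : ∀ j, (∑ kk, Pstar (j, kk)) = p (cJ j) / Jc (cJ j) := by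
    intro j
    have h1 : (∑ kk, Pstar (j, kk)) = ∑ u, p u * (∑ kk, Pu u (j, kk)) := by
      simp only [hPstar']
      rw [Finset.sum_comm]
      exact Finset.sum_congr rfl fun u _ => (Finset.mul_sum _ _ _).symm
    rw [h1, Finset.sum_congr rfl fun u (_ : u ∈ Finset.univ) => by rw [hPuJ u j]]
    simp only [mul_ite, mul_one_div, mul_zero]
    rw [Finset.sum_ite_eq]
    simp
  have hPsK : ∀ kk, (∑ j, Pstar (j, kk)) = p (cK kk) / Kc (cK kk) := by
    intro kk
    have h1 : (∑ j, Pstar (j, kk)) = ∑ u, p u * (∑ j, Pu u (j, kk)) := by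
      simp only [hPstar']
      rw [Finset.sum_comm]
      exact Finset.sum_congr rfl fun u _ => (Finset.mul_sum _ _ _).symm
    rw [h1, Finset.sum_congr rfl fun u (_ : u ∈ Finset.univ) => by rw [hPuK u kk]]
    simp only [mul_ite, mul_one_div, mul_zero]
    rw [Finset.sum_ite_eq]
    simp
  -- the reference marginals
  obtain ⟨qJ, hqJ⟩ : ∃ f : J → ℝ, ∀ j, f j = p (cJ j) / Jc (cJ j) := ⟨_, fun _ => rfl⟩
  obtain ⟨qK, hqK⟩ : ∃ f : K → ℝ, ∀ kk, f kk = p (cK kk) / Kc (cK kk) := ⟨_, fun _ => rfl⟩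
  have hqJpos : ∀ j, 0 < qJ j := fun j => by
    rw [hqJ]; exact div_pos (hppos _) (hJcpos _)
  have hqKpos : ∀ kk, 0 < qK kk := fun kk => by
    rw [hqK]; exact div_pos (hppos _) (hKcpos _)
  have hqJsum : ∑ j, qJ j = 1 := by
    have h := sum_fiber cJ (fun u => p u / Jc u)
    rw [Finset.sum_congr rfl fun j (_ : j ∈ Finset.univ) => hqJ j, h]
    rw [Finset.sum_congr rfl fun u (_ : u ∈ Finset.univ) => by
      rw [← hJc u, mul_comm, div_mul_cancel₀ _ (ne_of_gt (hJcpos u))]]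
    exact hpsum
  have hqKsum : ∑ kk, qK kk = 1 := by
    have h := sum_fiber cK (fun u => p u / Kc u)
    rw [Finset.sum_congr rfl fun kk (_ : kk ∈ Finset.univ) => hqK kk, h]
    rw [Finset.sum_congr rfl fun u (_ : u ∈ Finset.univ) => by
      rw [← hKc u, mul_comm, div_mul_cancel₀ _ (ne_of_gt (hKcpos u))]]
    exact hpsum
  -- log ratio
  obtain ⟨L, hL⟩ : ∃ f : Fin r → ℝ,
      ∀ u, f u = Real.logb 2 (Jc u) - Real.logb 2 (Kc u) := ⟨_, fun _ => rfl⟩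
  have hlogp : ∀ u, Real.logb 2 (p u)
      = ρ * Real.logb 2 (Jc u) + (1 - ρ) * Real.logb 2 (Kc u) - Real.logb 2 D := by
    intro u
    rw [hp, Real.logb_div (ne_of_gt (hapos u)) (ne_of_gt hDpos), ha,
      Real.logb_mul (ne_of_gt (Real.rpow_pos_of_pos (hJcpos u) _))
        (ne_of_gt (Real.rpow_pos_of_pos (hKcpos u) _)),
      logb_rpow' (hJcpos u), logb_rpow' (hKcpos u)]
  -- cross-entropy computations
  have hCEJ : ∀ Q : J → ℝ, (∑ j, Q j) = 1 →
      (∑ j, -(Q j * Real.logb 2 (qJ j)))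
        = Real.logb 2 D + (1 - ρ) * ∑ j, Q j * L (cJ j) := by
    intro Q hQ1
    have hterm : ∀ j, -(Q j * Real.logb 2 (qJ j))
        = Q j * Real.logb 2 D + (1 - ρ) * (Q j * L (cJ j)) := by
      intro j
      rw [hqJ, Real.logb_div (ne_of_gt (hppos _)) (ne_of_gt (hJcpos _)), hlogp, hL]
      ring
    rw [Finset.sum_congr rfl fun j (_ : j ∈ Finset.univ) => hterm j, Finset.sum_add_distrib,
      ← Finset.sum_mul, hQ1, one_mul, ← Finset.mul_sum]
  have hCEK : ∀ Q : K → ℝ, (∑ kk, Q kk) = 1 →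
      (∑ kk, -(Q kk * Real.logb 2 (qK kk)))
        = Real.logb 2 D - ρ * ∑ kk, Q kk * L (cK kk) := by
    intro Q hQ1
    have hterm : ∀ kk, -(Q kk * Real.logb 2 (qK kk))
        = Q kk * Real.logb 2 D + (-ρ) * (Q kk * L (cK kk)) := by
      intro kk
      rw [hqK, Real.logb_div (ne_of_gt (hppos _)) (ne_of_gt (hKcpos _)), hlogp, hL]
      ring
    rw [Finset.sum_congr rfl fun kk (_ : kk ∈ Finset.univ) => hterm kk, Finset.sum_add_distrib,
      ← Finset.sum_mul, hQ1, one_mul, ← Finset.mul_sum]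
    ring
  -- antitonicity of L
  have hLmono : ∀ u v : Fin r, v ≤ u → L u ≤ L v := by
    intro u v huv
    rcases eq_or_lt_of_le huv with rfl | h
    · exact le_refl _
    · have hm := hmono v u h
      have hcast : Jc u * Kc v < Jc v * Kc u := by
        rw [hJc, hJc, hKc, hKc]
        exact_mod_cast hm
      have hlog : Real.logb 2 (Jc u * Kc v) ≤ Real.logb 2 (Jc v * Kc u) :=
        (Real.logb_le_logb one_lt_two (mul_pos (hJcpos u) (hKcpos v))
          (mul_pos (hJcpos v) (hKcpos u))).mpr hcast.le
      rw [Real.logb_mul (ne_of_gt (hJcpos u)) (ne_of_gt (hKcpos v)),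
        Real.logb_mul (ne_of_gt (hJcpos v)) (ne_of_gt (hKcpos u))] at hlog
      rw [hL, hL]
      linarith
  -- Part 1: the upper bound
  have part1 : ∀ P : J × K → ℝ, (∀ x, 0 ≤ P x) → (∑ x, P x) = 1 → (∀ x, P x ≠ 0 → x ∈ Φ) →
      ρ * entropy (fun j => ∑ kk, P (j, kk)) + (1 - ρ) * entropy (fun kk => ∑ j, P (j, kk))
        ≤ Real.logb 2 D := by
    intro P hP0 hP1 hsupp
    have hPJ0 : ∀ j, 0 ≤ ∑ kk, P (j, kk) := fun j =>
      Finset.sum_nonneg fun kk _ => hP0 _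
    have hPK0 : ∀ kk, 0 ≤ ∑ j, P (j, kk) := fun kk =>
      Finset.sum_nonneg fun j _ => hP0 _
    have hPJ1 : ∑ j, ∑ kk, P (j, kk) = 1 := by
      rw [← Fintype.sum_prod_type]; exact hP1
    have hPK1 : ∑ kk, ∑ j, P (j, kk) = 1 := by
      rw [Finset.sum_comm, ← Fintype.sum_prod_type]; exact hP1
    have hgJ := gibbs (fun j => ∑ kk, P (j, kk)) qJ hPJ0 hPJ1 hqJpos hqJsum
    have hgK := gibbs (fun kk => ∑ j, P (j, kk)) qK hPK0 hPK1 hqKpos hqKsum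
    rw [hCEJ _ hPJ1] at hgJ
    rw [hCEK _ hPK1] at hgK
    -- compare the two weighted sums
    have hSJ : (∑ j, (∑ kk, P (j, kk)) * L (cJ j)) = ∑ x : J × K, P x * L (cJ x.1) := by
      rw [Fintype.sum_prod_type]
      exact Finset.sum_congr rfl fun j _ => Finset.sum_mul _ _ _
    have hSK : (∑ kk, (∑ j, P (j, kk)) * L (cK kk)) = ∑ x : J × K, P x * L (cK x.2) := by
      rw [Fintype.sum_prod_type, Finset.sum_comm]
      exact Finset.sum_congr rfl fun kk _ => Finset.sum_mul _ _ _
    have hdiff : (∑ x : J × K, P x * L (cJ x.1)) ≤ ∑ x : J × K, P x * L (cK x.2) := by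
      refine Finset.sum_le_sum fun x _ => ?_
      rcases eq_or_ne (P x) 0 with h | h
      · rw [h, zero_mul, zero_mul]
      · exact mul_le_mul_of_nonneg_left (hLmono _ _ (htri x (hsupp x h))) (hP0 x)
    rw [hSJ] at hgJ
    rw [hSK] at hgK
    have h1 := mul_le_mul_of_nonneg_left hgJ hρ0
    have h2 := mul_le_mul_of_nonneg_left hgK hρ1'
    nlinarith [mul_nonneg (mul_nonneg hρ0 hρ1')
      (sub_nonneg.mpr hdiff)]
  refine ⟨part1, ?_, ?_, ?_, ?_⟩
  · -- nonnegativity of Pstar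
    intro x
    rw [hPstar']
    exact Finset.sum_nonneg fun u _ => mul_nonneg (hppos u).le ((hPu u).1 x)
  · -- total mass of Pstar
    rw [Finset.sum_congr rfl fun x (_ : x ∈ Finset.univ) => hPstar' x, Finset.sum_comm]
    rw [Finset.sum_congr rfl fun u (_ : u ∈ Finset.univ) => by
      rw [← Finset.mul_sum, (hPu u).2.1, mul_one]]
    exact hpsum
  · -- support of Pstar
    intro x hx
    rw [hPstar'] at hx
    obtain ⟨u, _, hu⟩ := Finset.exists_ne_zero_of_sum_ne_zero hx
    have : Pu u x ≠ 0 := fun h => hu (by rw [h, mul_zero])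
    exact ((hPu u).2.2.1 x this).1
  · -- the value at Pstar
    have heqJ : (fun j => ∑ kk, Pstar (j, kk)) = qJ :=
      funext fun j => (hPsJ j).trans (hqJ j).symm
    have heqK : (fun kk => ∑ j, Pstar (j, kk)) = qK :=
      funext fun kk => (hPsK kk).trans (hqK kk).symm
    rw [heqJ, heqK]
    have hHJ : entropy qJ = Real.logb 2 D + (1 - ρ) * ∑ j, qJ j * L (cJ j) := by
      rw [← hCEJ qJ hqJsum]
      rfl
    have hHK : entropy qK = Real.logb 2 D - ρ * ∑ kk, qK kk * L (cK kk) := by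
      rw [← hCEK qK hqKsum]
      rfl
    have hTJ : (∑ j, qJ j * L (cJ j)) = ∑ u, p u * L u := by
      have h := sum_fiber cJ (fun u => p u / Jc u * L u)
      rw [Finset.sum_congr rfl fun j (_ : j ∈ Finset.univ) => by rw [hqJ j], h]
      refine Finset.sum_congr rfl fun u _ => ?_
      have hne : Jc u ≠ 0 := ne_of_gt (hJcpos u)
      rw [← hJc u]
      field_simp
    have hTK : (∑ kk, qK kk * L (cK kk)) = ∑ u, p u * L u := by
      have h := sum_fiber cK (fun u => p u / Kc u * L u)
      rw [Finset.sum_congr rfl fun kk (_ : kk ∈ Finset.univ) => by rw [hqK kk], h]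
      refine Finset.sum_congr rfl fun u _ => ?_
      have hne : Kc u ≠ 0 := ne_of_gt (hKcpos u)
      rw [← hKc u]
      field_simp
    rw [hHJ, hHK, hTJ, hTK]
    ring

end Paper
end

section
/- Let J, K be finite nonempty sets and Φ ⊆ J×K. Then Φ is balanced if and only if every subset J' ⊆ J satisfies |N(J')| ≥ (|K|/|J|)·|J'|. -/
/-!
Necessity: the mass that a balanced `P` puts on the rows `J'` is `|J'|/|J|`; it lies in `Φ`,
hence in the columns `N(J')`, which carry `|N(J')|/|K|` in total.

Sufficiency: replace every `j ∈ J` by `|K|` copies and every `k ∈ K` by `|J|` copies. Both sides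
then have `|J||K|` vertices and the hypothesis is exactly Hall's condition for the blown-up
graph, so Hall's marriage theorem gives a perfect matching. Counting its edges between copies of
`j` and copies of `k`, divided by `|J||K|`, gives the balanced distribution.
-/

open Finset

namespace Paper

section Fibers

variable {J K α : Type*} [Fintype α] [DecidableEq J] [DecidableEq K] (g : α → J × K)

theorem sum_card_filter_eq_card_filter_fst [Fintype K] (j : J) :
    ∑ k, #{a | g a = (j, k)} = #{a | (g a).1 = j} := by
  rw [card_eq_sum_card_fiberwise (f := fun a => (g a).2) (t := univ) fun _ _ => mem_univ _]
  simp only [filter_filter, Prod.ext_iff]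

theorem sum_card_filter_eq_card_filter_snd [Fintype J] (k : K) :
    ∑ j, #{a | g a = (j, k)} = #{a | (g a).2 = k} := by
  rw [card_eq_sum_card_fiberwise (f := fun a => (g a).1) (t := univ) fun _ _ => mem_univ _]
  simp only [filter_filter, Prod.ext_iff, and_comm]

end Fibers

theorem card_filter_fst_eq {J β : Type*} [Fintype J] [Fintype β] [DecidableEq J] (j : J) :
    #{x : J × β | x.1 = j} = Fintype.card β := by
  rw [← univ_product_univ, filter_product_left (· = j), card_product]
  simp [filter_eq']

variable {J K : Type*} [Fintype J] [Fintype K] {Φ : Set (J × K)}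

theorem sum_rows_le_sum_cols {P : J × K → ℝ} (hP : ∀ x, 0 ≤ P x)
    (hsupp : ∀ x, P x ≠ 0 → x ∈ Φ) {s : Finset J} {t : Finset K}
    (hst : ∀ j ∈ s, ∀ k, (j, k) ∈ Φ → k ∈ t) :
    ∑ j ∈ s, ∑ k, P (j, k) ≤ ∑ k ∈ t, ∑ j, P (j, k) :=
  calc ∑ j ∈ s, ∑ k, P (j, k) = ∑ j ∈ s, ∑ k ∈ t, P (j, k) := by
        refine sum_congr rfl fun j hj => (sum_subset (subset_univ t) fun k _ hk => ?_).symm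
        by_contra h
        exact hk (hst j hj k (hsupp _ h))
    _ = ∑ k ∈ t, ∑ j ∈ s, P (j, k) := sum_comm
    _ ≤ ∑ k ∈ t, ∑ j, P (j, k) := sum_le_sum fun k _ =>
        sum_le_sum_of_subset_of_nonneg (subset_univ s) fun j _ _ => hP _

theorem Balanced.card_mul_card_le [Nonempty J] [Nonempty K] (h : Balanced Φ)
    {s : Finset J} {t : Finset K} (hst : ∀ j ∈ s, ∀ k, (j, k) ∈ Φ → k ∈ t) :
    Fintype.card K * #s ≤ Fintype.card J * #t := by
  obtain ⟨P, hP, -, hsupp, hrow, hcol⟩ := h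
  have hsum := sum_rows_le_sum_cols hP hsupp hst
  simp only [hrow, hcol, sum_const, nsmul_eq_mul, mul_one_div] at hsum
  rw [div_le_div_iff₀ (by positivity) (by positivity)] at hsum
  exact_mod_cast (by linarith : (Fintype.card K * #s : ℝ) ≤ Fintype.card J * #t)

theorem balanced_of_fiber_card [DecidableEq J] [DecidableEq K] {α : Type*} [Fintype α]
    [Nonempty α] (g : α → J × K) (hg : ∀ a, g a ∈ Φ)
    (hfst : ∀ j, #{a | (g a).1 = j} * Fintype.card J = Fintype.card α)
    (hsnd : ∀ k, #{a | (g a).2 = k} * Fintype.card K = Fintype.card α) :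
    Balanced Φ := by
  have hα : (0 : ℝ) < Fintype.card α := by exact_mod_cast Fintype.card_pos
  have div_card_eq (c n : ℕ) (h : c * n = Fintype.card α) :
      (c : ℝ) / Fintype.card α = 1 / n := by
    have hc : c ≠ 0 := by
      rintro rfl
      simp [← h] at hα
    rw [← h, Nat.cast_mul, div_mul_cancel_left₀ (Nat.cast_ne_zero.2 hc), one_div]
  refine ⟨fun x => #{a | g a = x} / Fintype.card α, fun x => by positivity, ?_, ?_, ?_, ?_⟩
  · rw [← sum_div, ← Nat.cast_sum, ← card_eq_sum_card_fiberwise fun a _ => mem_univ (g a),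
      card_univ, div_self hα.ne']
  · intro x hx
    obtain ⟨a, ha⟩ : ∃ a, g a = x := by
      by_contra! h
      simp [h] at hx
    exact ha ▸ hg a
  · intro j
    rw [← sum_div, ← Nat.cast_sum, sum_card_filter_eq_card_filter_fst, div_card_eq _ _ (hfst j)]
  · intro k
    rw [← sum_div, ← Nat.cast_sum, sum_card_filter_eq_card_filter_snd, div_card_eq _ _ (hsnd k)]

theorem exists_equiv_blowup_of_hall
    (hall : ∀ J' : Set J,
      Fintype.card K * J'.ncard ≤ Fintype.card J * {k | ∃ j ∈ J', (j, k) ∈ Φ}.ncard) :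
    ∃ e : J × Fin (Fintype.card K) ≃ K × Fin (Fintype.card J), ∀ x, (x.1, (e x).1) ∈ Φ := by
  classical
  have blowup_hall (A : Finset (J × Fin (Fintype.card K))) :
      #A ≤ #{y : K × Fin (Fintype.card J) | ∃ a ∈ A, (a.1, y.1) ∈ Φ} := by
    set S := A.image Prod.fst
    set N := {k | ∃ j ∈ (S : Set J), (j, k) ∈ Φ}.toFinset
    calc #A ≤ #(S ×ˢ univ) :=
          card_le_card fun x hx => mem_product.2 ⟨mem_image_of_mem _ hx, mem_univ _⟩
      _ = Fintype.card K * #S := by simp [mul_comm]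
      _ ≤ Fintype.card J * #N := by
        have h := hall S
        rwa [Set.ncard_coe_finset, Set.ncard_eq_toFinset_card'] at h
      _ = #(N ×ˢ (univ : Finset (Fin (Fintype.card J)))) := by simp [mul_comm]
      _ = #{y : K × Fin (Fintype.card J) | ∃ a ∈ A, (a.1, y.1) ∈ Φ} := by
        congr 1
        ext
        simp [S, N]
  obtain ⟨f, hf, hfΦ⟩ :=
    (Fintype.all_card_le_filter_rel_iff_exists_injective _).1 blowup_hall
  have hbij : Function.Bijective f :=
    (Fintype.bijective_iff_injective_and_card f).2 ⟨hf, by simp [mul_comm]⟩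
  exact ⟨.ofBijective f hbij, hfΦ⟩

theorem balanced_of_equiv_blowup [DecidableEq J] [DecidableEq K] [Nonempty J] [Nonempty K]
    (e : J × Fin (Fintype.card K) ≃ K × Fin (Fintype.card J)) (he : ∀ x, (x.1, (e x).1) ∈ Φ) :
    Balanced Φ := by
  have : Nonempty (J × Fin (Fintype.card K)) :=
    ⟨(Classical.arbitrary J, ⟨0, Fintype.card_pos⟩)⟩
  refine balanced_of_fiber_card (fun x => (x.1, (e x).1)) he (fun j => ?_) (fun k => ?_)
  · dsimp only
    rw [card_filter_fst_eq, Fintype.card_prod, Fintype.card_fin, mul_comm]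
  · rw [card_equiv e (t := {y | y.1 = k}) fun x => by simp, card_filter_fst_eq,
      Fintype.card_prod, Fintype.card_fin, Fintype.card_fin]

/-- generalized Hall condition: `Φ ⊆ J × K` is balanced iff every `J' ⊆ J`
satisfies `|N(J')| ≥ (|K|/|J|)·|J'|` (stated in cross-multiplied form). -/
theorem statement17 (J K : Type) [Fintype J] [Fintype K] [Nonempty J] [Nonempty K]
    (Φ : Set (J × K)) :
    Balanced Φ ↔ ∀ J' : Set J,
      Fintype.card K * J'.ncard
        ≤ Fintype.card J * { kk : K | ∃ j ∈ J', (j, kk) ∈ Φ }.ncard := by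
  classical
  constructor
  · intro h J'
    rw [Set.ncard_eq_toFinset_card', Set.ncard_eq_toFinset_card']
    exact h.card_mul_card_le fun j hj k hk =>
      Set.mem_toFinset.2 ⟨j, Set.mem_toFinset.1 hj, hk⟩
  · intro hall
    obtain ⟨e, he⟩ := exists_equiv_blowup_of_hall hall
    exact balanced_of_equiv_blowup e he

end Paper
end

section
/- Let (R, ≤) be a Strassen preordered commutative semiring. A function F : R → ℝ_{≥0} is monotone, subadditive, submultiplicative and monomially homogeneous if and only if F is a pointwise-attained maximum of the spectral points it dominates; that is, if and only if, setting 𝒵 = { φ : φ is a spectral point of (R,≤) and φ(a) ≤ F(a) for all a ∈ R }, for every a ∈ R there exists φ ∈ 𝒵 with φ(a) = F(a). -/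
open scoped BigOperators
open Filter Topology

namespace Paper

/-- `(R, le)` is a Strassen preordered commutative semiring. -/
structure IsStrassenPreorder (R : Type*) [CommSemiring R] (le : R → R → Prop) : Prop where
  refl : ∀ a, le a a
  trans : ∀ a b c, le a b → le b c → le a c
  zero_le : ∀ a, le 0 a
  add_right : ∀ a b c, le a b → le (a + c) (b + c)
  mul_right : ∀ a b c, le a b → le (a * c) (b * c)
  arch : ∀ a : R, a ≠ 0 → ∃ n : ℕ, le 1 a ∧ le a (n : R)
  nat_le_iff : ∀ n m : ℕ, (le (n : R) (m : R) ↔ n ≤ m)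

/-- A spectral point of `(R, le)`: a normalized, additive, multiplicative, monotone
functional `R → ℝ_{≥0}`. -/
structure IsSpectralPoint (R : Type*) [CommSemiring R] (le : R → R → Prop)
    (φ : R → ℝ) : Prop where
  nonneg : ∀ a, 0 ≤ φ a
  map_one : φ 1 = 1
  map_add : ∀ a b, φ (a + b) = φ a + φ b
  map_mul : ∀ a b, φ (a * b) = φ a * φ b
  monotone : ∀ a b, le a b → φ a ≤ φ b

section Aux

variable {R : Type} [CommSemiring R] {le : R → R → Prop}

/-- auxiliary: the class of "sub-F" functionals pinned at `a`. -/
structure SubF (R : Type) [CommSemiring R] (le : R → R → Prop) (F : R → ℝ) (a : R)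
    (G : R → ℝ) : Prop where
  nonneg : ∀ x, 0 ≤ G x
  mono : ∀ x y, le x y → G x ≤ G y
  subadd : ∀ x y, G (x + y) ≤ G x + G y
  submul : ∀ x y, G (x * y) ≤ G x * G y
  mh : ∀ (m n : ℕ) (x : R), G ((m : R) * x ^ n) = (m : ℝ) * (G x) ^ n
  le_F : ∀ x, G x ≤ F x
  at_a : G a = F a

namespace SubF

variable {F : R → ℝ} {a : R} {G : R → ℝ}

lemma map_one (hG : SubF R le F a G) : G 1 = 1 := by
  have h := hG.mh 1 0 1
  simpa using h

lemma map_zero (hG : SubF R le F a G) : G 0 = 0 := by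
  have h := hG.mh 0 1 1
  simpa using h

lemma map_nat (hG : SubF R le F a G) (m : ℕ) : G (m : R) = m := by
  have h := hG.mh m 1 1
  simpa [hG.map_one] using h

lemma map_nsmul (hG : SubF R le F a G) (m : ℕ) (x : R) : G ((m : R) * x) = m * G x := by
  have h := hG.mh m 1 x
  simpa using h

lemma map_pow (hG : SubF R le F a G) (x : R) (n : ℕ) : G (x ^ n) = (G x) ^ n := by
  have h := hG.mh 1 n x
  simpa using h

end SubF

lemma helper_eps {a b : ℝ} (h : ∀ ε > (0:ℝ), a ≤ b + ε) : a ≤ b := by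
  by_contra hab
  push_neg at hab
  have := h ((a - b)/2) (by linarith)
  linarith

end Aux


section Chain

variable {R : Type} [CommSemiring R] {le : R → R → Prop}

lemma chain_inf (F : R → ℝ) (a : R) (c : Set (R → ℝ))
    (hcS : ∀ G ∈ c, SubF R le F a G)
    (hchain : IsChain (· ≤ ·) c) (hne : c.Nonempty) :
    ∃ I : R → ℝ, SubF R le F a I ∧ ∀ G ∈ c, ∀ x, I x ≤ G x := by
  classical
  set I : R → ℝ := fun x => sInf ((fun G : R → ℝ => G x) '' c) with hI
  have hne' : ∀ x : R, ((fun G : R → ℝ => G x) '' c).Nonempty := fun x => hne.image _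
  have hbdd : ∀ x : R, BddBelow ((fun G : R → ℝ => G x) '' c) := by
    intro x
    refine ⟨0, ?_⟩
    rintro r ⟨G, hG, rfl⟩
    exact (hcS G hG).nonneg x
  have hIle : ∀ G ∈ c, ∀ x, I x ≤ G x := by
    intro G hG x
    exact csInf_le (hbdd x) ⟨G, hG, rfl⟩
  have hleI : ∀ (x : R) (r : ℝ), (∀ G ∈ c, r ≤ G x) → r ≤ I x := by
    intro x r h
    refine le_csInf (hne' x) ?_
    rintro t ⟨G, hG, rfl⟩
    exact h G hG
  have hInn : ∀ x, 0 ≤ I x := fun x => hleI x 0 (fun G hG => (hcS G hG).nonneg x)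
  have happ : ∀ (x : R), ∀ ε > (0:ℝ), ∃ G ∈ c, G x < I x + ε := by
    intro x ε hε
    obtain ⟨t, ⟨G, hG, rfl⟩, ht⟩ :=
      exists_lt_of_csInf_lt (hne' x) (lt_add_of_pos_right (I x) hε)
    exact ⟨G, hG, ht⟩
  refine ⟨I, ⟨hInn, ?_, ?_, ?_, ?_, ?_, ?_⟩, hIle⟩
  · -- mono
    intro x y hxy
    refine hleI y (I x) (fun G hG => ?_)
    exact (hIle G hG x).trans ((hcS G hG).mono x y hxy)
  · -- subadd
    intro x y
    refine helper_eps (fun ε hε => ?_)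
    obtain ⟨G1, hG1, h1⟩ := happ x (ε/2) (by linarith)
    obtain ⟨G2, hG2, h2⟩ := happ y (ε/2) (by linarith)
    rcases eq_or_ne G1 G2 with rfl | hne12
    · have := (hcS G1 hG1).subadd x y
      have hx := hIle G1 hG1 (x + y)
      linarith
    · rcases hchain.total hG1 hG2 with h | h
      · have := (hcS G1 hG1).subadd x y
        have hx := hIle G1 hG1 (x + y)
        have h2' : G1 y ≤ G2 y := h y
        linarith
      · have := (hcS G2 hG2).subadd x y
        have hx := hIle G2 hG2 (x + y)
        have h1' : G2 x ≤ G1 x := h x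
        linarith
  · -- submul
    intro x y
    have key : ∀ ε > (0:ℝ), I (x * y) ≤ (I x + ε) * (I y + ε) := by
      intro ε hε
      obtain ⟨G1, hG1, h1⟩ := happ x ε hε
      obtain ⟨G2, hG2, h2⟩ := happ y ε hε
      have hb : ∀ G ∈ c, I (x*y) ≤ (I x + ε) * (I y + ε) ∨ True := fun _ _ => Or.inr trivial
      have main : ∀ G ∈ c, G x < I x + ε → G y < I y + ε → I (x*y) ≤ (I x + ε) * (I y + ε) := by
        intro G hG hx hy
        have h3 := (hcS G hG).submul x y
        have h4 := hIle G hG (x * y)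
        have h5 : G x * G y ≤ (I x + ε) * (I y + ε) := by
          apply mul_le_mul hx.le hy.le ((hcS G hG).nonneg y)
          have := hInn x; linarith
        linarith
      rcases eq_or_ne G1 G2 with rfl | hne12
      · exact main G1 hG1 h1 h2
      · rcases hchain.total hG1 hG2 with h | h
        · exact main G1 hG1 h1 ((h y).trans_lt h2)
        · exact main G2 hG2 ((h x).trans_lt h1) h2
    have tend : Tendsto (fun ε : ℝ => (I x + ε) * (I y + ε)) (𝓝[>] 0) (𝓝 (I x * I y)) := by
      have hc : ContinuousAt (fun ε : ℝ => (I x + ε) * (I y + ε)) 0 := by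
        fun_prop
      have h2 : Tendsto (fun ε : ℝ => (I x + ε) * (I y + ε)) (𝓝[>] 0) (𝓝 ((I x + 0) * (I y + 0))) :=
        hc.tendsto.mono_left nhdsWithin_le_nhds
      simpa using h2
    refine ge_of_tendsto tend ?_
    filter_upwards [self_mem_nhdsWithin] with ε hε
    exact key ε hε
  · -- mh
    intro m n x
    have hmax : I ((m : R) * x ^ n) = sInf ((fun t => (m:ℝ) * (max t 0) ^ n) '' ((fun G : R → ℝ => G x) '' c)) := by
      rw [Set.image_image]
      have : ((fun G : R → ℝ => G ((m : R) * x ^ n)) '' c)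
          = ((fun G : R → ℝ => (m:ℝ) * (max (G x) 0) ^ n) '' c) := by
        apply Set.image_congr
        intro G hG
        rw [(hcS G hG).mh m n x, max_eq_left ((hcS G hG).nonneg x)]
      simp only [hI]
      rw [this]
    have hmono : Monotone (fun t : ℝ => (m:ℝ) * (max t 0) ^ n) := by
      intro s t hst
      have h1 : max s 0 ≤ max t 0 := max_le_max hst le_rfl
      have h2 : (0:ℝ) ≤ max s 0 := le_max_right _ _
      exact mul_le_mul_of_nonneg_left (pow_le_pow_left₀ h2 h1 n) (Nat.cast_nonneg m)
    have hcont : ContinuousAt (fun t : ℝ => (m:ℝ) * (max t 0) ^ n) (sInf ((fun G : R → ℝ => G x) '' c)) := by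
      fun_prop
    have := hmono.map_csInf_of_continuousAt hcont (hne' x) (hbdd x)
    rw [hmax, ← this]
    simp only [hI]
    rw [max_eq_left (hInn x)]
  · -- le_F
    intro x
    obtain ⟨G, hG⟩ := hne
    exact (hIle G hG x).trans ((hcS G hG).le_F x)
  · -- at_a
    refine le_antisymm ?_ ?_
    · obtain ⟨G, hG⟩ := hne
      exact (hIle G hG a).trans_eq ((hcS G hG).at_a)
    · exact hleI a (F a) (fun G hG => ((hcS G hG).at_a).ge)

lemma exists_minimal (F : R → ℝ) (a : R) (hFS : SubF R le F a F) :
    ∃ G, SubF R le F a G ∧ (∀ H, SubF R le F a H → H ≤ G → H = G) := by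
  have key : ∀ c : Set ((R → ℝ)ᵒᵈ), c ⊆ {G : (R → ℝ)ᵒᵈ | SubF R le F a (OrderDual.ofDual G)} →
      IsChain (· ≤ ·) c → ∀ y ∈ c,
      ∃ ub ∈ {G : (R → ℝ)ᵒᵈ | SubF R le F a (OrderDual.ofDual G)}, ∀ z ∈ c, z ≤ ub := by
    intro c hcs hc y hy
    obtain ⟨I, hIS, hIle⟩ := chain_inf (le := le) F a
      ((fun G : (R → ℝ)ᵒᵈ => OrderDual.ofDual G) '' c)
      (by rintro G ⟨G', hG', rfl⟩; exact hcs hG')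
      (by
        rintro _ ⟨p, hp, rfl⟩ _ ⟨q, hq, rfl⟩ hpq
        rcases hc.total hp hq with h | h
        · exact Or.inr h
        · exact Or.inl h)
      ⟨OrderDual.ofDual y, ⟨y, hy, rfl⟩⟩
    refine ⟨OrderDual.toDual I, hIS, fun z hz => ?_⟩
    intro x
    exact hIle (OrderDual.ofDual z) ⟨z, hz, rfl⟩ x
  obtain ⟨m, _, hmem, hmax⟩ := zorn_le_nonempty₀ (α := (R → ℝ)ᵒᵈ)
    {G : (R → ℝ)ᵒᵈ | SubF R le F a (OrderDual.ofDual G)} key (OrderDual.toDual F) hFS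
  refine ⟨OrderDual.ofDual m, hmem, fun H hH hle => ?_⟩
  have h2 : m ≤ OrderDual.toDual H := hle
  exact le_antisymm hle (hmax hH h2)

lemma min_step (hR : IsStrassenPreorder R le) {F : R → ℝ} {a : R} {G : R → ℝ}
    (hG : SubF R le F a G)
    (hmin : ∀ H, SubF R le F a H → H ≤ G → H = G)
    {c : R} (hc : 0 < G c) (hA : ∀ k : ℕ, G (a * c ^ k) = F a * (G c) ^ k) :
    ∀ x, G (c * x) = G c * G x := by
  classical
  set h : R → ℕ → ℝ := fun x k => G (x * c ^ k) / (G c) ^ k with hh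
  have hpow : ∀ k : ℕ, (0:ℝ) < (G c) ^ k := fun k => pow_pos hc k
  have hh0 : ∀ x, h x 0 = G x := by intro x; simp [hh]
  have hanti : ∀ x, Antitone (h x) := by
    intro x
    apply antitone_nat_of_succ_le
    intro k
    have h1 : G (x * c ^ (k + 1)) ≤ G (x * c ^ k) * G c := by
      have hx : x * c ^ (k + 1) = (x * c ^ k) * c := by ring
      rw [hx]; exact hG.submul _ _
    rw [hh]
    rw [div_le_div_iff₀ (hpow (k+1)) (hpow k)]
    calc G (x * c ^ (k + 1)) * (G c) ^ k ≤ (G (x * c ^ k) * G c) * (G c) ^ k := by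
          apply mul_le_mul_of_nonneg_right h1 (hpow k).le
      _ = G (x * c ^ k) * (G c) ^ (k + 1) := by ring
  have hbdd : ∀ x, BddBelow (Set.range (h x)) := by
    intro x
    refine ⟨0, ?_⟩
    rintro r ⟨k, rfl⟩
    exact div_nonneg (hG.nonneg _) (hpow k).le
  set I : R → ℝ := fun x => ⨅ k, h x k with hI
  have htd : ∀ x, Tendsto (h x) atTop (𝓝 (I x)) := fun x =>
    tendsto_atTop_ciInf (hanti x) (hbdd x)
  have hInn : ∀ x, 0 ≤ I x := fun x =>
    le_ciInf (fun k => div_nonneg (hG.nonneg _) (hpow k).le)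
  have hIle : ∀ x, I x ≤ G x := by
    intro x
    have := ciInf_le (hbdd x) 0
    rwa [hh0 x] at this
  have hdiv : ∀ (p q : ℝ) (k : ℕ), p ≤ q → p / (G c) ^ k ≤ q / (G c) ^ k := by
    intro p q k hpq
    gcongr
  have hIS : SubF R le F a I := by
    refine ⟨hInn, ?_, ?_, ?_, ?_, ?_, ?_⟩
    · -- mono
      intro x y hxy
      exact ciInf_mono (hbdd x) (fun k =>
        hdiv _ _ k (hG.mono _ _ (hR.mul_right x y (c ^ k) hxy)))
    · -- subadd
      intro x y
      refine le_of_tendsto_of_tendsto' (htd (x+y)) ((htd x).add (htd y)) (fun k => ?_)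
      have h1 : G ((x + y) * c ^ k) ≤ G (x * c ^ k) + G (y * c ^ k) := by
        rw [add_mul]; exact hG.subadd _ _
      calc h (x+y) k ≤ (G (x * c ^ k) + G (y * c ^ k)) / (G c) ^ k := hdiv _ _ k h1
        _ = h x k + h y k := by rw [hh]; ring
    · -- submul
      intro x y
      have t2 : Tendsto (fun k => h (x * y) (2 * k)) atTop (𝓝 (I (x * y))) :=
        (htd (x*y)).comp (tendsto_atTop_mono
          (fun k => Nat.le_mul_of_pos_left k (by norm_num)) tendsto_id)
      refine le_of_tendsto_of_tendsto' t2 ((htd x).mul (htd y)) (fun k => ?_)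
      have h1 : G (x * y * c ^ (2 * k)) ≤ G (x * c ^ k) * G (y * c ^ k) := by
        have hx : x * y * c ^ (2 * k) = (x * c ^ k) * (y * c ^ k) := by
          rw [two_mul, pow_add]; ring
        rw [hx]; exact hG.submul _ _
      calc h (x*y) (2*k) ≤ (G (x * c ^ k) * G (y * c ^ k)) / (G c) ^ (2 * k) :=
            hdiv _ _ (2*k) h1
        _ = h x k * h y k := by
            rw [hh]
            have : (G c) ^ (2 * k) = (G c) ^ k * (G c) ^ k := by
              rw [two_mul, pow_add]
            rw [this, div_mul_div_comm]
    · -- mh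
      intro m n x
      rcases Nat.eq_zero_or_pos n with rfl | hn
      · have hval : ∀ k, h ((m : R) * x ^ 0) k = m := by
          intro k
          have : ((m:R) * x ^ 0) * c ^ k = (m : R) * c ^ k := by ring
          rw [hh]
          simp only [this]
          rw [hG.mh m k c]
          field_simp
        simp only [hI]
        rw [iInf_congr hval]
        simp [ciInf_const]
      · have t1 : Tendsto (fun k => h ((m : R) * x ^ n) (n * k)) atTop
            (𝓝 (I ((m : R) * x ^ n))) :=
          (htd _).comp (tendsto_atTop_mono
            (fun k => Nat.le_mul_of_pos_left k hn) tendsto_id)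
        have hval : ∀ k, h ((m : R) * x ^ n) (n * k) = (m : ℝ) * (h x k) ^ n := by
          intro k
          have hnum : ((m:R) * x ^ n) * c ^ (n * k) = (m : R) * (x * c ^ k) ^ n := by
            rw [mul_pow, ← pow_mul]
            ring
          rw [hh]
          simp only [hnum]
          rw [hG.mh m n (x * c ^ k)]
          rw [pow_mul', div_pow, mul_div_assoc]
        have t1' : Tendsto (fun k => (m : ℝ) * (h x k) ^ n) atTop
            (𝓝 (I ((m : R) * x ^ n))) := by
          refine t1.congr (fun k => hval k)
        have t2 : Tendsto (fun k => (m : ℝ) * (h x k) ^ n) atTop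
            (𝓝 ((m : ℝ) * (I x) ^ n)) :=
          tendsto_const_nhds.mul ((htd x).pow n)
        exact tendsto_nhds_unique t1' t2
    · -- le_F
      intro x
      exact (hIle x).trans (hG.le_F x)
    · -- at_a
      have hval : ∀ k, h a k = F a := by
        intro k
        rw [hh]
        simp only [hA k]
        field_simp
      simp only [hI]
      rw [iInf_congr hval]
      exact ciInf_const
  have hIG : I = G := hmin I hIS (fun x => hIle x)
  intro x
  have t1 : Tendsto (h (c * x)) atTop (𝓝 (I (c * x))) := htd (c * x)
  have hval : ∀ k, h (c * x) k = G c * h x (k + 1) := by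
    intro k
    have hnum : (c * x) * c ^ k = x * c ^ (k + 1) := by ring
    rw [hh]
    simp only [hnum]
    rw [pow_succ]
    field_simp
    ring
  have t1' : Tendsto (fun k => G c * h x (k + 1)) atTop (𝓝 (I (c * x))) :=
    t1.congr hval
  have t2 : Tendsto (fun k => G c * h x (k + 1)) atTop (𝓝 (G c * I x)) :=
    tendsto_const_nhds.mul ((htd x).comp (tendsto_add_atTop_nat 1))
  have hu := tendsto_nhds_unique t1' t2
  rw [hIG] at hu
  exact hu

lemma term_le_sum (hR : IsStrassenPreorder R le) {ι : Type} (s : Finset ι) (f : ι → R)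
    {i : ι} (hi : i ∈ s) : le (f i) (∑ j ∈ s, f j) := by
  classical
  rw [← Finset.add_sum_erase s f hi]
  have h := hR.add_right 0 (∑ j ∈ s.erase i, f j) (f i)
    (hR.zero_le (∑ j ∈ s.erase i, f j))
  rw [zero_add, add_comm] at h
  exact h

lemma additive_of_mult (hR : IsStrassenPreorder R le) {F : R → ℝ} {a : R} {G : R → ℝ}
    (hG : SubF R le F a G) (hmult : ∀ x y, G (x * y) = G x * G y) :
    ∀ x y, G (x + y) = G x + G y := by
  intro x y
  refine le_antisymm (hG.subadd x y) ?_
  have key : ∀ k : ℕ, (G x + G y) ^ k ≤ ((k : ℝ) + 1) * (G (x + y)) ^ k := by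
    intro k
    calc (G x + G y) ^ k
        = ∑ i ∈ Finset.range (k + 1), (G x) ^ i * (G y) ^ (k - i) * (k.choose i : ℝ) :=
          (Commute.all (G x) (G y)).add_pow k
      _ ≤ ∑ i ∈ Finset.range (k + 1), (G (x + y)) ^ k := by
          refine Finset.sum_le_sum (fun i _ => ?_)
          have hterm : G (x ^ i * y ^ (k - i) * ((k.choose i : ℕ) : R))
              = (G x) ^ i * (G y) ^ (k - i) * (k.choose i : ℝ) := by
            rw [hmult, hmult, hG.map_pow, hG.map_pow, hG.map_nat]
          have hle : le (x ^ i * y ^ (k - i) * ((k.choose i : ℕ) : R)) ((x + y) ^ k) := by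
            rw [(Commute.all x y).add_pow k]
            exact term_le_sum hR (Finset.range (k + 1))
              (fun m => x ^ m * y ^ (k - m) * ((k.choose m : ℕ) : R)) (by assumption)
          have := hG.mono _ _ hle
          rw [hterm, hG.map_pow] at this
          exact this
      _ = ((k : ℝ) + 1) * (G (x + y)) ^ k := by
          rw [Finset.sum_const, Finset.card_range, nsmul_eq_mul]
          push_cast
          ring
  by_contra hlt
  push_neg at hlt
  set A := G (x + y) with hA
  set B := G x + G y with hB
  have hBpos : 0 < B := (hG.nonneg (x + y)).trans_lt hlt
  set r := A / B with hr
  have hr0 : 0 ≤ r := div_nonneg (hG.nonneg _) hBpos.le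
  have hr1 : r < 1 := (div_lt_one hBpos).2 hlt
  have hge : ∀ k : ℕ, (1 : ℝ) ≤ ((k : ℝ) + 1) * r ^ k := by
    intro k
    rw [hr, div_pow, ← mul_div_assoc, le_div_iff₀ (pow_pos hBpos k), one_mul]
    exact key k
  have T : Tendsto (fun k : ℕ => ((k : ℝ) + 1) * r ^ k) atTop (𝓝 0) := by
    have t1 := tendsto_self_mul_const_pow_of_lt_one hr0 hr1
    have t2 := tendsto_pow_atTop_nhds_zero_of_lt_one hr0 hr1
    have := t1.add t2
    rw [add_zero] at this
    refine this.congr (fun k => by ring)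
  have h1 : (1 : ℝ) ≤ 0 := ge_of_tendsto T (Eventually.of_forall hge)
  linarith

lemma exists_spectral (hR : IsStrassenPreorder R le) (F : R → ℝ)
    (hF0 : ∀ x, 0 ≤ F x) (hmono : ∀ x y, le x y → F x ≤ F y)
    (hadd : ∀ x y, F (x + y) ≤ F x + F y) (hmul : ∀ x y, F (x * y) ≤ F x * F y)
    (hmh : ∀ (m n : ℕ) (x : R), F ((m : R) * x ^ n) = (m : ℝ) * (F x) ^ n) (a : R) :
    ∃ φ : R → ℝ, IsSpectralPoint R le φ ∧ (∀ b, φ b ≤ F b) ∧ φ a = F a := by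
  have hFS : SubF R le F a F := ⟨hF0, hmono, hadd, hmul, hmh, fun x => le_rfl, rfl⟩
  obtain ⟨G, hG, hmin⟩ := exists_minimal F a hFS
  have hA : ∀ c : R, ∀ k : ℕ, G (a * c ^ k) = F a * (G c) ^ k := by
    rcases eq_or_lt_of_le (hF0 a) with h0 | hpos
    · have ha0 : a = 0 := by
        by_contra hne
        obtain ⟨n, h1a, -⟩ := hR.arch a hne
        have hFa := hmono 1 a h1a
        have hF1 : F 1 = 1 := by
          have h := hmh 1 0 1; simpa using h
        rw [hF1, ← h0] at hFa
        linarith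
      intro c k
      rw [ha0, zero_mul, hG.map_zero]
      rw [ha0] at h0
      rw [← h0, zero_mul]
    · have hGa : G a = F a := hG.at_a
      have hApre : ∀ k : ℕ, G (a * a ^ k) = F a * (G a) ^ k := by
        intro k
        have hx : a * a ^ k = a ^ (k + 1) := (pow_succ' a k).symm
        rw [hx, hG.map_pow, pow_succ', hGa]
      have hmult_a := min_step hR hG hmin (c := a) (by rw [hGa]; exact hpos) hApre
      intro c k
      rw [hmult_a (c ^ k), hG.map_pow, hGa]
  have hmult : ∀ c x, G (c * x) = G c * G x := by
    intro c x
    rcases eq_or_lt_of_le (hG.nonneg c) with h0 | hpos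
    · have h1 : G (c * x) ≤ 0 := by
        have := hG.submul c x
        rw [← h0, zero_mul] at this
        exact this
      have h2 := hG.nonneg (c * x)
      rw [← h0, zero_mul]
      linarith
    · exact min_step hR hG hmin hpos (hA c) x
  have hadd' := additive_of_mult hR hG hmult
  exact ⟨G, ⟨hG.nonneg, hG.map_one, hadd', hmult, hG.mono⟩, hG.le_F, hG.at_a⟩

lemma IsSpectralPoint.map_zero' {φ : R → ℝ} (hφ : IsSpectralPoint R le φ) : φ 0 = 0 := by
  have h := hφ.map_add 0 0
  rw [add_zero] at h
  linarith

lemma IsSpectralPoint.map_nat' {φ : R → ℝ} (hφ : IsSpectralPoint R le φ) (m : ℕ) :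
    φ (m : R) = m := by
  induction m with
  | zero => simpa using hφ.map_zero'
  | succ n ih =>
    have h := hφ.map_add (n : R) 1
    push_cast
    rw [h, ih, hφ.map_one]

lemma IsSpectralPoint.map_pow' {φ : R → ℝ} (hφ : IsSpectralPoint R le φ) (x : R) (n : ℕ) :
    φ (x ^ n) = (φ x) ^ n := by
  induction n with
  | zero => simpa using hφ.map_one
  | succ k ih => rw [pow_succ, hφ.map_mul, ih, pow_succ]

lemma IsSpectralPoint.map_monomial {φ : R → ℝ} (hφ : IsSpectralPoint R le φ)
    (m n : ℕ) (x : R) : φ ((m : R) * x ^ n) = (m : ℝ) * (φ x) ^ n := by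
  rw [hφ.map_mul, hφ.map_nat', hφ.map_pow']

end Chain

/-- a nonnegative function `F` on a Strassen preordered commutative semiring is
monotone, subadditive, submultiplicative and monomially homogeneous iff it is a
pointwise-attained maximum of the spectral points it dominates. -/
theorem statement18 (R : Type) [CommSemiring R] (le : R → R → Prop)
    (hR : IsStrassenPreorder R le) (F : R → ℝ) (hF0 : ∀ a, 0 ≤ F a) :
    ((∀ a b, le a b → F a ≤ F b) ∧ (∀ a b, F (a + b) ≤ F a + F b) ∧
      (∀ a b, F (a * b) ≤ F a * F b) ∧
      (∀ (m n : ℕ) (a : R), F ((m : R) * a ^ n) = (m : ℝ) * (F a) ^ n))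
    ↔ ∀ a : R, ∃ φ : R → ℝ, IsSpectralPoint R le φ ∧ (∀ b, φ b ≤ F b) ∧ φ a = F a := by
  constructor
  · rintro ⟨h1, h2, h3, h4⟩ a
    exact exists_spectral hR F hF0 h1 h2 h3 h4 a
  · intro h
    refine ⟨?_, ?_, ?_, ?_⟩
    · intro x y hxy
      obtain ⟨φ, hφ, hφF, hφx⟩ := h x
      rw [← hφx]
      exact (hφ.monotone x y hxy).trans (hφF y)
    · intro x y
      obtain ⟨φ, hφ, hφF, hφx⟩ := h (x + y)
      rw [← hφx, hφ.map_add]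
      exact add_le_add (hφF x) (hφF y)
    · intro x y
      obtain ⟨φ, hφ, hφF, hφx⟩ := h (x * y)
      rw [← hφx, hφ.map_mul]
      exact mul_le_mul (hφF x) (hφF y) (hφ.nonneg y) (hF0 x)
    · intro m n x
      refine le_antisymm ?_ ?_
      · obtain ⟨φ, hφ, hφF, hφx⟩ := h ((m : R) * x ^ n)
        rw [← hφx, hφ.map_monomial]
        exact mul_le_mul_of_nonneg_left
          (pow_le_pow_left₀ (hφ.nonneg x) (hφF x) n) (Nat.cast_nonneg m)
      · obtain ⟨φ, hφ, hφF, hφx⟩ := h x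
        calc (m : ℝ) * (F x) ^ n = (m : ℝ) * (φ x) ^ n := by rw [hφx]
          _ = φ ((m : R) * x ^ n) := (hφ.map_monomial m n x).symm
          _ ≤ F ((m : R) * x ^ n) := hφF _

end Paper
end

section
/- Let (R, ≤) be a Strassen preordered commutative semiring and f : R → ℝ_{≥0} a function that is monotone, superadditive, supermultiplicative, monomially homogeneous, and monomially dominant. Then, setting 𝒵 = { φ : φ is a spectral point of (R,≤) and φ(a) ≥ f(a) for all a ∈ R }, for every a ∈ R there exists φ ∈ 𝒵 with φ(a) = f(a); in particular f(a) = min{ φ(a) : φ ∈ 𝒵 } for every a ∈ R. -/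
/-!
By Zorn's lemma there is a function `g ≥ f` with `g a = f a` that is maximal among the monotone,
superadditive, supermultiplicative, monomially homogeneous and monomially dominant functions
agreeing with `f` at `a`: the pointwise supremum of a chain is again such a function.

Maximality forces multiplicativity. If `v ≠ 0` satisfies `g (a * v ^ m) = g a * g v ^ m` for all
`m` (as `v = a` does), the enlargement `x ↦ sup_m g (x * v ^ m) / g v ^ m` is again admissible,
lies above `g` and agrees with it at `a`, so it equals `g`, which gives `g (x * v) ≤ g x * g v`.
Applying this first to `v = a` shows that every nonzero `v` qualifies.

A multiplicative, monomially dominant `g` is additive, because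
`g (s + t) ^ n ≤ 2 ^ (ε n) * n.choose k * g s ^ k * g t ^ (n - k) ≤ 2 ^ (ε n) * (g s + g t) ^ n`.
Hence `g` is a spectral point.
-/

open scoped BigOperators

namespace Paper

open Set Filter Topology

section Development

variable {R : Type*} [CommSemiring R] {le : R → R → Prop}

/-- The paper's monomial dominance of `g` is `MonomiallyDominant g g`; allowing a different
dominating function `h` lets the notion pass to suprema. -/
def MonomiallyDominant (g h : R → ℝ) : Prop :=
  ∀ s t : R, ∀ ε : ℝ, 0 < ε → ∃ N : ℕ, ∀ n : ℕ, N ≤ n → ∃ k ≤ n,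
    (2 : ℝ) ^ (-(ε * (n : ℝ))) * g (s + t) ^ n ≤ (n.choose k : ℝ) * h (s ^ k * t ^ (n - k))

lemma MonomiallyDominant.mono_right {g h h' : R → ℝ} (hd : MonomiallyDominant g h)
    (hh : h ≤ h') : MonomiallyDominant g h' := by
  intro s t ε hε
  obtain ⟨N, hN⟩ := hd s t ε hε
  refine ⟨N, fun n hn => ?_⟩
  obtain ⟨k, hk, hgh⟩ := hN n hn
  exact ⟨k, hk, hgh.trans (by gcongr; exact hh _)⟩

lemma MonomiallyDominant.iSup {ι : Sort*} [Nonempty ι] {F : ι → R → ℝ} {h : R → ℝ}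
    (hF : ∀ i x, 0 ≤ F i x) (hh : ∀ x, 0 ≤ h x) (hd : ∀ i, MonomiallyDominant (F i) h) :
    MonomiallyDominant (fun x => ⨆ i, F i x) h := by
  intro s t ε hε
  rcases (Real.iSup_nonneg fun i => hF i (s + t)).eq_or_lt with h0 | hpos
  · refine ⟨1, fun n hn => ⟨0, n.zero_le, ?_⟩⟩
    dsimp only
    rw [← h0, zero_pow (by omega), mul_zero]
    exact mul_nonneg (Nat.cast_nonneg _) (hh _)
  have hlt : (2 : ℝ) ^ (-(ε / 2)) * ⨆ i, F i (s + t) < ⨆ i, F i (s + t) :=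
    mul_lt_of_lt_one_left hpos (Real.rpow_lt_one_of_one_lt_of_neg one_lt_two (by linarith))
  obtain ⟨i, hi⟩ := exists_lt_of_lt_ciSup hlt
  obtain ⟨N, hN⟩ := hd i s t (ε / 2) (half_pos hε)
  refine ⟨N, fun n hn => ?_⟩
  obtain ⟨k, hk, hik⟩ := hN n hn
  refine ⟨k, hk, le_trans ?_ hik⟩
  have hsplit : (2 : ℝ) ^ (-(ε * n)) = 2 ^ (-(ε / 2 * n)) * ((2 : ℝ) ^ (-(ε / 2))) ^ n := by
    rw [← Real.rpow_natCast, ← Real.rpow_mul zero_le_two, ← Real.rpow_add two_pos]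
    ring_nf
  calc (2 : ℝ) ^ (-(ε * n)) * (⨆ i, F i (s + t)) ^ n
      = 2 ^ (-(ε / 2 * n)) * ((2 : ℝ) ^ (-(ε / 2)) * ⨆ i, F i (s + t)) ^ n := by
        rw [hsplit, mul_pow, mul_assoc]
    _ ≤ 2 ^ (-(ε / 2 * n)) * F i (s + t) ^ n := by gcongr

lemma choose_mul_pow_mul_pow_le_add_pow {x y : ℝ} (hx : 0 ≤ x) (hy : 0 ≤ y) {n k : ℕ}
    (hk : k ≤ n) : (n.choose k : ℝ) * (x ^ k * y ^ (n - k)) ≤ (x + y) ^ n := by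
  rw [add_pow, mul_comm]
  exact Finset.single_le_sum (f := fun m => x ^ m * y ^ (n - m) * (n.choose m : ℝ))
    (fun i _ => by positivity) (Finset.mem_range_succ_iff.2 hk)

lemma IsStrassenPreorder.exists_le_natCast (hR : IsStrassenPreorder R le) (x : R) :
    ∃ p : ℕ, le x p := by
  rcases eq_or_ne x 0 with rfl | hx
  · exact ⟨0, by simpa using hR.zero_le 0⟩
  · obtain ⟨n, -, h⟩ := hR.arch x hx
    exact ⟨n, h⟩

/-- Spectral points are the additive and multiplicative functions of this kind; `map_natCast_mul`
and `map_pow_le` together with `supermul` amount to monomial homogeneity. -/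
structure IsSuperSpectral (le : R → R → Prop) (g : R → ℝ) : Prop where
  monotone : ∀ x y, le x y → g x ≤ g y
  superadd : ∀ x y, g x + g y ≤ g (x + y)
  supermul : ∀ x y, g x * g y ≤ g (x * y)
  map_natCast_mul : ∀ (p : ℕ) (x : R), g (p * x) = p * g x
  map_pow_le : ∀ (q : ℕ) (x : R), g (x ^ q) ≤ g x ^ q
  map_one : g 1 = 1
  dominant : MonomiallyDominant g g

namespace IsSuperSpectral

variable {g : R → ℝ}

lemma map_zero (hg : IsSuperSpectral le g) : g 0 = 0 := by
  simpa using hg.map_natCast_mul 0 0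

lemma nonneg (hR : IsStrassenPreorder R le) (hg : IsSuperSpectral le g) (x : R) : 0 ≤ g x :=
  hg.map_zero ▸ hg.monotone 0 x (hR.zero_le x)

lemma map_pow (hg : IsSuperSpectral le g) (q : ℕ) (x : R) : g (x ^ q) = g x ^ q := by
  induction q with
  | zero => simpa using hg.map_one
  | succ q ih =>
    refine le_antisymm (hg.map_pow_le _ x) ?_
    rw [pow_succ, pow_succ, ← ih]
    exact hg.supermul _ _

lemma le_natCast (hg : IsSuperSpectral le g) {x : R} {p : ℕ} (h : le x p) : g x ≤ p :=
  calc g x ≤ g p := hg.monotone _ _ h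
    _ = p := by simpa [hg.map_one] using hg.map_natCast_mul p 1

lemma one_le (hR : IsStrassenPreorder R le) (hg : IsSuperSpectral le g) {x : R} (hx : x ≠ 0) :
    1 ≤ g x :=
  hg.map_one ▸ hg.monotone 1 x (hR.arch x hx).choose_spec.1

lemma map_add_of_map_mul (hR : IsStrassenPreorder R le) (hg : IsSuperSpectral le g)
    (hmul : ∀ x y, g (x * y) = g x * g y) (x y : R) : g (x + y) = g x + g y := by
  refine le_antisymm ?_ (hg.superadd x y)
  have hsum : 0 ≤ g x + g y := add_nonneg (hg.nonneg hR x) (hg.nonneg hR y)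
  have hε : ∀ ε ∈ Ioi (0 : ℝ), g (x + y) ≤ 2 ^ ε * (g x + g y) := by
    intro ε hε
    obtain ⟨N, hN⟩ := hg.dominant x y ε hε
    obtain ⟨k, hk, hd⟩ := hN (N + 1) N.le_succ
    rw [hmul, hg.map_pow, hg.map_pow] at hd
    have hpow := hd.trans (choose_mul_pow_mul_pow_le_add_pow (hg.nonneg hR x) (hg.nonneg hR y) hk)
    have hsplit : (2 : ℝ) ^ (-(ε * (N + 1 : ℕ))) = ((2 : ℝ) ^ ε)⁻¹ ^ (N + 1) := by
      rw [← Real.rpow_neg zero_le_two, ← Real.rpow_natCast, ← Real.rpow_mul zero_le_two, neg_mul]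
    rw [hsplit, ← mul_pow] at hpow
    have := le_of_pow_le_pow_left₀ N.succ_ne_zero hsum hpow
    rwa [inv_mul_le_iff₀ (by positivity)] at this
  have hlim : Tendsto (fun ε : ℝ => (2 : ℝ) ^ ε * (g x + g y)) (𝓝[>] 0) (𝓝 (g x + g y)) := by
    have hcont : Continuous fun ε : ℝ => (2 : ℝ) ^ ε * (g x + g y) :=
      (Real.continuous_const_rpow two_ne_zero).mul continuous_const
    simpa using (hcont.tendsto 0).mono_left nhdsWithin_le_nhds
  exact ge_of_tendsto hlim (eventually_nhdsWithin_of_forall hε)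

end IsSuperSpectral

lemma isSuperSpectral_iSup {ι : Sort*} [Nonempty ι] {F : ι → R → ℝ}
    (hbdd : ∀ x, BddAbove (range fun i => F i x)) (hF : ∀ i x, 0 ≤ F i x)
    (hmono : ∀ i x y, le x y → F i x ≤ F i y)
    (hadd : ∀ i j x y, ∃ k, F i x + F j y ≤ F k (x + y))
    (hmul : ∀ i j x y, ∃ k, F i x * F j y ≤ F k (x * y))
    (hnat : ∀ i (p : ℕ) x, F i (p * x) = p * F i x)
    (hpow : ∀ i (q : ℕ) x, F i (x ^ q) ≤ (⨆ j, F j x) ^ q) (hone : ∀ i, F i 1 = 1)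
    (hdom : ∀ i, MonomiallyDominant (F i) fun x => ⨆ j, F j x) :
    IsSuperSpectral le fun x => ⨆ i, F i x where
  monotone x y hxy := ciSup_mono (hbdd y) fun i => hmono i x y hxy
  superadd x y := ciSup_add_ciSup_le fun i j =>
    (hadd i j x y).elim fun k hk => hk.trans (le_ciSup (hbdd _) k)
  supermul x y := by
    rw [Real.iSup_mul_of_nonneg (Real.iSup_nonneg fun j => hF j y)]
    refine ciSup_le fun i => ?_
    rw [Real.mul_iSup_of_nonneg (hF i x)]
    exact ciSup_le fun j => (hmul i j x y).elim fun k hk => hk.trans (le_ciSup (hbdd _) k)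
  map_natCast_mul p x := by
    simp only [hnat]
    exact (Real.mul_iSup_of_nonneg p.cast_nonneg _).symm
  map_pow_le q x := ciSup_le fun i => hpow i q x
  map_one := by simp only [hone, ciSup_const]
  dominant := .iSup hF (fun x => Real.iSup_nonneg fun i => hF i x) hdom

noncomputable def rescale (g : R → ℝ) (v : R) (m : ℕ) (x : R) : ℝ := g (x * v ^ m) / g v ^ m

/-- If `g` is maximal, `enlarge g v = g` says `g (x * v) ≤ g x * g v`. -/
noncomputable def enlarge (g : R → ℝ) (v : R) (x : R) : ℝ := ⨆ m : ℕ, rescale g v m x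

lemma rescale_zero (g : R → ℝ) (v x : R) : rescale g v 0 x = g x := by
  simp [rescale]

namespace IsSuperSpectral

variable {g : R → ℝ} {v : R}

lemma apply_pow_pos (hR : IsStrassenPreorder R le) (hg : IsSuperSpectral le g) (hv : v ≠ 0)
    (m : ℕ) : 0 < g v ^ m :=
  pow_pos (one_pos.trans_le (hg.one_le hR hv)) m

lemma rescale_mono (hR : IsStrassenPreorder R le) (hg : IsSuperSpectral le g) (hv : v ≠ 0)
    {m m' : ℕ} (h : m ≤ m') (x : R) : rescale g v m x ≤ rescale g v m' x := by
  obtain ⟨j, rfl⟩ := Nat.exists_eq_add_of_le h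
  have hsuper := hg.supermul (x * v ^ m) (v ^ j)
  rw [hg.map_pow, mul_assoc, ← pow_add] at hsuper
  calc rescale g v m x = g (x * v ^ m) * g v ^ j / g v ^ (m + j) := by
        rw [rescale, pow_add, mul_div_mul_right _ _ (hg.apply_pow_pos hR hv j).ne']
    _ ≤ rescale g v (m + j) x := by
        rw [rescale]
        exact div_le_div_of_nonneg_right hsuper (hg.apply_pow_pos hR hv _).le

lemma rescale_one (hR : IsStrassenPreorder R le) (hg : IsSuperSpectral le g) (hv : v ≠ 0)
    (m : ℕ) : rescale g v m 1 = 1 := by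
  rw [rescale, one_mul, hg.map_pow, div_self (hg.apply_pow_pos hR hv m).ne']

lemma rescale_pow_le (hR : IsStrassenPreorder R le) (hg : IsSuperSpectral le g) (hv : v ≠ 0)
    (m q : ℕ) (x : R) : rescale g v m (x ^ q) ≤ rescale g v m x ^ q := by
  rcases q.eq_zero_or_pos with rfl | hq
  · rw [pow_zero, pow_zero, hg.rescale_one hR hv]
  calc rescale g v m (x ^ q) ≤ rescale g v (m * q) (x ^ q) :=
        hg.rescale_mono hR hv (Nat.le_mul_of_pos_right m hq) _
    _ = rescale g v m x ^ q := by
        rw [rescale, rescale, div_pow, ← hg.map_pow q (x * v ^ m), mul_pow, ← pow_mul, ← pow_mul]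

lemma rescale_le_natCast (hR : IsStrassenPreorder R le) (hg : IsSuperSpectral le g)
    (hv : v ≠ 0) {x : R} {p : ℕ} (h : le x p) (m : ℕ) : rescale g v m x ≤ p := by
  rw [rescale, div_le_iff₀ (hg.apply_pow_pos hR hv m), ← hg.map_pow, ← hg.map_natCast_mul]
  exact hg.monotone _ _ (hR.mul_right _ _ _ h)

lemma bddAbove_rescale (hR : IsStrassenPreorder R le) (hg : IsSuperSpectral le g) (hv : v ≠ 0)
    (x : R) : BddAbove (range fun m => rescale g v m x) := by
  obtain ⟨p, hp⟩ := hR.exists_le_natCast x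
  exact ⟨p, forall_mem_range.2 (hg.rescale_le_natCast hR hv hp)⟩

lemma rescale_le_enlarge (hR : IsStrassenPreorder R le) (hg : IsSuperSpectral le g)
    (hv : v ≠ 0) (m : ℕ) (x : R) : rescale g v m x ≤ enlarge g v x :=
  le_ciSup (hg.bddAbove_rescale hR hv x) m

lemma le_enlarge (hR : IsStrassenPreorder R le) (hg : IsSuperSpectral le g) (hv : v ≠ 0) :
    g ≤ enlarge g v := fun x => by
  simpa only [rescale_zero] using hg.rescale_le_enlarge hR hv 0 x

lemma enlarge_apply_eq (hR : IsStrassenPreorder R le) (hg : IsSuperSpectral le g)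
    (hv : v ≠ 0) {x : R} (h : ∀ m, g (x * v ^ m) = g x * g v ^ m) : enlarge g v x = g x := by
  have hconst (m : ℕ) : rescale g v m x = g x := by
    rw [rescale, h, mul_div_cancel_right₀ _ (hg.apply_pow_pos hR hv m).ne']
  simp only [enlarge, hconst, ciSup_const]

lemma monomiallyDominant_rescale (hR : IsStrassenPreorder R le) (hg : IsSuperSpectral le g)
    (hv : v ≠ 0) (r : ℕ) : MonomiallyDominant (rescale g v r) (enlarge g v) := by
  intro s t ε hε
  obtain ⟨N, hN⟩ := hg.dominant (s * v ^ r) (t * v ^ r) ε hε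
  refine ⟨N, fun n hn => ?_⟩
  obtain ⟨k, hk, hd⟩ := hN n hn
  refine ⟨k, hk, ?_⟩
  have hsum : s * v ^ r + t * v ^ r = (s + t) * v ^ r := (add_mul _ _ _).symm
  have hmon : (s * v ^ r) ^ k * (t * v ^ r) ^ (n - k) = s ^ k * t ^ (n - k) * v ^ (r * n) := by
    rw [mul_pow, mul_pow, ← pow_mul, ← pow_mul, ← Nat.add_sub_cancel' hk, Nat.add_sub_cancel_left,
      mul_add, pow_add]
    ring
  rw [hsum, hmon] at hd
  have hpos := hg.apply_pow_pos hR hv (r * n)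
  calc (2 : ℝ) ^ (-(ε * n)) * rescale g v r (s + t) ^ n
      = 2 ^ (-(ε * n)) * g ((s + t) * v ^ r) ^ n / g v ^ (r * n) := by
        rw [rescale, div_pow, pow_mul, mul_div_assoc]
    _ ≤ n.choose k * g (s ^ k * t ^ (n - k) * v ^ (r * n)) / g v ^ (r * n) := by gcongr
    _ = n.choose k * rescale g v (r * n) (s ^ k * t ^ (n - k)) := by rw [rescale, mul_div_assoc]
    _ ≤ n.choose k * enlarge g v (s ^ k * t ^ (n - k)) := by
        gcongr
        exact hg.rescale_le_enlarge hR hv _ _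

lemma enlarge_isSuperSpectral (hR : IsStrassenPreorder R le) (hg : IsSuperSpectral le g)
    (hv : v ≠ 0) : IsSuperSpectral le (enlarge g v) := by
  have hpos := hg.apply_pow_pos hR hv
  refine isSuperSpectral_iSup (hg.bddAbove_rescale hR hv)
    (fun m x => div_nonneg (hg.nonneg hR _) (hpos m).le) (fun m x y hxy => ?_)
    (fun i j x y => ⟨max i j, ?_⟩) (fun i j x y => ⟨i + j, ?_⟩) (fun m p x => ?_)
    (fun m q x => ?_) (hg.rescale_one hR hv) (hg.monomiallyDominant_rescale hR hv)
  · exact div_le_div_of_nonneg_right (hg.monotone _ _ (hR.mul_right _ _ _ hxy)) (hpos m).le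
  · calc rescale g v i x + rescale g v j y
        ≤ rescale g v (max i j) x + rescale g v (max i j) y :=
          add_le_add (hg.rescale_mono hR hv (le_max_left i j) x)
            (hg.rescale_mono hR hv (le_max_right i j) y)
      _ ≤ rescale g v (max i j) (x + y) := by
          rw [rescale, rescale, rescale, ← add_div, add_mul]
          exact div_le_div_of_nonneg_right (hg.superadd _ _) (hpos _).le
  · rw [rescale, rescale, rescale, div_mul_div_comm, ← pow_add]
    refine div_le_div_of_nonneg_right ((hg.supermul _ _).trans_eq ?_) (hpos _).le
    rw [pow_add]
    ring_nf
  · rw [rescale, rescale, mul_assoc, hg.map_natCast_mul, mul_div_assoc]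
  · exact (hg.rescale_pow_le hR hv m q x).trans
      (pow_le_pow_left₀ (div_nonneg (hg.nonneg hR _) (hpos m).le)
        (hg.rescale_le_enlarge hR hv m x) q)

lemma map_mul_of_maximal (hR : IsStrassenPreorder R le) (hg : IsSuperSpectral le g) {a : R}
    (hmax : ∀ h, IsSuperSpectral le h → g ≤ h → h a = g a → h ≤ g) (hv : v ≠ 0)
    (hva : ∀ m, g (a * v ^ m) = g a * g v ^ m) (x : R) : g (x * v) = g x * g v := by
  have henl := hmax _ (hg.enlarge_isSuperSpectral hR hv) (hg.le_enlarge hR hv)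
    (hg.enlarge_apply_eq hR hv hva)
  refine le_antisymm ?_ (hg.supermul x v)
  have hx := (hg.rescale_le_enlarge hR hv 1 x).trans (henl x)
  rwa [rescale, pow_one, pow_one, div_le_iff₀ (by simpa using hg.apply_pow_pos hR hv 1)] at hx

lemma isSpectralPoint_of_maximal (hR : IsStrassenPreorder R le) (hg : IsSuperSpectral le g)
    {a : R} (hmax : ∀ h, IsSuperSpectral le h → g ≤ h → h a = g a → h ≤ g) :
    IsSpectralPoint R le g := by
  have hpow_a (y : R) (m : ℕ) : g (a * y ^ m) = g a * g y ^ m := by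
    rcases eq_or_ne a 0 with rfl | ha
    · simp [hg.map_zero]
    have ha_pow (m : ℕ) : g (a * a ^ m) = g a * g a ^ m := by
      rw [← pow_succ', hg.map_pow, pow_succ']
    rw [mul_comm, hg.map_mul_of_maximal hR hmax ha ha_pow, hg.map_pow, mul_comm]
  have hmul (x y : R) : g (x * y) = g x * g y := by
    rcases eq_or_ne y 0 with rfl | hy
    · simp [hg.map_zero]
    exact hg.map_mul_of_maximal hR hmax hy (hpow_a y) x
  exact ⟨hg.nonneg hR, hg.map_one, hg.map_add_of_map_mul hR hmul, hmul, hg.monotone⟩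

end IsSuperSpectral

lemma IsStrassenPreorder.bddAbove_range_apply (hR : IsStrassenPreorder R le) {ι : Sort*}
    {F : ι → R → ℝ} (hF : ∀ i, IsSuperSpectral le (F i)) (x : R) :
    BddAbove (range fun i => F i x) := by
  obtain ⟨p, hp⟩ := hR.exists_le_natCast x
  exact ⟨p, forall_mem_range.2 fun i => (hF i).le_natCast hp⟩

lemma isSuperSpectral_iSup_of_isChain (hR : IsStrassenPreorder R le) {c : Set (R → ℝ)}
    [Nonempty c] (hc : IsChain (· ≤ ·) c) (hcS : ∀ g ∈ c, IsSuperSpectral le g) :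
    IsSuperSpectral le fun x => ⨆ g : c, g.1 x := by
  have hF (g : c) : IsSuperSpectral le g.1 := hcS g g.2
  have hbdd := hR.bddAbove_range_apply hF
  refine isSuperSpectral_iSup hbdd (fun g => (hF g).nonneg hR) (fun g => (hF g).monotone)
    (fun g h x y => ?_) (fun g h x y => ?_) (fun g => (hF g).map_natCast_mul) (fun g q x => ?_)
    (fun g => (hF g).map_one) fun g => (hF g).dominant.mono_right fun x => le_ciSup (hbdd x) g
  · obtain ⟨k, hk, hgk, hhk⟩ := hc.directedOn g g.2 h h.2
    exact ⟨⟨k, hk⟩, (add_le_add (hgk x) (hhk y)).trans ((hcS k hk).superadd x y)⟩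
  · obtain ⟨k, hk, hgk, hhk⟩ := hc.directedOn g g.2 h h.2
    refine ⟨⟨k, hk⟩, le_trans ?_ ((hcS k hk).supermul x y)⟩
    exact mul_le_mul (hgk x) (hhk y) ((hF h).nonneg hR y) ((hcS k hk).nonneg hR x)
  · rw [(hF g).map_pow]
    exact pow_le_pow_left₀ ((hF g).nonneg hR x) (le_ciSup (hbdd x) g) q

lemma exists_maximal_isSuperSpectral (hR : IsStrassenPreorder R le) {f : R → ℝ}
    (hf : IsSuperSpectral le f) (a : R) :
    ∃ g, IsSuperSpectral le g ∧ f ≤ g ∧ g a = f a ∧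
      ∀ h, IsSuperSpectral le h → g ≤ h → h a = g a → h ≤ g := by
  set S := {g | IsSuperSpectral le g ∧ f ≤ g ∧ g a = f a}
  have hchain : ∀ c ⊆ S, IsChain (· ≤ ·) c → ∀ g ∈ c, ∃ ub ∈ S, ∀ h ∈ c, h ≤ ub := by
    intro c hcS hc g hg
    have : Nonempty c := ⟨⟨g, hg⟩⟩
    have hbdd := hR.bddAbove_range_apply fun h : c => (hcS h.2).1
    have hca (h : c) : h.1 a = f a := (hcS h.2).2.2
    refine ⟨_, ⟨isSuperSpectral_iSup_of_isChain hR hc fun h hh => (hcS hh).1, ?_, ?_⟩,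
      fun h hh x => le_ciSup (hbdd x) ⟨h, hh⟩⟩
    · exact fun x => ((hcS hg).2.1 x).trans (le_ciSup (hbdd x) ⟨g, hg⟩)
    · simp only [hca, ciSup_const]
  obtain ⟨g, hfg, hmax⟩ := zorn_le_nonempty₀ S hchain f ⟨hf, le_rfl, rfl⟩
  refine ⟨g, hmax.1.1, hfg, hmax.1.2.2, fun h hh hgh hha => ?_⟩
  exact hmax.le_of_ge ⟨hh, hfg.trans hgh, hha.trans hmax.1.2.2⟩ hgh

end Development

theorem statement19_general (R : Type) [CommSemiring R] (le : R → R → Prop)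
    (hR : IsStrassenPreorder R le) (f : R → ℝ)
    (hmono : ∀ a b, le a b → f a ≤ f b)
    (hsuperadd : ∀ a b, f a + f b ≤ f (a + b))
    (hsupermul : ∀ a b, f a * f b ≤ f (a * b))
    (hmonhom : ∀ (m n : ℕ) (a : R), f ((m : R) * a ^ n) = (m : ℝ) * (f a) ^ n)
    (hdom : ∀ s t : R, ∀ ε : ℝ, 0 < ε → ∃ N : ℕ, ∀ n : ℕ, N ≤ n → ∃ k ≤ n,
      (2 : ℝ) ^ (-(ε * (n : ℝ))) * (f (s + t)) ^ n
        ≤ (n.choose k : ℝ) * f (s ^ k * t ^ (n - k))) :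
    ∀ a : R, ∃ φ : R → ℝ, IsSpectralPoint R le φ ∧ (∀ b, f b ≤ φ b) ∧ φ a = f a := by
  intro a
  have hf : IsSuperSpectral le f :=
    { monotone := hmono
      superadd := hsuperadd
      supermul := hsupermul
      map_natCast_mul := fun p x => by simpa using hmonhom p 1 x
      map_pow_le := fun q x => by simpa using (hmonhom 1 q x).le
      map_one := by simpa using hmonhom 1 0 1
      dominant := hdom }
  obtain ⟨g, hg, hfg, hga, hmax⟩ := exists_maximal_isSuperSpectral hR hf a
  exact ⟨g, hg.isSpectralPoint_of_maximal hR hmax, hfg, hga⟩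

/-- a nonnegative function `f` on a Strassen preordered commutative semiring
that is monotone, superadditive, supermultiplicative, monomially homogeneous and monomially
dominant is a pointwise-attained minimum of the spectral points dominating it. -/
theorem statement19 (R : Type) [CommSemiring R] (le : R → R → Prop)
    (hR : IsStrassenPreorder R le) (f : R → ℝ) (hf0 : ∀ a, 0 ≤ f a)
    (hmono : ∀ a b, le a b → f a ≤ f b)
    (hsuperadd : ∀ a b, f a + f b ≤ f (a + b))
    (hsupermul : ∀ a b, f a * f b ≤ f (a * b))
    (hmonhom : ∀ (m n : ℕ) (a : R), f ((m : R) * a ^ n) = (m : ℝ) * (f a) ^ n)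
    (hdom : ∀ s t : R, ∀ ε : ℝ, 0 < ε → ∃ N : ℕ, ∀ n : ℕ, N ≤ n → ∃ k ≤ n,
      (2 : ℝ) ^ (-(ε * (n : ℝ))) * (f (s + t)) ^ n
        ≤ (n.choose k : ℝ) * f (s ^ k * t ^ (n - k))) :
    ∀ a : R, ∃ φ : R → ℝ, IsSpectralPoint R le φ ∧ (∀ b, f b ≤ φ b) ∧ φ a = f a :=
  statement19_general R le hR f hmono hsuperadd hsupermul hmonhom hdom

end Paper
end
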